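/- arXiv:2203.11384 — 14 statements merged into one kernel-verified Lean document; each statement's English description precedes it below -/
import Mathlib

section
/- Let G be a connected (n,k,λ,μ)-strongly regular graph on vertex set V that is not complete (there exist two distinct non-adjacent vertices) and is not a complete bipartite graph K_{m,m} (equivalently, it is not the case that both λ = 0 and μ = k). Then for every pair of adjacent vertices u and v, the class of the vector e_u − e_v (where e_w denotes the standard basis vector supported at w) in the critical group K(G) has additive order exactly n·μ. -/
open Finset

/-- The subgroup of integer vectors whose coordinates sum to zero. -/
def sumZero (V : Type*) [Fintype V] : AddSubgroup (V → ℤ) where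
  carrier := {x | ∑ v, x v = 0}
  add_mem' {a b} ha hb := by
    simp only [Set.mem_setOf_eq] at *
    simp [Finset.sum_add_distrib, ha, hb]
  zero_mem' := by simp
  neg_mem' {a} ha := by
    simp only [Set.mem_setOf_eq] at *
    simp [ha]

/-- The ℤ-span of the rows of an integer matrix, as an additive subgroup of `V → ℤ`. -/
def rowSpan {V : Type*} [Fintype V] (L : Matrix V V ℤ) : AddSubgroup (V → ℤ) :=
  (Submodule.span ℤ (Set.range fun w => L w)).toAddSubgroup

/-- The critical group of a graph: the quotient of the sum-zero vectors by the
row span of the Laplacian. -/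
def critGroup {V : Type*} [Fintype V] [DecidableEq V] (G : SimpleGraph V)
    [DecidableRel G.Adj] :=
  sumZero V ⧸ (rowSpan (G.lapMatrix ℤ)).addSubgroupOf (sumZero V)

noncomputable instance {V : Type*} [Fintype V] [DecidableEq V] (G : SimpleGraph V)
    [DecidableRel G.Adj] : AddCommGroup (critGroup G) :=
  QuotientAddGroup.Quotient.addCommGroup _

/-- The vector `e_u - e_v`, as an element of the sum-zero subgroup. -/
def chipDiff {V : Type*} [Fintype V] [DecidableEq V] (u v : V) : sumZero V :=
  ⟨Pi.single u 1 - Pi.single v 1, by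
    show ∑ w, (Pi.single u 1 - Pi.single v 1 : V → ℤ) w = 0
    simp [Finset.sum_sub_distrib, Finset.sum_pi_single]⟩


/-! Writing `A` for the adjacency matrix, the strongly regular relation
`A² = kI + λA + μ(J - I - A)` turns into `L² = cL + μJ - nμI` for the Laplacian `L = kI - A`,
with `c = 2k + μ - λ`. For a sum-zero vector `d` this gives `nμ • d = (c • d - dL) L`, so `nμ`
kills the class of `d = e_u - e_v`. Conversely, if `N • d = xL`, multiplying by `L` once more
gives `nμ • x = cN • d + μ(∑ x)𝟙 - N • dL`. At two vertices `a`, `b` outside `{u, v}` this reads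
`nμ (x b - x a) = N ((dL) a - (dL) b)`, so `nμ ∣ N` as soon as `(dL) a - (dL) b = ±1`: take `a` a
neighbour of `u` not adjacent to `v`, and `b` adjacent to both or to neither. Such vertices exist
because `G` is neither complete nor `K_{m,m}`. -/

open Finset Matrix SimpleGraph

section RowSpan

variable {V : Type*} [Fintype V]

theorem mem_rowSpan_iff {L : Matrix V V ℤ} {y : V → ℤ} : y ∈ rowSpan L ↔ ∃ x, x ᵥ* L = y := by
  change y ∈ Submodule.span ℤ (Set.range L.row) ↔ _
  rw [← range_vecMulLinear]
  rfl

variable [DecidableEq V] {L : Matrix V V ℤ} {c μ m : ℤ}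

theorem vecMul_vecMul_of_mul_self_eq (hL : L * L = c • L + μ • of (fun _ _ ↦ 1) - m • 1)
    (x : V → ℤ) :
    x ᵥ* L ᵥ* L = c • (x ᵥ* L) + (μ * ∑ i, x i) • (fun _ ↦ 1) - m • x := by
  rw [vecMul_vecMul, hL, vecMul_sub, vecMul_add, vecMul_smul, vecMul_smul, vecMul_smul, vecMul_one]
  ext j
  simp [vecMul, dotProduct, Finset.mul_sum]

theorem smul_mem_rowSpan_of_sum_eq_zero (hL : L * L = c • L + μ • of (fun _ _ ↦ 1) - m • 1)
    {d : V → ℤ} (hd : ∑ i, d i = 0) : m • d ∈ rowSpan L :=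
  mem_rowSpan_iff.mpr
    ⟨c • d - d ᵥ* L, by rw [sub_vecMul, smul_vecMul, vecMul_vecMul_of_mul_self_eq hL, hd]; simp⟩

theorem dvd_of_smul_mem_rowSpan (hL : L * L = c • L + μ • of (fun _ _ ↦ 1) - m • 1)
    {d : V → ℤ} {a b : V} (hda : d a = 0) (hdb : d b = 0)
    (hab : IsUnit ((d ᵥ* L) a - (d ᵥ* L) b)) {N : ℤ} (hN : N • d ∈ rowSpan L) : m ∣ N := by
  obtain ⟨x, hx⟩ := mem_rowSpan_iff.mp hN
  have hxL := vecMul_vecMul_of_mul_self_eq hL x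
  rw [hx, smul_vecMul] at hxL
  have ha := congrFun hxL a
  have hb := congrFun hxL b
  simp only [Pi.add_apply, Pi.sub_apply, Pi.smul_apply, smul_eq_mul, hda, hdb] at ha hb
  refine hab.dvd_mul_right.mp ⟨x b - x a, ?_⟩
  linear_combination ha - hb

theorem smul_mem_rowSpan_iff_dvd (hL : L * L = c • L + μ • of (fun _ _ ↦ 1) - m • 1)
    {d : V → ℤ} (hd : ∑ i, d i = 0) {a b : V} (hda : d a = 0) (hdb : d b = 0)
    (hab : IsUnit ((d ᵥ* L) a - (d ᵥ* L) b)) (N : ℤ) :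
    N • d ∈ rowSpan L ↔ m ∣ N := by
  refine ⟨dvd_of_smul_mem_rowSpan hL hda hdb hab, ?_⟩
  rintro ⟨t, rfl⟩
  simpa [mul_comm m, mul_smul] using zsmul_mem (smul_mem_rowSpan_of_sum_eq_zero hL hd) t

end RowSpan

section CriticalGroup

variable {V : Type*} [Fintype V] [DecidableEq V] {G : SimpleGraph V} [DecidableRel G.Adj]

theorem zsmul_mk_eq_zero_iff (x : sumZero V) (N : ℤ) :
    N • (QuotientAddGroup.mk x : critGroup G) = 0 ↔
      N • (x : V → ℤ) ∈ rowSpan (G.lapMatrix ℤ) := by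
  rw [← QuotientAddGroup.mk_zsmul, QuotientAddGroup.eq_zero_iff, AddSubgroup.mem_addSubgroupOf]
  rfl

end CriticalGroup

namespace SimpleGraph

variable {V : Type*} {G : SimpleGraph V}

theorem Connected.exists_adj_adj_not_adj_ne (hG : G.Connected)
    (h : ∃ x y : V, x ≠ y ∧ ¬G.Adj x y) :
    ∃ x a b : V, G.Adj x a ∧ G.Adj a b ∧ ¬G.Adj x b ∧ x ≠ b := by
  obtain ⟨x, y, hxy, hnadj⟩ := h
  obtain ⟨p, hp⟩ := (hG x y).exists_walk_length_eq_dist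
  have hdist₀ : G.dist x y ≠ 0 := (hG.dist_eq_zero_iff).not.mpr hxy
  have hdist₁ : G.dist x y ≠ 1 := dist_eq_one_iff_adj.not.mpr hnadj
  exact p.exists_adj_adj_not_adj_ne hp (by omega)

section

variable [DecidableEq V] [DecidableRel G.Adj]

theorem adjMatrix_compl (R : Type*) [Ring R] :
    Gᶜ.adjMatrix R = of (fun _ _ ↦ 1) - 1 - G.adjMatrix R := by
  ext a b
  obtain rfl | hab := eq_or_ne a b
  · simp
  · by_cases hadj : G.Adj a b <;> simp [hab, hadj]

end

variable [Fintype V] [DecidableRel G.Adj]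

theorem IsRegularOfDegree.add_two_le_card {k : ℕ} (h : G.IsRegularOfDegree k) {x y : V}
    (hxy : x ≠ y) (hnadj : ¬G.Adj x y) : k + 2 ≤ Fintype.card V := by
  classical
  have hy : y ∉ G.neighborFinset x := by simpa using hnadj
  have hx : x ∉ insert y (G.neighborFinset x) := by simp [hxy]
  calc k + 2 = (insert x (insert y (G.neighborFinset x))).card := by
        rw [card_insert_of_notMem hx, card_insert_of_notMem hy, card_neighborFinset_eq_degree,
          h x]
    _ ≤ Fintype.card V := card_le_univ _

variable {n k l μ : ℕ}

theorem IsSRGWith.mu_pos (h : G.IsSRGWith n k l μ) (hG : G.Connected)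
    (hne : ∃ x y : V, x ≠ y ∧ ¬G.Adj x y) : 0 < μ := by
  obtain ⟨x, a, b, hxa, hab, hxb, hxb_ne⟩ := hG.exists_adj_adj_not_adj_ne hne
  rw [← h.of_not_adj hxb_ne hxb]
  exact Fintype.card_pos_iff.mpr ⟨⟨a, hxa, hab.symm⟩⟩

theorem IsSRGWith.mu_le (h : G.IsSRGWith n k l μ) {x y : V} (hxy : x ≠ y) (hnadj : ¬G.Adj x y) :
    μ ≤ k := by
  simpa [h.of_not_adj hxy hnadj, h.regular x] using G.card_commonNeighbors_le_degree_left x y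

theorem IsSRGWith.param_eq_int (h : G.IsSRGWith n k l μ) (hlk : l < k) (hkn : k < n) :
    (k : ℤ) * (k - l - 1) = (n - k - 1) * μ := by
  have hparam := h.param_eq G (by omega)
  rw [Nat.sub_sub, Nat.sub_sub] at hparam
  zify [show l + 1 ≤ k by omega, show k + 1 ≤ n by omega] at hparam
  linear_combination hparam

theorem IsSRGWith.add_two_le_of_adj (h : G.IsSRGWith n k l μ) (hμ : 0 < μ) (hkn : k + 1 < n)
    {u v : V} (huv : G.Adj u v) : l + 2 ≤ k := by
  have hlk : l < k := by
    simpa [h.of_adj u v huv, h.regular u] using huv.card_commonNeighbors_lt_degree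
  have hparam := h.param_eq_int hlk (by omega)
  -- `k = l + 1` would make the left side of the parameter identity vanish
  by_contra hk
  have hkl : (k : ℤ) = l + 1 := by omega
  rw [hkl] at hparam
  nlinarith

theorem IsSRGWith.two_mul_lt_of_l_eq_zero (h : G.IsSRGWith n k l μ) (hl : l = 0) (hμ : 0 < μ)
    (hμk : μ < k) (hkn : k < n) : 2 * k < n := by
  subst hl
  have hparam := h.param_eq_int (by omega) hkn
  push_cast at hparam
  by_contra! hn
  -- `(n - k - 1) μ ≤ (k - 1) μ ≤ (k - 1)² < k (k - 1)`
  nlinarith [mul_nonneg (by omega : (0 : ℤ) ≤ 2 * k - n) (by omega : (0 : ℤ) ≤ μ),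
    mul_nonneg (by omega : (0 : ℤ) ≤ k - 1 - μ) (by omega : (0 : ℤ) ≤ k - 1)]

variable [DecidableEq V]

theorem lapMatrix_apply_of_ne (R : Type*) [AddGroupWithOne R] {a b : V} (hab : a ≠ b) :
    G.lapMatrix R a b = -G.adjMatrix R a b := by
  simp [lapMatrix, degMatrix, hab]

theorem IsRegularOfDegree.lapMatrix_eq (R : Type*) [Ring R] {k : ℕ} (h : G.IsRegularOfDegree k) :
    G.lapMatrix R = (k : R) • 1 - G.adjMatrix R := by
  ext a b
  obtain rfl | hab := eq_or_ne a b
  · simp [lapMatrix, degMatrix, h a]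
  · simp [lapMatrix_apply_of_ne R hab, hab]

theorem IsSRGWith.lapMatrix_mul_self (h : G.IsSRGWith n k l μ) (hlk : l < k) (hkn : k < n) :
    G.lapMatrix ℤ * G.lapMatrix ℤ =
      (2 * k + μ - l : ℤ) • G.lapMatrix ℤ + (μ : ℤ) • of (fun _ _ ↦ 1) - (n * μ : ℤ) • 1 := by
  have hA : G.adjMatrix ℤ * G.adjMatrix ℤ = (k : ℤ) • 1 + (l : ℤ) • G.adjMatrix ℤ +
      (μ : ℤ) • (of (fun _ _ ↦ 1) - 1 - G.adjMatrix ℤ) := by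
    simpa only [sq, adjMatrix_compl, Nat.cast_smul_eq_nsmul] using h.matrix_eq (α := ℤ)
  have hnμ : (n * μ : ℤ) = k * (k - l - 1) + μ * (k + 1) := by
    linear_combination -h.param_eq_int hlk hkn
  rw [h.regular.lapMatrix_eq ℤ, hnμ]
  simp only [sub_mul, mul_sub, smul_mul_assoc, mul_smul_comm, one_mul, mul_one, hA]
  module

theorem IsSRGWith.exists_adj_not_adj (h : G.IsSRGWith n k l μ) (hlk : l + 2 ≤ k) {u v : V}
    (huv : G.Adj u v) : ∃ w, G.Adj u w ∧ ¬G.Adj v w ∧ w ≠ v := by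
  have hsub : ¬G.neighborFinset u ⊆ insert v (G.commonNeighbors u v).toFinset := by
    intro hsub
    have := (card_le_card hsub).trans (card_insert_le _ _)
    rw [card_neighborFinset_eq_degree, h.regular u, Set.toFinset_card, h.of_adj u v huv] at this
    omega
  obtain ⟨w, hw, hw'⟩ := not_subset.mp hsub
  rw [mem_neighborFinset] at hw
  simp only [mem_insert, Set.mem_toFinset, not_or] at hw'
  exact ⟨w, hw, fun hvw ↦ hw'.2 ⟨hw, hvw⟩, hw'.1⟩

theorem IsSRGWith.exists_ne_ne_adj_iff_adj (h : G.IsSRGWith n k l μ) (hμ : 0 < μ) (hμk : μ ≤ k)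
    (hkn : k < n) (hbip : ¬(l = 0 ∧ μ = k)) {u v : V} (huv : G.Adj u v) :
    ∃ w, w ≠ u ∧ w ≠ v ∧ (G.Adj u w ↔ G.Adj v w) := by
  rcases Nat.eq_zero_or_pos l with hl | hl
  · have hn := h.two_mul_lt_of_l_eq_zero hl hμ (lt_of_le_of_ne hμk fun hμk ↦ hbip ⟨hl, hμk⟩) hkn
    have hcard : (G.neighborFinset u ∪ G.neighborFinset v).card < Fintype.card V := by
      rw [h.card_neighborFinset_union_of_adj huv, h.card]
      omega
    obtain ⟨w, -, hw⟩ := exists_mem_notMem_of_card_lt_card hcard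
    simp only [mem_union, mem_neighborFinset, not_or] at hw
    exact ⟨w, fun hwu ↦ hw.2 (hwu ▸ huv.symm), fun hwv ↦ hw.1 (hwv ▸ huv), by tauto⟩
  · obtain ⟨⟨w, huw, hvw⟩⟩ := Fintype.card_pos_iff.mp (h.of_adj u v huv ▸ hl)
    exact ⟨w, (G.ne_of_adj huw).symm, (G.ne_of_adj hvw).symm, iff_of_true huw hvw⟩

end SimpleGraph

section ChipDiff

variable {V : Type*} [Fintype V] [DecidableEq V] {u v w : V}

theorem chipDiff_apply_of_ne (hu : w ≠ u) (hv : w ≠ v) : (chipDiff u v : V → ℤ) w = 0 := by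
  simp [chipDiff, hu, hv]

theorem chipDiff_vecMul_lapMatrix_apply_of_ne (G : SimpleGraph V) [DecidableRel G.Adj]
    (hu : w ≠ u) (hv : w ≠ v) :
    ((chipDiff u v : V → ℤ) ᵥ* G.lapMatrix ℤ) w = G.adjMatrix ℤ v w - G.adjMatrix ℤ u w := by
  simp only [chipDiff, sub_vecMul, single_one_vecMul, Pi.sub_apply, row,
    lapMatrix_apply_of_ne ℤ hu.symm, lapMatrix_apply_of_ne ℤ hv.symm]
  ring

end ChipDiff

theorem stmt0 {V : Type*} [Fintype V] [DecidableEq V] (G : SimpleGraph V)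
    [DecidableRel G.Adj] {n k l μ : ℕ}
    (hsrg : G.IsSRGWith n k l μ) (hconn : G.Connected)
    (hnotcomplete : ∃ x y : V, x ≠ y ∧ ¬G.Adj x y)
    (hnotbip : ¬(l = 0 ∧ μ = k))
    (u v : V) (huv : G.Adj u v) :
    addOrderOf ((QuotientAddGroup.mk (chipDiff u v)) : critGroup G) = n * μ := by
  have hμ := hsrg.mu_pos hconn hnotcomplete
  obtain ⟨x, y, hxy, hnadj⟩ := hnotcomplete
  have hkn : k + 2 ≤ n := hsrg.card ▸ hsrg.regular.add_two_le_card hxy hnadj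
  have hlk := hsrg.add_two_le_of_adj hμ hkn huv
  obtain ⟨a, hua, hva, hav⟩ := hsrg.exists_adj_not_adj hlk huv
  have hau : a ≠ u := (G.ne_of_adj hua).symm
  obtain ⟨b, hbu, hbv, hb⟩ :=
    hsrg.exists_ne_ne_adj_iff_adj hμ (hsrg.mu_le hxy hnadj) (by omega) hnotbip huv
  -- `(e_u - e_v) L` is `-1` at `a` and `0` at `b`
  have hunit : IsUnit (((chipDiff u v : V → ℤ) ᵥ* G.lapMatrix ℤ) a -
      ((chipDiff u v : V → ℤ) ᵥ* G.lapMatrix ℤ) b) := by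
    simp [chipDiff_vecMul_lapMatrix_apply_of_ne G hau hav,
      chipDiff_vecMul_lapMatrix_apply_of_ne G hbu hbv, hua, hva, hb]
  have hrel : ∀ N : ℤ, N • (QuotientAddGroup.mk (chipDiff u v) : critGroup G) = 0 ↔
      ((n * μ : ℕ) : ℤ) ∣ N := fun N ↦ by
    rw [zsmul_mk_eq_zero_iff, Nat.cast_mul]
    exact smul_mem_rowSpan_iff_dvd (hsrg.lapMatrix_mul_self (by omega) (by omega))
      (chipDiff u v).2 (chipDiff_apply_of_ne hau hav) (chipDiff_apply_of_ne hbu hbv) hunit N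
  refine Nat.dvd_right_iff_eq.mp fun N ↦ ?_
  rw [addOrderOf_dvd_iff_nsmul_eq_zero, ← natCast_zsmul, hrel, Int.natCast_dvd_natCast]
end

section
/- Let G be a connected non-regular graph on n vertices (there exist two vertices of different degrees) such that for some natural numbers μ and μ̄: any two distinct non-adjacent vertices have exactly μ common neighbors, and for any two adjacent vertices u, v there are exactly μ̄ vertices w ∉ {u,v} adjacent to neither u nor v. Assume moreover that G is not a star K_{1,p}, i.e., there is no vertex c such that two vertices are adjacent exactly when they are distinct and one of them equals c. Then the exponent of the critical group K(G) is exactly n·μ. -/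
set_option linter.unusedSectionVars false
set_option maxHeartbeats 1000000


open Finset

namespace StmtAux
open Matrix
variable {V : Type*} [Fintype V] [DecidableEq V] (G : SimpleGraph V) [DecidableRel G.Adj]
def ia (x y : V) : ℤ := if G.Adj x y then 1 else 0
variable {G}
lemma ia_comm (x y : V) : ia G x y = ia G y x := by
  simp only [ia, SimpleGraph.adj_comm]
lemma ia_self (x : V) : ia G x x = 0 := by simp [ia]
lemma sum_ia (x : V) : ∑ z, ia G x z = (G.degree x : ℤ) := by
  simp only [ia]
  rw [← Finset.natCast_card_filter]
  congr 1
  simp [SimpleGraph.degree, SimpleGraph.neighborFinset_eq_filter]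
lemma sum_split {x y : V} (hxy : x ≠ y) (f : V → ℤ) :
    ∑ z, f z = f x + f y + ∑ z ∈ (univ.erase x).erase y, f z := by
  have h1 : y ∈ univ.erase x := Finset.mem_erase.mpr ⟨hxy.symm, Finset.mem_univ y⟩
  rw [← Finset.add_sum_erase _ f (Finset.mem_univ x), ← Finset.add_sum_erase _ f h1]
  ring
lemma card_common (x y : V) :
    ((Fintype.card (G.commonNeighbors x y) : ℤ)) = ∑ z, ia G x z * ia G y z := by
  have h : Fintype.card (G.commonNeighbors x y)
      = (univ.filter (fun z => G.Adj x z ∧ G.Adj y z)).card := by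
    rw [← Fintype.card_subtype]
    exact Fintype.card_congr (Equiv.subtypeEquivRight (fun z => by
      simp [SimpleGraph.mem_commonNeighbors]))
  rw [h, Finset.natCast_card_filter]
  refine Finset.sum_congr rfl fun z _ => ?_
  by_cases h1 : G.Adj x z <;> by_cases h2 : G.Adj y z <;> simp [ia, h1, h2]

-- NEW PART
lemma two_le_card {x y : V} (hxy : x ≠ y) : 2 ≤ Fintype.card V :=
  Fintype.one_lt_card_iff_nontrivial.mpr ⟨⟨x, y, hxy⟩⟩

lemma count_adj {μbar : ℕ}
    (hμbar : ∀ x y : V, G.Adj x y →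
      (Finset.univ.filter fun w => w ≠ x ∧ w ≠ y ∧ ¬G.Adj x w ∧ ¬G.Adj y w).card = μbar)
    {x y : V} (h : G.Adj x y) :
    ∑ z, ia G x z * ia G y z
      = (G.degree x : ℤ) + G.degree y + μbar - Fintype.card V := by
  have hxy : x ≠ y := G.ne_of_adj h
  set s := (univ.erase x).erase y with hs
  have hmem : ∀ z ∈ s, z ≠ x ∧ z ≠ y := fun z hz => by
    simp only [hs, Finset.mem_erase, Finset.mem_univ, and_true] at hz
    exact ⟨hz.2, hz.1⟩
  have hb : (μbar : ℤ)
      = ∑ z, (if (z ≠ x ∧ z ≠ y ∧ ¬G.Adj x z ∧ ¬G.Adj y z) then (1:ℤ) else 0) := by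
    rw [← hμbar x y h, Finset.natCast_card_filter]
  rw [sum_split hxy] at hb
  have hbx : (if (x ≠ x ∧ x ≠ y ∧ ¬G.Adj x x ∧ ¬G.Adj y x) then (1:ℤ) else 0) = 0 := by simp
  have hby : (if (y ≠ x ∧ y ≠ y ∧ ¬G.Adj x y ∧ ¬G.Adj y y) then (1:ℤ) else 0) = 0 := by simp
  rw [hbx, hby] at hb
  have hkey : ∀ z ∈ s, (if (z ≠ x ∧ z ≠ y ∧ ¬G.Adj x z ∧ ¬G.Adj y z) then (1:ℤ) else 0)
      = 1 - ia G x z - ia G y z + ia G x z * ia G y z := by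
    intro z hz
    obtain ⟨hzx, hzy⟩ := hmem z hz
    by_cases h1 : G.Adj x z <;> by_cases h2 : G.Adj y z <;> simp [ia, h1, h2, hzx, hzy]
  rw [Finset.sum_congr rfl hkey] at hb
  have c1 : ∑ _z ∈ s, (1:ℤ) = (Fintype.card V : ℤ) - 2 := by
    rw [Finset.sum_const, nsmul_eq_mul, mul_one]
    have h2 : 2 ≤ Fintype.card V := two_le_card hxy
    have hy : y ∈ univ.erase x := Finset.mem_erase.mpr ⟨hxy.symm, Finset.mem_univ y⟩
    rw [hs, Finset.card_erase_of_mem hy, Finset.card_erase_of_mem (Finset.mem_univ x),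
      Finset.card_univ]
    push_cast [Nat.cast_sub (by omega : 1 ≤ Fintype.card V - 1),
      Nat.cast_sub (by omega : 1 ≤ Fintype.card V)]
    ring
  have c2 : ∑ z ∈ s, ia G x z = (G.degree x : ℤ) - 1 := by
    have := sum_split hxy (fun z => ia G x z)
    rw [sum_ia, ia_self] at this
    have hxy1 : ia G x y = 1 := by simp [ia, h]
    rw [hxy1] at this; linarith
  have c3 : ∑ z ∈ s, ia G y z = (G.degree y : ℤ) - 1 := by
    have := sum_split hxy (fun z => ia G y z)
    rw [sum_ia, ia_self] at this
    have hyx1 : ia G y x = 1 := by simp [ia, h.symm]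
    rw [hyx1] at this; linarith
  have c4 : ∑ z ∈ s, ia G x z * ia G y z = ∑ z, ia G x z * ia G y z := by
    have := sum_split hxy (fun z => ia G x z * ia G y z)
    rw [ia_self, ia_self] at this
    rw [this]; ring
  rw [Finset.sum_add_distrib, Finset.sum_sub_distrib, Finset.sum_sub_distrib, c1, c2, c3, c4]
    at hb
  linarith

lemma lap_apply (x y : V) :
    G.lapMatrix ℤ x y = (if x = y then (G.degree x : ℤ) else 0) - ia G x y := by
  simp [SimpleGraph.lapMatrix, SimpleGraph.degMatrix, SimpleGraph.adjMatrix, ia, Matrix.diagonal_apply]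

lemma lap_rowsum (x : V) : ∑ y, G.lapMatrix ℤ x y = 0 := by
  have := congrFun (G.lapMatrix_mulVec_const_eq_zero (R := ℤ)) x
  simpa [Matrix.mulVec, dotProduct] using this

lemma LL_rowsum (x : V) : ∑ y, (G.lapMatrix ℤ * G.lapMatrix ℤ) x y = 0 := by
  simp only [Matrix.mul_apply]
  rw [Finset.sum_comm]
  refine Finset.sum_eq_zero fun z _ => ?_
  rw [← Finset.mul_sum, lap_rowsum, mul_zero]


lemma LL_offdiag {μ μbar : ℕ}
    (hμ : ∀ x y : V, x ≠ y → ¬G.Adj x y → Fintype.card (G.commonNeighbors x y) = μ)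
    (hμbar : ∀ x y : V, G.Adj x y →
      (Finset.univ.filter fun w => w ≠ x ∧ w ≠ y ∧ ¬G.Adj x w ∧ ¬G.Adj y w).card = μbar)
    {x y : V} (hxy : x ≠ y) :
    (G.lapMatrix ℤ * G.lapMatrix ℤ) x y
      = ((Fintype.card V : ℤ) + μ - μbar) * G.lapMatrix ℤ x y + μ := by
  have expand : ∀ z, G.lapMatrix ℤ x z * G.lapMatrix ℤ z y
      = ((if x = z then (G.degree x : ℤ) else 0) * (if z = y then (G.degree z : ℤ) else 0)
        - (if x = z then (G.degree x : ℤ) else 0) * ia G z y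
        - ia G x z * (if z = y then (G.degree z : ℤ) else 0))
        + ia G x z * ia G y z := by
    intro z
    rw [lap_apply, lap_apply, ia_comm z y]
    ring
  rw [Matrix.mul_apply, Finset.sum_congr rfl (fun z _ => expand z), Finset.sum_add_distrib]
  have t1 : ∑ z, ((if x = z then (G.degree x : ℤ) else 0) * (if z = y then (G.degree z : ℤ) else 0)
        - (if x = z then (G.degree x : ℤ) else 0) * ia G z y
        - ia G x z * (if z = y then (G.degree z : ℤ) else 0))
      = -(G.degree x : ℤ) * ia G x y - ia G x y * (G.degree y : ℤ) := by
    rw [Finset.sum_sub_distrib, Finset.sum_sub_distrib]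
    have e1 : ∑ z, (if x = z then (G.degree x : ℤ) else 0) * (if z = y then (G.degree z : ℤ) else 0) = 0 := by
      refine Finset.sum_eq_zero fun z _ => ?_
      by_cases h1 : x = z
      · subst h1
        have : ¬ (x = y) := hxy
        simp [this]
      · simp [h1]
    have e2 : ∑ z, (if x = z then (G.degree x : ℤ) else 0) * ia G z y
        = (G.degree x : ℤ) * ia G x y := by
      rw [Finset.sum_congr rfl (fun z _ => by rw [ite_mul, zero_mul] :
        ∀ z ∈ univ, (if x = z then (G.degree x : ℤ) else 0) * ia G z y
          = if x = z then (G.degree x : ℤ) * ia G z y else 0)]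
      simp
    have e3 : ∑ z, ia G x z * (if z = y then (G.degree z : ℤ) else 0)
        = ia G x y * (G.degree y : ℤ) := by
      rw [Finset.sum_congr rfl (fun z _ => by rw [mul_ite, mul_zero] :
        ∀ z ∈ univ, ia G x z * (if z = y then (G.degree z : ℤ) else 0)
          = if z = y then ia G x z * (G.degree z : ℤ) else 0)]
      simp
    rw [e1, e2, e3]; ring
  rw [t1]
  by_cases hadj : G.Adj x y
  · rw [count_adj hμbar hadj]
    have h1 : ia G x y = 1 := by simp [ia, hadj]
    have h2 : G.lapMatrix ℤ x y = -1 := by rw [lap_apply]; simp [hxy, h1]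
    rw [h1, h2]; ring
  · have h1 : ia G x y = 0 := by simp [ia, hadj]
    have h2 : G.lapMatrix ℤ x y = 0 := by rw [lap_apply]; simp [hxy, h1]
    have h3 : ∑ z, ia G x z * ia G y z = (μ : ℤ) := by
      rw [← card_common, hμ x y hxy hadj]
    rw [h1, h2, h3]; ring

lemma LL_entry {μ μbar : ℕ}
    (hμ : ∀ x y : V, x ≠ y → ¬G.Adj x y → Fintype.card (G.commonNeighbors x y) = μ)
    (hμbar : ∀ x y : V, G.Adj x y →
      (Finset.univ.filter fun w => w ≠ x ∧ w ≠ y ∧ ¬G.Adj x w ∧ ¬G.Adj y w).card = μbar)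
    (x y : V) :
    (G.lapMatrix ℤ * G.lapMatrix ℤ) x y
      = ((Fintype.card V : ℤ) + μ - μbar) * G.lapMatrix ℤ x y + μ
        - (if x = y then ((Fintype.card V : ℤ) * μ) else 0) := by
  by_cases hxy : x = y
  · subst hxy
    simp only [eq_self_iff_true, if_true]
    have h0 := LL_rowsum (G := G) x
    rw [← Finset.add_sum_erase _ _ (Finset.mem_univ x)] at h0
    have hsum : ∑ y ∈ univ.erase x, (G.lapMatrix ℤ * G.lapMatrix ℤ) x y
        = ((Fintype.card V : ℤ) + μ - μbar) * (∑ y ∈ univ.erase x, G.lapMatrix ℤ x y)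
          + ((Fintype.card V : ℤ) - 1) * μ := by
      rw [Finset.sum_congr rfl (fun y hy => LL_offdiag hμ hμbar
        (Ne.symm (Finset.mem_erase.mp hy).1)), Finset.sum_add_distrib, ← Finset.mul_sum,
        Finset.sum_const, Finset.card_erase_of_mem (Finset.mem_univ x), Finset.card_univ,
        nsmul_eq_mul]
      have h1 : 1 ≤ Fintype.card V := by
        have : Nonempty V := ⟨x⟩
        exact Fintype.card_pos
      push_cast [Nat.cast_sub h1]
      ring
    have hrow : ∑ y ∈ univ.erase x, G.lapMatrix ℤ x y = - G.lapMatrix ℤ x x := by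
      have := lap_rowsum (G := G) x
      rw [← Finset.add_sum_erase _ _ (Finset.mem_univ x)] at this
      linarith
    rw [hsum, hrow, mul_neg] at h0
    linarith
  · rw [if_neg hxy, LL_offdiag hμ hμbar hxy]; ring


lemma key_mulVec {μ μbar : ℕ}
    (hμ : ∀ x y : V, x ≠ y → ¬G.Adj x y → Fintype.card (G.commonNeighbors x y) = μ)
    (hμbar : ∀ x y : V, G.Adj x y →
      (Finset.univ.filter fun w => w ≠ x ∧ w ≠ y ∧ ¬G.Adj x w ∧ ¬G.Adj y w).card = μbar)
    (w : V → ℤ) (x : V) :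
    (G.lapMatrix ℤ *ᵥ (G.lapMatrix ℤ *ᵥ w)) x
      = ((Fintype.card V : ℤ) + μ - μbar) * (G.lapMatrix ℤ *ᵥ w) x
        + (μ : ℤ) * (∑ v, w v) - ((Fintype.card V : ℤ) * μ) * w x := by
  rw [Matrix.mulVec_mulVec]
  simp only [Matrix.mulVec, dotProduct]
  rw [Finset.sum_congr rfl (fun y _ => by rw [LL_entry hμ hμbar x y] :
    ∀ y ∈ univ, (G.lapMatrix ℤ * G.lapMatrix ℤ) x y * w y
      = (((Fintype.card V : ℤ) + μ - μbar) * G.lapMatrix ℤ x y + μ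
          - (if x = y then ((Fintype.card V : ℤ) * μ) else 0)) * w y)]
  have e0 : ∀ y, (((Fintype.card V : ℤ) + μ - μbar) * G.lapMatrix ℤ x y + μ
          - (if x = y then ((Fintype.card V : ℤ) * μ) else 0)) * w y
      = ((Fintype.card V : ℤ) + μ - μbar) * (G.lapMatrix ℤ x y * w y) + μ * w y
          - (if x = y then ((Fintype.card V : ℤ) * μ) * w y else 0) := by
    intro y; by_cases h : x = y <;> simp [h] <;> ring
  rw [Finset.sum_congr rfl (fun y _ => e0 y), Finset.sum_sub_distrib, Finset.sum_add_distrib,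
    ← Finset.mul_sum, ← Finset.mul_sum]
  simp [Finset.sum_ite_eq]

lemma mulVec_eq_sum_rows (c : V → ℤ) :
    G.lapMatrix ℤ *ᵥ c = ∑ i, c i • (G.lapMatrix ℤ i) := by
  funext z
  rw [Finset.sum_apply]
  simp only [Pi.smul_apply, smul_eq_mul, Matrix.mulVec, dotProduct]
  refine Finset.sum_congr rfl fun i _ => ?_
  rw [(G.isSymm_lapMatrix (R := ℤ)).apply z i, mul_comm]

lemma mem_rowSpan_iff (v : V → ℤ) :
    v ∈ rowSpan (G.lapMatrix ℤ) ↔ ∃ c, G.lapMatrix ℤ *ᵥ c = v := by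
  have h : v ∈ rowSpan (G.lapMatrix ℤ)
      ↔ v ∈ Submodule.span ℤ (Set.range fun w => G.lapMatrix ℤ w) := Iff.rfl
  rw [h, Finsupp.mem_span_range_iff_exists_finsupp]
  constructor
  · rintro ⟨c, hc⟩
    exact ⟨fun i => c i, by rw [mulVec_eq_sum_rows, ← hc, Finsupp.sum_fintype] ; simp⟩
  · rintro ⟨c, hc⟩
    refine ⟨Finsupp.equivFunOnFinite.symm c, ?_⟩
    rw [Finsupp.sum_fintype]
    · rw [← mulVec_eq_sum_rows] at *
      simpa using hc
    · simp

lemma prime_wit {N E : ℕ} (hN : 0 < N) (hnd : ¬ N ∣ E) :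
    ∃ p : ℕ, p.Prime ∧ ∀ m : ℤ, (N:ℤ) ∣ (E:ℤ) * m → (p:ℤ) ∣ m := by
  set d := N.gcd E with hd
  have hd0 : 0 < d := Nat.gcd_pos_of_pos_left _ hN
  set q := N / d with hq
  have hNdq : N = d * q := (Nat.mul_div_cancel' (Nat.gcd_dvd_left N E)).symm
  have hq1 : q ≠ 1 := by
    intro h
    rw [h, mul_one] at hNdq
    exact hnd (hNdq ▸ Nat.gcd_dvd_right N E)
  refine ⟨q.minFac, Nat.minFac_prime hq1, ?_⟩
  intro m hm
  have h1 : N ∣ E * m.natAbs := by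
    have h2 : (N:ℤ) ∣ (((E:ℤ) * m).natAbs : ℤ) := Int.dvd_natAbs.mpr hm
    have h3 : ((E:ℤ) * m).natAbs = E * m.natAbs := by
      rw [Int.natAbs_mul, Int.natAbs_natCast]
    rw [h3] at h2
    exact_mod_cast h2
  have hE : E = d * (E / d) := (Nat.mul_div_cancel' (Nat.gcd_dvd_right N E)).symm
  have h2 : q ∣ (E/d) * m.natAbs := by
    have h4 : d * q ∣ d * ((E/d) * m.natAbs) := by
      rw [← mul_assoc, ← hE, ← hNdq]; exact h1
    exact (mul_dvd_mul_iff_left (by omega : d ≠ 0)).mp h4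
  have hcop : Nat.Coprime q (E/d) := Nat.coprime_div_gcd_div_gcd hd0
  have h3 : q ∣ m.natAbs := hcop.dvd_of_dvd_mul_left h2
  have h4 : q.minFac ∣ m.natAbs := (Nat.minFac_dvd q).trans h3
  exact Int.natAbs_dvd_natAbs.mp (by simpa using h4)

lemma mu_pos {μ : ℕ} (hconn : G.Connected)
    (hnonreg : ∃ x y : V, G.degree x ≠ G.degree y)
    (hμ : ∀ x y : V, x ≠ y → ¬G.Adj x y → Fintype.card (G.commonNeighbors x y) = μ) :
    0 < μ := by
  have aux1 : ∀ x y : V, G.Adj x y → G.degree x < G.degree y → 0 < μ := by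
    intro x y hadj hlt
    have hxy : x ≠ y := G.ne_of_adj hadj
    by_cases hsub : ∀ z, z ≠ x → G.Adj y z → G.Adj x z
    · exfalso
      have hz : ∀ z ∈ (univ.erase x).erase y, ia G y z ≤ ia G x z := by
        intro z hz0
        simp only [Finset.mem_erase, Finset.mem_univ, and_true] at hz0
        simp only [ia]
        by_cases h2 : G.Adj y z
        · rw [if_pos h2, if_pos (hsub z hz0.2 h2)]
        · rw [if_neg h2]; split <;> norm_num
      have h2 : (G.degree y : ℤ) ≤ (G.degree x : ℤ) := by
        rw [← sum_ia, ← sum_ia, sum_split hxy (fun z => ia G x z),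
          sum_split hxy (fun z => ia G y z)]
        have hcomm : ia G y x = ia G x y := ia_comm y x
        simp only [ia_self, hcomm]
        have := Finset.sum_le_sum hz
        linarith
      have h3 : G.degree y ≤ G.degree x := by exact_mod_cast h2
      omega
    · push_neg at hsub
      obtain ⟨z, hzx, hyz, hnadj⟩ := hsub
      have hzy : z ≠ y := (G.ne_of_adj hyz).symm
      have hcard := hμ x z (Ne.symm hzx) hnadj
      have hpos : 0 < Fintype.card (G.commonNeighbors x z) := by
        refine Fintype.card_pos_iff.mpr ⟨⟨y, ?_⟩⟩
        rw [SimpleGraph.mem_commonNeighbors]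
        exact ⟨hadj, hyz.symm⟩
      omega
  obtain ⟨x, y, hd⟩ := hnonreg
  have hxy : x ≠ y := by rintro rfl; exact hd rfl
  by_cases hadj : G.Adj x y
  · rcases hd.lt_or_gt with h | h
    · exact aux1 x y hadj h
    · exact aux1 y x hadj.symm h
  · by_contra h0
    have hμ0 : μ = 0 := by omega
    have hno : ∀ a b : V, a ≠ b → ¬G.Adj a b → ∀ c, ¬(G.Adj a c ∧ G.Adj b c) := by
      intro a b hab hnadj c hc
      have hcc := hμ a b hab hnadj
      rw [hμ0] at hcc
      have : IsEmpty (G.commonNeighbors a b) := Fintype.card_eq_zero_iff.mp hcc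
      exact this.false ⟨c, (SimpleGraph.mem_commonNeighbors G).mpr hc⟩
    have key : ∀ (a b : V) (_ : G.Walk a b), a ≠ b → G.Adj a b := by
      intro a b wlk
      induction wlk with
      | nil => intro h; exact absurd rfl h
      | @cons a c b hac q ih =>
        intro hab
        by_cases hcb : c = b
        · subst hcb; exact hac
        · have hcb' : G.Adj c b := ih hcb
          by_contra hnadj
          exact hno a b hab hnadj c ⟨hac, hcb'.symm⟩
    obtain ⟨wlk⟩ := hconn.preconnected x y
    exact hadj (key x y wlk hxy)

lemma allTwins_regular
    (htw : ∀ u v z : V, u ≠ v → z ≠ u → z ≠ v → (G.Adj z u ↔ G.Adj z v)) :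
    ∀ x y : V, G.degree x = G.degree y := by
  intro x y
  by_cases hxy : x = y
  · rw [hxy]
  have hZ : (G.degree x : ℤ) = (G.degree y : ℤ) := by
    rw [← sum_ia, ← sum_ia, sum_split hxy (fun z => ia G x z),
      sum_split hxy (fun z => ia G y z)]
    simp only [ia_self]
    have hxyc : ia G x y = ia G y x := ia_comm x y
    have hs : ∑ z ∈ (univ.erase x).erase y, ia G x z
        = ∑ z ∈ (univ.erase x).erase y, ia G y z := by
      refine Finset.sum_congr rfl fun z hz => ?_
      simp only [Finset.mem_erase, Finset.mem_univ, and_true] at hz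
      have h := htw x y z hxy hz.2 hz.1
      rw [ia_comm x z, ia_comm y z]
      simp only [ia]
      by_cases h1 : G.Adj z x
      · rw [if_pos h1, if_pos (h.mp h1)]
      · rw [if_neg h1, if_neg (fun h2 => h1 (h.mpr h2))]
    rw [hxyc, hs]; ring
  exact_mod_cast hZ

lemma graph_contra {μ μbar : ℕ} (hconn : G.Connected)
    (hnonreg : ∃ x y : V, G.degree x ≠ G.degree y)
    (hμ : ∀ x y : V, x ≠ y → ¬G.Adj x y → Fintype.card (G.commonNeighbors x y) = μ)
    (hμbar : ∀ x y : V, G.Adj x y →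
      (Finset.univ.filter fun w => w ≠ x ∧ w ≠ y ∧ ¬G.Adj x w ∧ ¬G.Adj y w).card = μbar)
    (hnostar : ¬∃ c : V, ∀ x y : V, G.Adj x y ↔ (x ≠ y ∧ (x = c ∨ y = c)))
    (p : ℕ) (hp : p.Prime)
    (H : ∀ u v z₁ z₂ : V, u ≠ v → z₁ ≠ u → z₁ ≠ v → z₂ ≠ u → z₂ ≠ v →
      (p:ℤ) ∣ ((ia G z₁ u - ia G z₁ v) - (ia G z₂ u - ia G z₂ v))) : False := by
  have hμpos : 0 < μ := mu_pos hconn hnonreg hμ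
  have hbnd : ∀ a b : V, 0 ≤ ia G a b ∧ ia G a b ≤ 1 := by
    intro a b; unfold ia; split <;> norm_num
  by_cases hp3 : 3 ≤ p
  · -- p ≥ 3 case
    have hconst : ∀ u v z₁ z₂ : V, u ≠ v → z₁ ≠ u → z₁ ≠ v → z₂ ≠ u → z₂ ≠ v →
        ia G z₁ u - ia G z₁ v = ia G z₂ u - ia G z₂ v := by
      intro u v z₁ z₂ huv h1u h1v h2u h2v
      have hd := H u v z₁ z₂ huv h1u h1v h2u h2v
      have hpk : p ∣ ((ia G z₁ u - ia G z₁ v) - (ia G z₂ u - ia G z₂ v)).natAbs := by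
        have := Int.natAbs_dvd_natAbs.mpr hd
        simpa using this
      have b1 := hbnd z₁ u; have b2 := hbnd z₁ v
      have b3 := hbnd z₂ u; have b4 := hbnd z₂ v
      have hb : ((ia G z₁ u - ia G z₁ v) - (ia G z₂ u - ia G z₂ v)).natAbs ≤ 2 := by omega
      rcases Nat.eq_zero_or_pos ((ia G z₁ u - ia G z₁ v) - (ia G z₂ u - ia G z₂ v)).natAbs
        with h | h
      · omega
      · have := Nat.le_of_dvd h hpk; omega
    by_cases htw : ∀ u v z : V, u ≠ v → z ≠ u → z ≠ v → (G.Adj z u ↔ G.Adj z v)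
    · obtain ⟨x, y, hd⟩ := hnonreg
      exact hd (allTwins_regular htw x y)
    · push_neg at htw
      obtain ⟨u0, v0, z0, huv0, hzu0, hzv0, hiff⟩ := htw
      have hiff' : ¬ (G.Adj z0 u0 ↔ G.Adj z0 v0) := by
        rcases hiff with ⟨h1, h2⟩ | ⟨h1, h2⟩ <;> intro h
        · exact h2 (h.mp h1)
        · exact h1 (h.mpr h2)
      have hw : ∃ u v z, (u ≠ v) ∧ z ≠ u ∧ z ≠ v ∧ G.Adj z u ∧ ¬ G.Adj z v := by
        by_cases h1 : G.Adj z0 u0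
        · have h2 : ¬ G.Adj z0 v0 := fun h => hiff' (iff_of_true h1 h)
          exact ⟨u0, v0, z0, huv0, hzu0, hzv0, h1, h2⟩
        · have h2 : G.Adj z0 v0 := by
            by_contra h2
            exact hiff' (iff_of_false h1 h2)
          exact ⟨v0, u0, z0, huv0.symm, hzv0, hzu0, h2, h1⟩
      obtain ⟨u, v, z0', huv, hz0u, hz0v, hadj0, hnadj0⟩ := hw
      have hZ : ∀ z, z ≠ u → z ≠ v → G.Adj z u ∧ ¬ G.Adj z v := by
        intro z hzu hzv
        have hc := hconst u v z z0' huv hzu hzv hz0u hz0v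
        have e0 : ia G z0' u - ia G z0' v = 1 := by simp [ia, hadj0, hnadj0]
        rw [e0] at hc
        have b1 := hbnd z u; have b2 := hbnd z v
        constructor
        · by_contra h1
          have h2 : ia G z u = 0 := by simp [ia, h1]
          omega
        · intro h1
          have h2 : ia G z v = 1 := by simp [ia, h1]
          omega
      by_cases hadjuv : G.Adj u v
      · have hmb0 : μbar = 0 := by
          rw [← hμbar u v hadjuv, Finset.card_eq_zero, Finset.filter_eq_empty_iff]
          intro w _
          rintro ⟨hwu, hwv, h3, _⟩
          exact h3 ((hZ w hwu hwv).1).symm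
        by_cases hZedge : ∃ z z', z ≠ u ∧ z ≠ v ∧ z' ≠ u ∧ z' ≠ v ∧ G.Adj z z'
        · obtain ⟨z, z', hzu, hzv, hz'u, hz'v, hzz'⟩ := hZedge
          have h1 := hμbar z z' hzz'
          rw [hmb0, Finset.card_eq_zero] at h1
          have h2 : v ∈ (Finset.univ.filter
              fun w => w ≠ z ∧ w ≠ z' ∧ ¬G.Adj z w ∧ ¬G.Adj z' w) := by
            simp only [Finset.mem_filter, Finset.mem_univ, true_and]
            exact ⟨Ne.symm hzv, Ne.symm hz'v, (hZ z hzu hzv).2, (hZ z' hz'u hz'v).2⟩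
          rw [h1] at h2
          exact absurd h2 (Finset.notMem_empty v)
        · push_neg at hZedge
          refine hnostar ⟨u, fun x y => ?_⟩
          constructor
          · intro hxy
            refine ⟨G.ne_of_adj hxy, ?_⟩
            by_contra hc
            push_neg at hc
            obtain ⟨hxu, hyu⟩ := hc
            by_cases hxv : x = v
            · have hyv : y ≠ v := fun h => (G.ne_of_adj hxy) (by rw [hxv, h])
              rw [hxv] at hxy
              exact (hZ y hyu hyv).2 hxy.symm
            · by_cases hyv : y = v
              · rw [hyv] at hxy
                exact (hZ x hxu hxv).2 hxy
              · exact hZedge x y hxu hxv hyu hyv hxy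
          · rintro ⟨hxy, rfl | rfl⟩
            · by_cases hyv : y = v
              · rw [hyv]; exact hadjuv
              · exact ((hZ y (Ne.symm hxy) hyv).1).symm
            · by_cases hxv : x = v
              · rw [hxv]; exact hadjuv.symm
              · exact (hZ x hxy hxv).1
      · have hc := hμ u v huv hadjuv
        have hpos : 0 < Fintype.card (G.commonNeighbors u v) := by omega
        obtain ⟨⟨w, hwmem⟩⟩ := Fintype.card_pos_iff.mp hpos
        rw [SimpleGraph.mem_commonNeighbors] at hwmem
        obtain ⟨h1, h2⟩ := hwmem
        have hwu : w ≠ u := (G.ne_of_adj h1).symm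
        have hwv : w ≠ v := (G.ne_of_adj h2).symm
        exact (hZ w hwu hwv).2 h2.symm
  · -- p = 2 case
    have hp2 : p = 2 := by have := hp.two_le; omega
    subst hp2
    have hdich : ∀ u v : V, u ≠ v →
        (∀ z, z ≠ u → z ≠ v → (G.Adj z u ↔ G.Adj z v)) ∨
        (∀ z, z ≠ u → z ≠ v → ¬(G.Adj z u ↔ G.Adj z v)) := by
      intro u v huv
      by_cases h : ∀ z, z ≠ u → z ≠ v → (G.Adj z u ↔ G.Adj z v)
      · exact Or.inl h
      · push_neg at h
        obtain ⟨z0, hz0u, hz0v, hz0d⟩ := h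
        have hz0 : ¬ (G.Adj z0 u ↔ G.Adj z0 v) := by
          rcases hz0d with ⟨h1, h2⟩ | ⟨h1, h2⟩ <;> intro hh
          · exact h2 (hh.mp h1)
          · exact h1 (hh.mpr h2)
        refine Or.inr fun z hzu hzv hiff => ?_
        have hd := H u v z z0 huv hzu hzv hz0u hz0v
        have e1 : ia G z u = ia G z v := by
          simp only [ia]
          by_cases h1 : G.Adj z u
          · rw [if_pos h1, if_pos (hiff.mp h1)]
          · rw [if_neg h1, if_neg (fun h2 => h1 (hiff.mpr h2))]
        have e4 : ¬ (ia G z0 u = ia G z0 v) := by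
          by_cases h1 : G.Adj z0 u
          · have h2 : ¬ G.Adj z0 v := fun h => hz0 (iff_of_true h1 h)
            simp [ia, h1, h2]
          · have h2 : G.Adj z0 v := by
              by_contra h2
              exact hz0 (iff_of_false h1 h2)
            simp [ia, h1, h2]
        have b1 := hbnd z0 u; have b2 := hbnd z0 v
        rw [e1] at hd
        omega
    by_cases htw : ∀ u v z : V, u ≠ v → z ≠ u → z ≠ v → (G.Adj z u ↔ G.Adj z v)
    · obtain ⟨x, y, hd⟩ := hnonreg
      exact hd (allTwins_regular htw x y)
    · push_neg at htw
      obtain ⟨u, v, z0, huv, hz0u, hz0v, hz0d⟩ := htw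
      have hz0 : ¬ (G.Adj z0 u ↔ G.Adj z0 v) := by
        rcases hz0d with ⟨h1, h2⟩ | ⟨h1, h2⟩ <;> intro hh
        · exact h2 (hh.mp h1)
        · exact h1 (hh.mpr h2)
      have hAT : ∀ z, z ≠ u → z ≠ v → ¬(G.Adj z u ↔ G.Adj z v) := by
        rcases hdich u v huv with h | h
        · exact absurd (h z0 hz0u hz0v) hz0
        · exact h
      have htwprop : ∀ a b : V, a ≠ b → ∀ z, z ≠ a → z ≠ b → (G.Adj z a ↔ G.Adj z b) →
          ∀ z', z' ≠ a → z' ≠ b → (G.Adj z' a ↔ G.Adj z' b) := by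
        intro a b hab z hza hzb hz z' hz'a hz'b
        rcases hdich a b hab with h | h
        · exact h z' hz'a hz'b
        · exact absurd hz (h z hza hzb)
      have hatprop : ∀ a b : V, a ≠ b → ∀ z, z ≠ a → z ≠ b → ¬(G.Adj z a ↔ G.Adj z b) →
          ∀ z', z' ≠ a → z' ≠ b → ¬(G.Adj z' a ↔ G.Adj z' b) := by
        intro a b hab z hza hzb hz z' hz'a hz'b
        rcases hdich a b hab with h | h
        · exact absurd (h z hza hzb) hz
        · exact h z' hz'a hz'b
      set Pp : V → Prop := fun w => w ≠ v ∧ (w = u ∨ (G.Adj u w ↔ ¬ G.Adj u v)) with hPp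
      have hPu : Pp u := ⟨huv, Or.inl rfl⟩
      have hPv : ¬ Pp v := fun h => h.1 rfl
      have hPmem : ∀ x, Pp x → x ≠ u → (x ≠ v ∧ (G.Adj u x ↔ ¬ G.Adj u v)) := by
        rintro x ⟨hxv, h | h⟩ hxu
        · exact absurd h hxu
        · exact ⟨hxv, h⟩
      have hQmem : ∀ y, ¬ Pp y → y ≠ v → (y ≠ u ∧ (G.Adj u y ↔ G.Adj u v)) := by
        intro y hy hyv
        have h3 : ¬(y = u ∨ (G.Adj u y ↔ ¬ G.Adj u v)) := fun h => hy ⟨hyv, h⟩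
        refine ⟨fun h => h3 (Or.inl h), ?_⟩
        have h4 : ¬(G.Adj u y ↔ ¬G.Adj u v) := fun h => h3 (Or.inr h)
        by_cases h1 : G.Adj u y <;> by_cases h2 : G.Adj u v
        · exact iff_of_true h1 h2
        · exact absurd (iff_of_true h1 h2) h4
        · exact absurd (iff_of_false h1 (not_not_intro h2)) h4
        · exact iff_of_false h1 h2
      have hF1a : ∀ y, ¬Pp y → (G.Adj u y ↔ G.Adj u v) := by
        intro y hy
        by_cases h : y = v
        · subst h; exact Iff.rfl
        · exact (hQmem y hy h).2
      have hF1b : ∀ x, Pp x → (G.Adj x v ↔ G.Adj u v) := by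
        intro x hx
        by_cases hxu : x = u
        · subst hxu; exact Iff.rfl
        obtain ⟨hxv, hx2⟩ := hPmem x hx hxu
        have h1 := hAT x hxu hxv
        constructor
        · intro h2; by_contra h3
          exact h1 (iff_of_true ((hx2.mpr h3).symm) h2)
        · intro h2; by_contra h3
          exact h1 (iff_of_false (fun h4 => (hx2.mp h4.symm) h2) h3)
      have hF1 : ∀ x y, Pp x → ¬ Pp y → (G.Adj x y ↔ G.Adj u v) := by
        intro x y hx hy
        have hxy : x ≠ y := fun h => hy (h ▸ hx)
        by_cases hxu : x = u
        · subst hxu; exact hF1a y hy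
        · by_cases hyv : y = v
          · subst hyv; exact hF1b x hx
          · obtain ⟨hxv, _⟩ := hPmem x hx hxu
            obtain ⟨hyu, _⟩ := hQmem y hy hyv
            have hvw : G.Adj v x ↔ G.Adj v u := by
              constructor
              · intro h; exact ((hF1b x hx).mp h.symm).symm
              · intro h; exact ((hF1b x hx).mpr h.symm).symm
            have h2 : G.Adj y x ↔ G.Adj y u :=
              htwprop x u hxu v (Ne.symm hxv) huv.symm hvw y hxy.symm hyu
            constructor
            · intro h; exact (hF1a y hy).mp ((h2.mp h.symm).symm)
            · intro h; exact ((h2.mpr ((hF1a y hy).mpr h).symm).symm)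
      have hATgen : ∀ x, Pp x → ∀ w, w ≠ x → w ≠ v → ¬(G.Adj w x ↔ G.Adj w v) := by
        intro x hx
        by_cases hxu : x = u
        · subst hxu; exact fun w hwu hwv => hAT w hwu hwv
        · obtain ⟨hxv, hx2⟩ := hPmem x hx hxu
          have hwit : ¬ (G.Adj u x ↔ G.Adj u v) := by
            intro h
            by_cases h1 : G.Adj u v
            · exact (hx2.mp (h.mpr h1)) h1
            · exact h1 (h.mp (hx2.mpr h1))
          exact fun w hwx hwv => hatprop x v hxv u (Ne.symm hxu) huv hwit w hwx hwv
      have hF2 : ∀ x x', Pp x → Pp x' → x ≠ x' → (G.Adj x x' ↔ ¬ G.Adj u v) := by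
        intro x x' hx hx' hxx'
        have h1 := hATgen x hx x' (Ne.symm hxx') hx'.1
        constructor
        · intro h3 h4
          exact h1 (iff_of_true h3.symm ((hF1b x' hx').mpr h4))
        · intro h3
          by_contra h4
          exact h1 (iff_of_false (fun h5 => h4 h5.symm) (fun h5 => h3 ((hF1b x' hx').mp h5)))
      have hATgenQ : ∀ y, ¬Pp y → ∀ w, w ≠ u → w ≠ y → ¬(G.Adj w u ↔ G.Adj w y) := by
        intro y hy
        by_cases hyv : y = v
        · subst hyv; exact fun w hwu hwv => hAT w hwu hwv
        · obtain ⟨hyu, hy2⟩ := hQmem y hy hyv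
          have hwit : ¬ (G.Adj v u ↔ G.Adj v y) := by
            intro h
            apply hAT y hyu hyv
            constructor
            · intro h9; exact ((h.mp ((hy2.mp h9.symm).symm)).symm)
            · intro h9; exact ((hy2.mpr ((h.mpr h9.symm).symm)).symm)
          exact fun w hwu hwy =>
            hatprop u y (Ne.symm hyu) v (Ne.symm huv) (Ne.symm hyv) hwit w hwu hwy
      have hF3 : ∀ y y', ¬Pp y → ¬Pp y' → y ≠ y' → (G.Adj y y' ↔ ¬ G.Adj u v) := by
        intro y y' hy hy' hyy'
        have hyu : y ≠ u := fun h => hy (by rw [h]; exact hPu)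
        have h1 := hATgenQ y' hy' y hyu hyy'
        constructor
        · intro h3 h4
          exact h1 (iff_of_true (((hF1a y hy).mpr h4).symm) h3)
        · intro h3
          by_contra h4
          exact h1 (iff_of_false (fun h5 => h3 ((hF1a y hy).mp h5.symm)) h4)
      by_cases hadjuv : G.Adj u v
      · by_cases hPsing : ∀ w, Pp w → w = u
        · refine hnostar ⟨u, fun x y => ?_⟩
          constructor
          · intro hxy
            refine ⟨G.ne_of_adj hxy, ?_⟩
            by_contra hc
            push_neg at hc
            obtain ⟨hxu, hyu⟩ := hc
            have hx : ¬ Pp x := fun h => hxu (hPsing x h)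
            have hy : ¬ Pp y := fun h => hyu (hPsing y h)
            exact ((hF3 x y hx hy (G.ne_of_adj hxy)).mp hxy) hadjuv
          · rintro ⟨hxy, rfl | rfl⟩
            · have hy : ¬ Pp y := fun h => hxy ((hPsing y h).symm)
              exact (hF1a y hy).mpr hadjuv
            · have hx : ¬ Pp x := fun h => hxy (hPsing x h)
              exact ((hF1a x hx).mpr hadjuv).symm
        · by_cases hQsing : ∀ w, ¬ Pp w → w = v
          · refine hnostar ⟨v, fun x y => ?_⟩
            constructor
            · intro hxy
              refine ⟨G.ne_of_adj hxy, ?_⟩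
              by_contra hc
              push_neg at hc
              obtain ⟨hxv, hyv⟩ := hc
              have hx : Pp x := by by_contra h; exact hxv (hQsing x h)
              have hy : Pp y := by by_contra h; exact hyv (hQsing y h)
              exact ((hF2 x y hx hy (G.ne_of_adj hxy)).mp hxy) hadjuv
            · rintro ⟨hxy, rfl | rfl⟩
              · have hy : Pp y := by by_contra h; exact hxy ((hQsing y h).symm)
                exact ((hF1b y hy).mpr hadjuv).symm
              · have hx : Pp x := by by_contra h; exact hxy (hQsing x h)
                exact (hF1b x hx).mpr hadjuv
          · push_neg at hPsing hQsing
            obtain ⟨x', hx'P, hx'u⟩ := hPsing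
            obtain ⟨y', hy'Q, hy'v⟩ := hQsing
            have hnbrP : ∀ x, Pp x → G.neighborSet x = {w | ¬ Pp w} := by
              intro x hx
              ext w
              simp only [SimpleGraph.mem_neighborSet, Set.mem_setOf_eq]
              constructor
              · intro h
                intro hw
                exact ((hF2 x w hx hw (G.ne_of_adj h)).mp h) hadjuv
              · intro hw
                exact (hF1 x w hx hw).mpr hadjuv
            have hnbrQ : ∀ y, ¬Pp y → G.neighborSet y = {w | Pp w} := by
              intro y hy
              ext w
              simp only [SimpleGraph.mem_neighborSet, Set.mem_setOf_eq]
              constructor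
              · intro h
                by_contra hw
                exact ((hF3 y w hy hw (G.ne_of_adj h)).mp h) hadjuv
              · intro hw
                exact ((hF1 w y hw hy).mpr hadjuv).symm
            have hnadj1 : ¬ G.Adj u x' := fun h =>
              ((hF2 u x' hPu hx'P (Ne.symm hx'u)).mp h) hadjuv
            have hnadj2 : ¬ G.Adj v y' := fun h =>
              ((hF3 v y' hPv hy'Q (Ne.symm hy'v)).mp h) hadjuv
            have hsetQ : G.commonNeighbors u x' = {w | ¬ Pp w} := by
              ext w
              rw [SimpleGraph.mem_commonNeighbors]
              constructor
              · rintro ⟨h1, _⟩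
                intro hw
                exact ((hF2 u w hPu hw (G.ne_of_adj h1)).mp h1) hadjuv
              · intro hw
                exact ⟨(hF1 u w hPu hw).mpr hadjuv, (hF1 x' w hx'P hw).mpr hadjuv⟩
            have hsetP : G.commonNeighbors v y' = {w | Pp w} := by
              ext w
              rw [SimpleGraph.mem_commonNeighbors]
              constructor
              · rintro ⟨h1, _⟩
                by_contra hw
                exact ((hF3 v w hPv hw (G.ne_of_adj h1)).mp h1) hadjuv
              · intro hw
                exact ⟨((hF1 w v hw hPv).mpr hadjuv).symm, ((hF1 w y' hw hy'Q).mpr hadjuv).symm⟩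
            obtain ⟨a, b, hab⟩ := hnonreg
            apply hab
            have hdeg : ∀ x : V, G.degree x = μ := by
              intro x
              by_cases hx : Pp x
              · rw [← SimpleGraph.card_neighborSet_eq_degree,
                  ← hμ u x' (Ne.symm hx'u) hnadj1]
                exact Fintype.card_congr
                  (Equiv.setCongr ((hnbrP x hx).trans hsetQ.symm))
              · rw [← SimpleGraph.card_neighborSet_eq_degree,
                  ← hμ v y' (Ne.symm hy'v) hnadj2]
                exact Fintype.card_congr
                  (Equiv.setCongr ((hnbrQ x hx).trans hsetP.symm))
            rw [hdeg a, hdeg b]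
      · have hc := hμ u v huv hadjuv
        have hpos : 0 < Fintype.card (G.commonNeighbors u v) := by omega
        obtain ⟨⟨w, hwmem⟩⟩ := Fintype.card_pos_iff.mp hpos
        rw [SimpleGraph.mem_commonNeighbors] at hwmem
        obtain ⟨h1, h2⟩ := hwmem
        by_cases hw : Pp w
        · exact hadjuv ((hF1 w v hw hPv).mp h2.symm)
        · exact hadjuv ((hF1 u w hPu hw).mp h1)

end StmtAux

open Matrix in
theorem stmt2 {V : Type*} [Fintype V] [DecidableEq V] (G : SimpleGraph V)
    [DecidableRel G.Adj] (μ μbar : ℕ)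
    (hconn : G.Connected)
    (hnonreg : ∃ x y : V, G.degree x ≠ G.degree y)
    (hμ : ∀ x y : V, x ≠ y → ¬G.Adj x y → Fintype.card (G.commonNeighbors x y) = μ)
    (hμbar : ∀ x y : V, G.Adj x y →
      (Finset.univ.filter fun w => w ≠ x ∧ w ≠ y ∧ ¬G.Adj x w ∧ ¬G.Adj y w).card = μbar)
    (hnostar : ¬∃ c : V, ∀ x y : V, G.Adj x y ↔ (x ≠ y ∧ (x = c ∨ y = c))) :
    AddMonoid.exponent (critGroup G) = Fintype.card V * μ := by
  classical
  set n := Fintype.card V with hn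
  set e := AddMonoid.exponent (critGroup G) with he
  have hμpos : 0 < μ := StmtAux.mu_pos hconn hnonreg hμ
  have hnpos : 0 < n := by
    obtain ⟨x, _, _⟩ := hnonreg
    exact Fintype.card_pos_iff.mpr ⟨x⟩
  -- upper bound: ∃ preimage for (n*μ) • w
  have hupper : ∀ w : V → ℤ, (∑ v, w v) = 0 →
      ∃ c, G.lapMatrix ℤ *ᵥ c = ((n * μ : ℕ) : ℤ) • w := by
    intro w hw
    refine ⟨((n : ℤ) + μ - μbar) • w - G.lapMatrix ℤ *ᵥ w, ?_⟩
    funext x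
    rw [Matrix.mulVec_sub, Matrix.mulVec_smul]
    have hk := StmtAux.key_mulVec hμ hμbar w x
    simp only [Pi.sub_apply, Pi.smul_apply, smul_eq_mul]
    rw [hk, hw]
    push_cast
    ring
  have hub : e ∣ n * μ := by
    rw [he]
    apply AddMonoid.exponent_dvd_of_forall_nsmul_eq_zero
    intro g
    induction g using QuotientAddGroup.induction_on with
    | H w =>
      show (n * μ) • (QuotientAddGroup.mk'
        ((rowSpan (G.lapMatrix ℤ)).addSubgroupOf (sumZero V)) w) = 0
      rw [← map_nsmul, QuotientAddGroup.mk'_apply,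
        QuotientAddGroup.eq_zero_iff, AddSubgroup.mem_addSubgroupOf,
        StmtAux.mem_rowSpan_iff]
      obtain ⟨c, hc⟩ := hupper (w : V → ℤ) w.2
      refine ⟨c, ?_⟩
      rw [hc]
      have : (((n * μ : ℕ) : ℤ) • (w : V → ℤ)) = (n * μ : ℕ) • (w : V → ℤ) :=
        Nat.cast_smul_eq_nsmul ℤ _ _
      rw [this]
      rfl
  have hlow : ∀ w : V → ℤ, (∑ v, w v) = 0 → ∃ c, G.lapMatrix ℤ *ᵥ c = (e : ℤ) • w := by
    intro w hw
    have h0 : (e • (QuotientAddGroup.mk'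
        ((rowSpan (G.lapMatrix ℤ)).addSubgroupOf (sumZero V)) (⟨w, hw⟩ : sumZero V))
        : critGroup G) = 0 := by
      rw [he]; exact AddMonoid.exponent_nsmul_eq_zero _
    rw [← map_nsmul, QuotientAddGroup.mk'_apply,
      QuotientAddGroup.eq_zero_iff, AddSubgroup.mem_addSubgroupOf,
      StmtAux.mem_rowSpan_iff] at h0
    obtain ⟨c, hc⟩ := h0
    refine ⟨c, ?_⟩
    rw [hc]
    have : ((e : ℤ) • (w : V → ℤ)) = e • (w : V → ℤ) := Nat.cast_smul_eq_nsmul ℤ _ _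
    rw [this]
    rfl
  have hdiv : ∀ u v z₁ z₂ : V, u ≠ v → z₁ ≠ u → z₁ ≠ v → z₂ ≠ u → z₂ ≠ v →
      ((n * μ : ℕ) : ℤ) ∣ (e : ℤ) * ((StmtAux.ia G z₁ u - StmtAux.ia G z₁ v)
        - (StmtAux.ia G z₂ u - StmtAux.ia G z₂ v)) := by
    intro u v z₁ z₂ huv h1u h1v h2u h2v
    set w : V → ℤ := fun t => (if t = u then (1:ℤ) else 0) - (if t = v then (1:ℤ) else 0)
      with hwdef
    have hw : ∑ t, w t = 0 := by
      simp [hwdef, Finset.sum_sub_distrib]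
    obtain ⟨c, hc⟩ := hlow w hw
    have hk : ∀ x, ((n:ℤ) + μ - μbar) * ((e : ℤ) * w x) + (μ:ℤ) * (∑ t, c t)
        - ((n:ℤ) * μ) * c x = (e : ℤ) * (G.lapMatrix ℤ *ᵥ w) x := by
      intro x
      have h1 := StmtAux.key_mulVec hμ hμbar c x
      rw [hc, Matrix.mulVec_smul] at h1
      simp only [Pi.smul_apply, smul_eq_mul] at h1
      linarith [h1]
    have hLw : ∀ z, z ≠ u → z ≠ v →
        (G.lapMatrix ℤ *ᵥ w) z = StmtAux.ia G z v - StmtAux.ia G z u := by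
      intro z hzu hzv
      simp only [Matrix.mulVec, dotProduct, hwdef, mul_sub]
      rw [Finset.sum_sub_distrib]
      have e1 : ∑ y, G.lapMatrix ℤ z y * (if y = u then (1:ℤ) else 0)
          = G.lapMatrix ℤ z u := by
        rw [Finset.sum_congr rfl (fun y _ => by rw [mul_ite, mul_one, mul_zero] :
          ∀ y ∈ Finset.univ, G.lapMatrix ℤ z y * (if y = u then (1:ℤ) else 0)
            = if y = u then G.lapMatrix ℤ z y else 0)]
        simp
      have e2 : ∑ y, G.lapMatrix ℤ z y * (if y = v then (1:ℤ) else 0)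
          = G.lapMatrix ℤ z v := by
        rw [Finset.sum_congr rfl (fun y _ => by rw [mul_ite, mul_one, mul_zero] :
          ∀ y ∈ Finset.univ, G.lapMatrix ℤ z y * (if y = v then (1:ℤ) else 0)
            = if y = v then G.lapMatrix ℤ z y else 0)]
        simp
      rw [e1, e2, StmtAux.lap_apply, StmtAux.lap_apply, if_neg hzu, if_neg hzv]
      ring
    have h1 := hk z₁
    have h2 := hk z₂
    rw [hLw z₁ h1u h1v] at h1
    rw [hLw z₂ h2u h2v] at h2
    have hwz1 : w z₁ = 0 := by simp [hwdef, h1u, h1v]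
    have hwz2 : w z₂ = 0 := by simp [hwdef, h2u, h2v]
    rw [hwz1] at h1
    rw [hwz2] at h2
    refine ⟨c z₁ - c z₂, ?_⟩
    push_cast
    linear_combination h1 - h2
  by_cases hnd : (n * μ) ∣ e
  · exact Nat.dvd_antisymm hub hnd
  · exfalso
    obtain ⟨p, hp, hclaim⟩ := StmtAux.prime_wit (Nat.mul_pos hnpos hμpos) hnd
    exact StmtAux.graph_contra hconn hnonreg hμ hμbar hnostar p hp
      (fun u v z₁ z₂ huv h1 h2 h3 h4 =>
        hclaim _ (hdiv u v z₁ z₂ huv h1 h2 h3 h4))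
end

section
/- Let A : Matrix V V ℤ be the signed adjacency matrix of a signed graph on a finite vertex set V whose underlying graph is connected, and suppose the signed graph is unbalanced: there is no function s : V → ℤ with s v ∈ {1,−1} for every v such that A u v = s u · s v whenever A u v ≠ 0. Let L = D − A be the signed Laplacian, and suppose the real symmetric matrix obtained from L has exactly two distinct eigenvalues, i.e., there exist real numbers θ₁ ≠ θ₂ such that the range of the eigenvalue function of L (mapped into ℝ) is {θ₁, θ₂}. Then the critical group K = (V → ℤ) / (ℤ-row span of L) is a finite group and its exponent, cast to ℝ, equals θ₁·θ₂. -/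
open Finset
open Matrix

lemma quadform {V : Type*} [Fintype V] [DecidableEq V] (A : Matrix V V ℤ)
    (hsymm : A.IsSymm) (hentries : ∀ u v, A u v = -1 ∨ A u v = 0 ∨ A u v = 1)
    (L : Matrix V V ℤ)
    (hLdef : L = Matrix.diagonal
      (fun v => ((Finset.univ.filter fun w => A v w ≠ 0).card : ℤ)) - A)
    (x : V → ℝ) :
    ∑ u, ∑ v, ((A u v : ℝ)^2 * (x u - (A u v : ℝ) * x v)^2)
      = 2 * (x ⬝ᵥ ((L.map (Int.cast : ℤ → ℝ)) *ᵥ x)) := by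
  have hsymm' : ∀ u v, A u v = A v u := fun u v => (congrFun (congrFun hsymm v) u).symm ▸ rfl
  have hdeg : ∀ u : V, ((Finset.univ.filter fun w => A u w ≠ 0).card : ℝ)
      = ∑ v, (A u v : ℝ)^2 := by
    intro u
    rw [Finset.card_eq_sum_ones]
    push_cast
    rw [Finset.sum_filter]
    congr 1; funext v
    rcases hentries u v with h|h|h <;> rw [h] <;> norm_num
  have hL : ∀ u v, (L.map (Int.cast : ℤ → ℝ)) u v
      = (if u = v then ∑ w, (A u w : ℝ)^2 else 0) - (A u v : ℝ) := by
    intro u v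
    rw [hLdef]
    simp only [Matrix.map_apply, Matrix.sub_apply, Matrix.diagonal_apply, Int.cast_sub,
      apply_ite (Int.cast : ℤ → ℝ), Int.cast_zero, Int.cast_natCast]
    rw [← hdeg u]
  have key : ∀ u v, (A u v : ℝ)^2 * (x u - (A u v : ℝ) * x v)^2
      = (A u v:ℝ)^2 * x u^2 + (A u v:ℝ)^2 * x v^2 - 2 * ((A u v:ℝ) * (x u * x v)) := by
    intro u v; rcases hentries u v with h|h|h <;> rw [h] <;> push_cast <;> ring
  have swap : ∑ u, ∑ v, ((A u v:ℝ)^2 * x v^2) = ∑ u, ∑ v, ((A u v:ℝ)^2 * x u^2) := by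
    rw [Finset.sum_comm]
    congr 1; funext u; congr 1; funext v
    rw [hsymm' v u]
  have inner : ∀ u : V, ∑ i, x u * ((L.map (Int.cast : ℤ → ℝ)) u i * x i)
      = (∑ w, (A u w : ℝ)^2) * x u^2 - ∑ v, ((A u v:ℝ) * (x u * x v)) := by
    intro u
    have h1 : ∀ i, x u * ((L.map (Int.cast : ℤ → ℝ)) u i * x i)
        = (if u = i then (∑ w, (A u w : ℝ)^2) * (x u * x i) else 0)
          - (A u i:ℝ) * (x u * x i) := by
      intro i; rw [hL u i]; split <;> ring
    simp only [h1]
    rw [Finset.sum_sub_distrib, Finset.sum_ite_eq Finset.univ u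
      (fun i => (∑ w, (A u w : ℝ)^2) * (x u * x i))]
    simp only [Finset.mem_univ, if_true]
    congr 1; ring
  have hrhs : x ⬝ᵥ ((L.map (Int.cast : ℤ → ℝ)) *ᵥ x)
      = ∑ u, (∑ w, (A u w : ℝ)^2) * x u^2 - ∑ u, ∑ v, ((A u v:ℝ) * (x u * x v)) := by
    simp only [dotProduct, mulVec, Finset.mul_sum]
    rw [← Finset.sum_sub_distrib]
    exact Finset.sum_congr rfl fun u _ => inner u
  calc ∑ u, ∑ v, ((A u v : ℝ)^2 * (x u - (A u v : ℝ) * x v)^2)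
      = ∑ u, ∑ v, ((A u v:ℝ)^2 * x u^2 + (A u v:ℝ)^2 * x v^2 - 2 * ((A u v:ℝ) * (x u * x v))) := by
        exact Finset.sum_congr rfl fun u _ => Finset.sum_congr rfl fun v _ => key u v
    _ = (∑ u, ∑ v, (A u v:ℝ)^2 * x u^2) + (∑ u, ∑ v, (A u v:ℝ)^2 * x v^2)
        - 2 * ∑ u, ∑ v, ((A u v:ℝ) * (x u * x v)) := by
        simp only [Finset.sum_add_distrib, Finset.sum_sub_distrib, ← Finset.mul_sum]
    _ = 2 * ((∑ u, ∑ v, (A u v:ℝ)^2 * x u^2) - ∑ u, ∑ v, ((A u v:ℝ) * (x u * x v))) := by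
        rw [swap]; ring
    _ = 2 * (x ⬝ᵥ ((L.map (Int.cast : ℤ → ℝ)) *ᵥ x)) := by
        rw [hrhs]
        congr 2
        exact Finset.sum_congr rfl fun u _ => by rw [Finset.sum_mul]

lemma kerzero {V : Type*} [Fintype V] [DecidableEq V] (A : Matrix V V ℤ)
    (hsymm : A.IsSymm) (hdiag : ∀ v, A v v = 0)
    (hentries : ∀ u v, A u v = -1 ∨ A u v = 0 ∨ A u v = 1)
    (hconn : (SimpleGraph.fromRel fun u v => A u v ≠ 0).Connected)
    (hunbal : ¬∃ s : V → ℤ, (∀ v, s v = 1 ∨ s v = -1) ∧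
      ∀ u v, A u v ≠ 0 → A u v = s u * s v)
    (L : Matrix V V ℤ)
    (hLdef : L = Matrix.diagonal
      (fun v => ((Finset.univ.filter fun w => A v w ≠ 0).card : ℤ)) - A)
    (x : V → ℝ) (hx : x ⬝ᵥ ((L.map (Int.cast : ℤ → ℝ)) *ᵥ x) = 0) : x = 0 := by
  have hsymm' : ∀ u v, A u v = A v u := fun u v => (congrFun (congrFun hsymm v) u).symm ▸ rfl
  have hsum : ∑ u, ∑ v, ((A u v : ℝ)^2 * (x u - (A u v : ℝ) * x v)^2) = 0 := by
    rw [quadform A hsymm hentries L hLdef x, hx, mul_zero]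
  have hterm : ∀ u v, (A u v : ℝ)^2 * (x u - (A u v : ℝ) * x v)^2 = 0 := by
    have h1 := (Finset.sum_eq_zero_iff_of_nonneg (fun u _ =>
      Finset.sum_nonneg fun v _ => by positivity)).mp hsum
    intro u v
    have h2 := (Finset.sum_eq_zero_iff_of_nonneg (fun v _ => by positivity)).mp
      (h1 u (Finset.mem_univ u))
    exact h2 v (Finset.mem_univ v)
  have hrel : ∀ u v, A u v ≠ 0 → x u = (A u v : ℝ) * x v := by
    intro u v hA
    have ha : (A u v : ℝ) ≠ 0 := by exact_mod_cast hA
    have := hterm u v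
    rcases mul_eq_zero.mp this with h | h
    · exact absurd (pow_eq_zero_iff (by norm_num) |>.mp h) ha
    · have := pow_eq_zero_iff (n := 2) (by norm_num) |>.mp h
      linarith [this]
  by_contra hxne
  obtain ⟨v₀, hv₀⟩ := Function.ne_iff.mp hxne
  have edgeabs : ∀ u v, (SimpleGraph.fromRel fun u v => A u v ≠ 0).Adj u v → |x u| = |x v| := by
    intro u v huv
    rw [SimpleGraph.fromRel_adj] at huv
    have hA : A u v ≠ 0 := by
      rcases huv.2 with h | h
      · exact h
      · rw [hsymm' u v]; exact h
    rw [hrel u v hA, abs_mul]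
    have h1 : |(A u v : ℝ)| = 1 := by
      rcases hentries u v with h|h|h
      · rw [h]; norm_num
      · exact absurd h hA
      · rw [h]; norm_num
    rw [h1, one_mul]
  have habs : ∀ u v : V, |x u| = |x v| := by
    intro u v
    obtain ⟨w⟩ := hconn.preconnected u v
    induction w with
    | nil => rfl
    | cons h p ih => exact (edgeabs _ _ h).trans ih
  have hnz : ∀ v, x v ≠ 0 := by
    intro v hv
    apply hv₀
    have := habs v₀ v
    rw [hv, abs_zero, abs_eq_zero] at this
    simpa using this
  set s : V → ℤ := fun v => if 0 < x v then 1 else -1 with hs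
  apply hunbal
  refine ⟨s, fun v => by by_cases h : 0 < x v <;> simp [hs, h], ?_⟩
  intro u v hA
  have hx' := hrel u v hA
  rcases hentries u v with h | h | h
  · rw [h] at hx' ⊢
    push_cast at hx'
    rw [neg_one_mul] at hx'
    by_cases hv : 0 < x v
    · have hu : ¬ 0 < x u := by rw [hx']; linarith
      simp [hs, hu, hv]
    · have hv' : x v < 0 := lt_of_le_of_ne (not_lt.mp hv) (hnz v)
      have hu : 0 < x u := by rw [hx']; linarith
      simp [hs, hu, hv]
  · exact absurd h hA
  · rw [h] at hx' ⊢
    push_cast at hx'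
    rw [one_mul] at hx'
    by_cases hv : 0 < x v
    · have hu : 0 < x u := hx' ▸ hv
      simp [hs, hu, hv]
    · have hu : ¬ 0 < x u := hx' ▸ hv
      simp [hs, hu, hv]

theorem stmt3 {V : Type*} [Fintype V] [DecidableEq V] (A : Matrix V V ℤ)
    (hsymm : A.IsSymm) (hdiag : ∀ v, A v v = 0)
    (hentries : ∀ u v, A u v = -1 ∨ A u v = 0 ∨ A u v = 1)
    (hconn : (SimpleGraph.fromRel fun u v => A u v ≠ 0).Connected)
    (hunbal : ¬∃ s : V → ℤ, (∀ v, s v = 1 ∨ s v = -1) ∧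
      ∀ u v, A u v ≠ 0 → A u v = s u * s v)
    (L : Matrix V V ℤ)
    (hLdef : L = Matrix.diagonal
      (fun v => ((Finset.univ.filter fun w => A v w ≠ 0).card : ℤ)) - A)
    (hherm : (L.map (Int.cast : ℤ → ℝ)).IsHermitian)
    (θ₁ θ₂ : ℝ) (hθne : θ₁ ≠ θ₂)
    (heig : Set.range hherm.eigenvalues = {θ₁, θ₂}) :
    Finite ((V → ℤ) ⧸ rowSpan L) ∧
      (AddMonoid.exponent ((V → ℤ) ⧸ rowSpan L) : ℝ) = θ₁ * θ₂ := by
  classical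
  -- nonnegativity of the quadratic form
  have hqnonneg : ∀ x : V → ℝ, 0 ≤ x ⬝ᵥ ((L.map (Int.cast : ℤ → ℝ)) *ᵥ x) := by
    intro x
    have h := quadform A hsymm hentries L hLdef x
    have h2 : (0:ℝ) ≤ ∑ u, ∑ v, ((A u v : ℝ)^2 * (x u - (A u v : ℝ) * x v)^2) :=
      Finset.sum_nonneg fun u _ => Finset.sum_nonneg fun v _ => by positivity
    linarith
  -- eigenvalues are positive
  have heigpos : ∀ i, 0 < hherm.eigenvalues i := by
    intro i
    set b : V → ℝ := ⇑(hherm.eigenvectorBasis i) with hb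
    have hmul : (L.map (Int.cast : ℤ → ℝ)) *ᵥ b = hherm.eigenvalues i • b := hherm.mulVec_eigenvectorBasis i
    have hbne : b ≠ 0 := by
      intro h
      exact hherm.eigenvectorBasis.orthonormal.ne_zero i (by ext v; exact congrFun h v)
    have hdot : b ⬝ᵥ ((L.map (Int.cast : ℤ → ℝ)) *ᵥ b) = hherm.eigenvalues i * ∑ v, b v ^ 2 := by
      rw [hmul]
      simp only [dotProduct, Pi.smul_apply, smul_eq_mul, Finset.mul_sum]
      exact Finset.sum_congr rfl fun v _ => by ring
    have hS : 0 < ∑ v, b v ^ 2 := by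
      obtain ⟨v, hv⟩ := Function.ne_iff.mp hbne
      exact Finset.sum_pos' (fun v _ => sq_nonneg _)
        ⟨v, Finset.mem_univ v, lt_of_le_of_ne (sq_nonneg _) (Ne.symm (pow_ne_zero 2 hv))⟩
    have hq0 : b ⬝ᵥ ((L.map (Int.cast : ℤ → ℝ)) *ᵥ b) ≠ 0 := fun h0 =>
      hbne (kerzero A hsymm hdiag hentries hconn hunbal L hLdef b h0)
    have hqpos : 0 < b ⬝ᵥ ((L.map (Int.cast : ℤ → ℝ)) *ᵥ b) := lt_of_le_of_ne (hqnonneg b) (Ne.symm hq0)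
    rw [hdot] at hqpos
    nlinarith
  have hmem : ∀ i, hherm.eigenvalues i = θ₁ ∨ hherm.eigenvalues i = θ₂ := by
    intro i
    have : hherm.eigenvalues i ∈ ({θ₁, θ₂} : Set ℝ) := heig ▸ Set.mem_range_self i
    simpa using this
  have hθ₁pos : 0 < θ₁ := by
    have : θ₁ ∈ Set.range hherm.eigenvalues := by rw [heig]; simp
    obtain ⟨i, hi⟩ := this
    exact hi ▸ heigpos i
  have hθ₂pos : 0 < θ₂ := by
    have : θ₂ ∈ Set.range hherm.eigenvalues := by rw [heig]; simp
    obtain ⟨i, hi⟩ := this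
    exact hi ▸ heigpos i
  -- spectral theorem: quadratic relation over ℝ
  obtain ⟨hU₁, hU₂⟩ := Unitary.mem_iff.mp (hherm.eigenvectorUnitary).2
  set U : Matrix V V ℝ := ↑(hherm.eigenvectorUnitary) with hUdef
  set D : Matrix V V ℝ := Matrix.diagonal (RCLike.ofReal ∘ hherm.eigenvalues) with hDdef
  have hsp : (L.map (Int.cast : ℤ → ℝ)) = U * D * star U := hherm.spectral_theorem
  have hDq : D * D - (θ₁ + θ₂) • D + (θ₁ * θ₂) • (1 : Matrix V V ℝ) = 0 := by
    rw [hDdef]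
    ext i j
    rcases eq_or_ne i j with rfl | hij
    · simp only [Matrix.add_apply, Matrix.sub_apply, Matrix.smul_apply,
        Matrix.diagonal_apply_eq, Matrix.mul_apply, Matrix.one_apply_eq, smul_eq_mul,
        Matrix.zero_apply, Function.comp_apply]
      rw [Finset.sum_eq_single i (fun w _ hw => by
        simp [Matrix.diagonal_apply_ne _ (Ne.symm hw)]) (by simp)]
      simp only [Matrix.diagonal_apply_eq, Function.comp_apply, RCLike.ofReal_real_eq_id, id]
      rcases hmem i with h | h <;> rw [h] <;> ring
    · simp only [Matrix.add_apply, Matrix.sub_apply, Matrix.smul_apply,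
        Matrix.diagonal_apply_ne _ hij, Matrix.mul_apply, Matrix.one_apply_ne hij, smul_eq_mul,
        Matrix.zero_apply, mul_zero, sub_zero, add_zero]
      rw [Finset.sum_eq_zero]
      intro w _
      rcases eq_or_ne i w with rfl | hiw
      · simp [Matrix.diagonal_apply_ne _ hij]
      · simp [Matrix.diagonal_apply_ne _ hiw]
  have hCH : (L.map (Int.cast : ℤ → ℝ)) * (L.map (Int.cast : ℤ → ℝ)) - (θ₁ + θ₂) • (L.map (Int.cast : ℤ → ℝ)) + (θ₁ * θ₂) • (1 : Matrix V V ℝ) = 0 := by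
    have h1 : star U * (U * (D * star U)) = D * star U := by
      rw [← mul_assoc, hU₁, one_mul]
    have e1 : (L.map (Int.cast : ℤ → ℝ)) * (L.map (Int.cast : ℤ → ℝ)) = U * (D * D * star U) := by
      rw [hsp]
      simp only [mul_assoc, h1]
    have e2 : (θ₁ + θ₂) • (L.map (Int.cast : ℤ → ℝ)) = U * ((θ₁ + θ₂) • D * star U) := by
      rw [hsp, smul_mul_assoc, mul_smul_comm, mul_assoc]
    have e3 : (θ₁ * θ₂) • (1 : Matrix V V ℝ) = U * ((θ₁ * θ₂) • (1 : Matrix V V ℝ) * star U) := by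
      rw [smul_mul_assoc, one_mul, mul_smul_comm, hU₂]
    rw [e1, e2, e3, ← Matrix.mul_sub, ← Matrix.mul_add, ← Matrix.sub_mul, ← Matrix.add_mul,
      hDq, Matrix.zero_mul, Matrix.mul_zero]
  have hiden : (L.map (Int.cast : ℤ → ℝ)) * (L.map (Int.cast : ℤ → ℝ)) + (θ₁ * θ₂) • (1 : Matrix V V ℝ) = (θ₁ + θ₂) • (L.map (Int.cast : ℤ → ℝ)) := by
    have h := hCH
    rwa [sub_add_eq_add_sub, sub_eq_zero] at h
  -- an edge exists
  have hedge : ∃ u v, A u v ≠ 0 := by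
    by_contra h
    push_neg at h
    exact hunbal ⟨fun _ => 1, fun v => Or.inl rfl, fun u v hA => absurd (h u v) hA⟩
  obtain ⟨u₀, v₀, he⟩ := hedge
  have hne : u₀ ≠ v₀ := fun h => he (h ▸ hdiag v₀)
  have hLre : ∀ u v, u ≠ v → (L.map (Int.cast : ℤ → ℝ)) u v = -(A u v : ℝ) := by
    intro u v h
    rw [hLdef]
    simp [Matrix.map_apply, Matrix.diagonal_apply_ne _ h]
  have hcastmul : ∀ u v, (((L * L) u v : ℤ) : ℝ) = ((L.map (Int.cast : ℤ → ℝ)) * (L.map (Int.cast : ℤ → ℝ))) u v := by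
    intro u v
    simp only [Matrix.mul_apply, Matrix.map_apply]
    push_cast
    rfl
  have hAcast : (A u₀ v₀ : ℝ) * (A u₀ v₀ : ℝ) = 1 := by
    rcases hentries u₀ v₀ with h | h | h
    · rw [h]; norm_num
    · exact absurd h he
    · rw [h]; norm_num
  have h1 := congrFun (congrFun hiden u₀) v₀
  simp only [Matrix.add_apply, Matrix.smul_apply, Matrix.one_apply_ne hne, smul_eq_mul,
    mul_zero, add_zero] at h1
  rw [hLre u₀ v₀ hne] at h1
  -- h1 : ((L.map (Int.cast : ℤ → ℝ)) * (L.map (Int.cast : ℤ → ℝ))) u₀ v₀ = (θ₁ + θ₂) * -(A u₀ v₀)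
  set s' : ℤ := -(A u₀ v₀) * ((L * L) u₀ v₀) with hs'def
  have hs' : ((s' : ℤ) : ℝ) = θ₁ + θ₂ := by
    rw [hs'def]
    push_cast
    rw [hcastmul, h1]
    calc -(A u₀ v₀ : ℝ) * ((θ₁ + θ₂) * -(A u₀ v₀ : ℝ))
        = ((A u₀ v₀ : ℝ) * (A u₀ v₀ : ℝ)) * (θ₁ + θ₂) := by ring
      _ = θ₁ + θ₂ := by rw [hAcast]; ring
  set p' : ℤ := s' * L v₀ v₀ - (L * L) v₀ v₀ with hp'def
  have hp' : ((p' : ℤ) : ℝ) = θ₁ * θ₂ := by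
    have h2 := congrFun (congrFun hiden v₀) v₀
    simp only [Matrix.add_apply, Matrix.smul_apply, Matrix.one_apply_eq, smul_eq_mul,
      mul_one] at h2
    rw [hp'def]
    push_cast
    rw [hcastmul, hs']
    have : (L.map (Int.cast : ℤ → ℝ)) v₀ v₀ = ((L v₀ v₀ : ℤ) : ℝ) := rfl
    rw [← this]
    linarith
  -- integer matrix identity
  have hZ : L * L + p' • (1 : Matrix V V ℤ) = s' • L := by
    ext u v
    apply @Int.cast_injective ℝ
    have h3 := congrFun (congrFun hiden u) v
    simp only [Matrix.add_apply, Matrix.smul_apply, smul_eq_mul] at h3 ⊢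
    push_cast
    rw [hcastmul, hs', hp']
    have hone : (((1 : Matrix V V ℤ) u v : ℤ) : ℝ) = (1 : Matrix V V ℝ) u v := by
      simp [Matrix.one_apply, apply_ite (Int.cast : ℤ → ℝ)]
    rw [hone]
    have hl : ((L u v : ℤ) : ℝ) = (L.map (Int.cast : ℤ → ℝ)) u v := rfl
    rw [hl]
    exact h3
  have hp'pos : 0 < p' := by
    have : (0:ℝ) < (p' : ℝ) := hp' ▸ mul_pos hθ₁pos hθ₂pos
    exact_mod_cast this
  -- row span membership
  have hrow : ∀ y : V → ℤ, y ᵥ* L ∈ Submodule.span ℤ (Set.range fun w => L w) := by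
    intro y
    have hy : y ᵥ* L = ∑ w, y w • L w := by
      ext v
      simp [Matrix.vecMul, dotProduct, Finset.sum_apply]
    rw [hy]
    exact Submodule.sum_mem _ fun w _ => Submodule.smul_mem _ _ (Submodule.subset_span ⟨w, rfl⟩)
  have hmat2 : L * (s' • (1 : Matrix V V ℤ) - L) = p' • (1 : Matrix V V ℤ) := by
    rw [Matrix.mul_sub, Matrix.mul_smul, Matrix.mul_one, ← hZ]
    abel
  have hmat1 : (s' • (1 : Matrix V V ℤ) - L) * L = p' • (1 : Matrix V V ℤ) := by
    rw [Matrix.sub_mul, Matrix.smul_mul, Matrix.one_mul, ← hZ]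
    abel
  have hPmem : ∀ x : V → ℤ, p' • x ∈ rowSpan L := by
    intro x
    have hxe : p' • x = (x ᵥ* (s' • (1 : Matrix V V ℤ) - L)) ᵥ* L := by
      rw [Matrix.vecMul_vecMul, hmat1]
      ext v
      simp [Matrix.vecMul, dotProduct, Matrix.one_apply, Finset.sum_ite_eq',
        mul_comm]
    rw [hxe]
    exact hrow _
  set P : ℕ := p'.toNat with hPdef
  have hPcast : (P : ℤ) = p' := Int.toNat_of_nonneg hp'pos.le
  have hPpos : 0 < P := by omega
  have hPmem' : ∀ x : V → ℤ, P • x ∈ rowSpan L := by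
    intro x
    have : P • x = p' • x := by rw [← hPcast, natCast_zsmul]
    rw [this]
    exact hPmem x
  -- finiteness
  have hnsmul : ∀ g : (V → ℤ) ⧸ rowSpan L, P • g = 0 := by
    intro g
    induction g using QuotientAddGroup.induction_on with
    | H x =>
      rw [← QuotientAddGroup.mk_nsmul]
      exact (QuotientAddGroup.eq_zero_iff _).mpr (hPmem' x)
  have hfg : AddGroup.FG ((V → ℤ) ⧸ rowSpan L) := by
    have : AddGroup.FG (V → ℤ) := Module.Finite.iff_addGroup_fg.mp inferInstance
    exact AddGroup.fg_of_surjective (QuotientAddGroup.mk'_surjective (rowSpan L))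
  have hfin : Finite ((V → ℤ) ⧸ rowSpan L) := by
    apply AddCommGroup.finite_of_fg_torsion
    intro g
    exact isOfFinAddOrder_iff_nsmul_eq_zero.mpr ⟨P, hPpos, hnsmul g⟩
  refine ⟨hfin, ?_⟩
  -- exponent
  set e : ℕ := AddMonoid.exponent ((V → ℤ) ⧸ rowSpan L) with hedef
  have hedvd : e ∣ P := AddMonoid.exponent_dvd_of_forall_nsmul_eq_zero hnsmul
  have hene : e ≠ 0 := by
    haveI := hfin
    exact AddMonoid.exponent_ne_zero_of_finite
  -- e • x ∈ rowSpan for all x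
  have hemem : ∀ x : V → ℤ, e • x ∈ Submodule.span ℤ (Set.range fun w => L w) := by
    intro x
    have h0 : e • (QuotientAddGroup.mk x : (V → ℤ) ⧸ rowSpan L) = 0 :=
      AddMonoid.exponent_nsmul_eq_zero _
    rw [← QuotientAddGroup.mk_nsmul] at h0
    exact (QuotientAddGroup.eq_zero_iff _).mp h0
  -- construct B with B * L = e • 1
  have hBex : ∀ u : V, ∃ c : V → ℤ, ∑ w, c w • L w = e • Pi.single u 1 := by
    intro u
    exact (Submodule.mem_span_range_iff_exists_fun ℤ).mp (hemem (Pi.single u 1))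
  choose B hB using hBex
  have hBL : (Matrix.of B) * L = (e : ℤ) • (1 : Matrix V V ℤ) := by
    ext u v
    have := congrFun (hB u) v
    simp only [Finset.sum_apply, Pi.smul_apply, smul_eq_mul] at this
    rw [Matrix.mul_apply]
    simp only [Matrix.of_apply]
    rw [this]
    simp only [Matrix.smul_apply, Matrix.one_apply, Pi.smul_apply, Pi.single_apply,
      smul_eq_mul]
    rcases eq_or_ne u v with rfl | huv
    · simp
    · simp [huv, Ne.symm huv]
  have hkey : p' • (Matrix.of B) = (e : ℤ) • (s' • (1 : Matrix V V ℤ) - L) := by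
    calc p' • (Matrix.of B) = (Matrix.of B) * (p' • (1 : Matrix V V ℤ)) := by
          rw [Matrix.mul_smul, Matrix.mul_one]
      _ = (Matrix.of B) * (L * (s' • (1 : Matrix V V ℤ) - L)) := by rw [hmat2]
      _ = ((Matrix.of B) * L) * (s' • (1 : Matrix V V ℤ) - L) := by rw [mul_assoc]
      _ = (e : ℤ) • (s' • (1 : Matrix V V ℤ) - L) := by rw [hBL, Matrix.smul_mul, Matrix.one_mul]
  have hLuv : L u₀ v₀ = -(A u₀ v₀) := by
    rw [hLdef]
    simp [Matrix.diagonal_apply_ne _ hne]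
  have hpdvd : p' ∣ (e : ℤ) := by
    have h4 := congrFun (congrFun hkey u₀) v₀
    simp only [Matrix.smul_apply, Matrix.sub_apply, Matrix.one_apply_ne hne, smul_eq_mul,
      Matrix.of_apply, mul_zero, zero_sub, hLuv] at h4
    -- h4 : p' * B u₀ v₀ = e * -(-(A u₀ v₀)) or similar
    have : p' ∣ (e : ℤ) * (A u₀ v₀) := ⟨B u₀ v₀, by linarith [h4]⟩
    rcases hentries u₀ v₀ with h | h | h
    · rw [h] at this
      rw [mul_neg, mul_one] at this
      exact dvd_neg.mp this
    · exact absurd h he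
    · rw [h] at this
      rwa [mul_one] at this
  have hPdvd : P ∣ e := by
    have : (P : ℤ) ∣ (e : ℤ) := hPcast ▸ hpdvd
    exact_mod_cast this
  have heP : e = P := Nat.dvd_antisymm hedvd hPdvd
  rw [heP]
  rw [show ((P : ℕ) : ℝ) = ((P : ℤ) : ℝ) by push_cast; ring, hPcast, hp']
end

section
/- Let m ≥ 2 and let G be the complete bipartite graph K_{m,m}, with vertex set V = (Fin m) ⊕ (Fin m) and two vertices adjacent exactly when they lie in different summands. Then for any edge uv (u in the first part and v in the second part), the class of the vector e_u − e_v in the critical group K(G) has additive order exactly m². -/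
open Finset

instance {V W : Type*} : DecidableRel (completeBipartiteGraph V W).Adj := fun a b =>
  inferInstanceAs (Decidable (a.isLeft ∧ b.isRight ∨ a.isRight ∧ b.isLeft))

/-
The class of `d = e_u - e_v` is killed by `m²`, since `L (m d - 𝟙_left) = m² d`.
Conversely, choosing `i₀ ≠ u` and `j₀ ≠ v`, the vector
`φ = 𝟙_left + m (e_{j₀} - e_{i₀})` satisfies `L φ = m² (e_{j₀} - e_{i₀})`; as `L` is symmetric,
`φ ⬝ L c ≡ 0 (mod m²)` for every `c`, while `φ ⬝ d = 1`. So `k d ∈ im L` forces `m² ∣ k`.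
-/

open Matrix

lemma addOrderOf_eq_of_forall_nsmul_eq_zero_iff {G : Type*} [AddMonoid G] {g : G} {N : ℕ}
    (h : ∀ n : ℕ, n • g = 0 ↔ N ∣ n) : addOrderOf g = N :=
  Nat.dvd_antisymm (addOrderOf_dvd_of_nsmul_eq_zero ((h N).2 dvd_rfl))
    ((h _).1 (addOrderOf_nsmul_eq_zero g))

lemma Matrix.IsSymm.dvd_dotProduct_mulVec {V R : Type*} [Fintype V] [CommRing R]
    {M : Matrix V V R} (hM : M.IsSymm) {φ ψ : V → R} {n : R} (hφ : M *ᵥ φ = n • ψ)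
    (c : V → R) : n ∣ φ ⬝ᵥ (M *ᵥ c) := by
  rw [dotProduct_mulVec, ← hM.eq, vecMul_transpose, hφ, smul_dotProduct, smul_eq_mul]
  exact dvd_mul_right n _

lemma mem_rowSpan_iff_exists_mulVec {V : Type*} [Fintype V] {M : Matrix V V ℤ} (hM : M.IsSymm)
    {x : V → ℤ} : x ∈ rowSpan M ↔ ∃ c, M *ᵥ c = x := by
  rw [rowSpan, Submodule.mem_toAddSubgroup, Submodule.mem_span_range_iff_exists_fun]
  simp only [← vecMul_eq_sum, ← mulVec_transpose, hM.eq]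

@[simp]
lemma coe_chipDiff {V : Type*} [Fintype V] [DecidableEq V] (u v : V) :
    (chipDiff u v : V → ℤ) = Pi.single u 1 - Pi.single v 1 :=
  rfl

lemma critGroup_nsmul_mk_eq_zero_iff {V : Type*} [Fintype V] [DecidableEq V] (G : SimpleGraph V)
    [DecidableRel G.Adj] (x : sumZero V) (n : ℕ) :
    n • (QuotientAddGroup.mk x : critGroup G) = 0 ↔
      ∃ c, G.lapMatrix ℤ *ᵥ c = (n : ℤ) • (x : V → ℤ) := by
  rw [← QuotientAddGroup.mk_nsmul, QuotientAddGroup.eq_zero_iff, AddSubgroup.mem_addSubgroupOf,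
    mem_rowSpan_iff_exists_mulVec (G.isSymm_lapMatrix ℤ), AddSubgroup.coe_nsmul, natCast_zsmul]

section CompleteBipartite

variable {V W : Type*} [Fintype V] [Fintype W]

lemma completeBipartiteGraph_sum_neighborFinset_inl {M : Type*} [AddCommMonoid M]
    (i : V) (f : V ⊕ W → M) :
    ∑ w ∈ (completeBipartiteGraph V W).neighborFinset (Sum.inl i), f w = ∑ j, f (Sum.inr j) := by
  rw [SimpleGraph.neighborFinset_eq_filter, Finset.sum_filter, Fintype.sum_sum_type]
  simp

lemma completeBipartiteGraph_sum_neighborFinset_inr {M : Type*} [AddCommMonoid M]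
    (j : W) (f : V ⊕ W → M) :
    ∑ w ∈ (completeBipartiteGraph V W).neighborFinset (Sum.inr j), f w = ∑ i, f (Sum.inl i) := by
  rw [SimpleGraph.neighborFinset_eq_filter, Finset.sum_filter, Fintype.sum_sum_type]
  simp

lemma completeBipartiteGraph_degree_inl (i : V) :
    (completeBipartiteGraph V W).degree (Sum.inl i) = Fintype.card W := by
  rw [← SimpleGraph.card_neighborFinset_eq_degree, Finset.card_eq_sum_ones,
    completeBipartiteGraph_sum_neighborFinset_inl, Fintype.card_eq_sum_ones]

lemma completeBipartiteGraph_degree_inr (j : W) :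
    (completeBipartiteGraph V W).degree (Sum.inr j) = Fintype.card V := by
  rw [← SimpleGraph.card_neighborFinset_eq_degree, Finset.card_eq_sum_ones,
    completeBipartiteGraph_sum_neighborFinset_inr, Fintype.card_eq_sum_ones]

lemma completeBipartiteGraph_lapMatrix_mulVec_inl [DecidableEq V] [DecidableEq W] {R : Type*}
    [Ring R] (c : V ⊕ W → R) (i : V) :
    ((completeBipartiteGraph V W).lapMatrix R *ᵥ c) (Sum.inl i) =
      Fintype.card W * c (Sum.inl i) - ∑ j, c (Sum.inr j) := by
  rw [SimpleGraph.lapMatrix_mulVec_apply, completeBipartiteGraph_degree_inl,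
    completeBipartiteGraph_sum_neighborFinset_inl]

lemma completeBipartiteGraph_lapMatrix_mulVec_inr [DecidableEq V] [DecidableEq W] {R : Type*}
    [Ring R] (c : V ⊕ W → R) (j : W) :
    ((completeBipartiteGraph V W).lapMatrix R *ᵥ c) (Sum.inr j) =
      Fintype.card V * c (Sum.inr j) - ∑ i, c (Sum.inl i) := by
  rw [SimpleGraph.lapMatrix_mulVec_apply, completeBipartiteGraph_degree_inr,
    completeBipartiteGraph_sum_neighborFinset_inr]

end CompleteBipartite

section CompleteBipartiteSquare

variable {m : ℕ}

local notation "K" m => completeBipartiteGraph (Fin m) (Fin m)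

lemma completeBipartiteGraph_lapMatrix_mulVec_smul_chipDiff_sub (u v : Fin m) :
    (K m).lapMatrix ℤ *ᵥ ((m : ℤ) • (chipDiff (Sum.inl u) (Sum.inr v) : Fin m ⊕ Fin m → ℤ) -
        Sum.elim (1 : Fin m → ℤ) 0) =
      (m : ℤ) ^ 2 • (chipDiff (Sum.inl u) (Sum.inr v) : Fin m ⊕ Fin m → ℤ) := by
  ext (i | j)
  · rw [completeBipartiteGraph_lapMatrix_mulVec_inl]
    by_cases hi : i = u <;> simp [hi, Pi.single_apply]
    ring
  · rw [completeBipartiteGraph_lapMatrix_mulVec_inr]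
    by_cases hj : j = v <;> simp [hj, Pi.single_apply]
    ring

lemma completeBipartiteGraph_lapMatrix_mulVec_add_smul_chipDiff (i₀ j₀ : Fin m) :
    (K m).lapMatrix ℤ *ᵥ
        (Sum.elim (1 : Fin m → ℤ) 0 + (m : ℤ) • (chipDiff (Sum.inr j₀) (Sum.inl i₀) : _ → ℤ)) =
      (m : ℤ) ^ 2 • (chipDiff (Sum.inr j₀) (Sum.inl i₀) : Fin m ⊕ Fin m → ℤ) := by
  ext (i | j)
  · rw [completeBipartiteGraph_lapMatrix_mulVec_inl]
    by_cases hi : i = i₀ <;> simp [hi, Pi.single_apply]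
    ring
  · rw [completeBipartiteGraph_lapMatrix_mulVec_inr]
    by_cases hj : j = j₀ <;> simp [hj, Pi.single_apply, Finset.sum_add_distrib]
    ring

lemma exists_lapMatrix_mulVec_eq_zsmul_chipDiff_iff (hm : 2 ≤ m) (u v : Fin m) (k : ℤ) :
    (∃ c, (K m).lapMatrix ℤ *ᵥ c = k • (chipDiff (Sum.inl u) (Sum.inr v) : _ → ℤ)) ↔
      (m : ℤ) ^ 2 ∣ k := by
  constructor
  · rintro ⟨c, hc⟩
    have : Nontrivial (Fin m) := Fin.nontrivial_iff_two_le.mpr hm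
    obtain ⟨i₀, hi₀⟩ := exists_ne u
    obtain ⟨j₀, hj₀⟩ := exists_ne v
    set φ : Fin m ⊕ Fin m → ℤ :=
      Sum.elim (1 : Fin m → ℤ) 0 + (m : ℤ) • (chipDiff (Sum.inr j₀) (Sum.inl i₀) : _ → ℤ)
    have hφ : φ ⬝ᵥ (chipDiff (Sum.inl u) (Sum.inr v) : _ → ℤ) = 1 := by
      simp [φ, Ne.symm hi₀, Ne.symm hj₀]
    have h := ((K m).isSymm_lapMatrix ℤ).dvd_dotProduct_mulVec
      (completeBipartiteGraph_lapMatrix_mulVec_add_smul_chipDiff i₀ j₀) c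
    rwa [hc, dotProduct_smul, hφ, smul_eq_mul, mul_one] at h
  · rintro ⟨t, rfl⟩
    refine ⟨t • ((m : ℤ) • (chipDiff (Sum.inl u) (Sum.inr v) : _ → ℤ) - Sum.elim (1 : Fin m → ℤ) 0),
      ?_⟩
    rw [mulVec_smul, completeBipartiteGraph_lapMatrix_mulVec_smul_chipDiff_sub, smul_smul,
      mul_comm]

end CompleteBipartiteSquare

theorem stmt4 (m : ℕ) (hm : 2 ≤ m) (u v : Fin m) :
    addOrderOf ((QuotientAddGroup.mk
      (chipDiff (Sum.inl u) (Sum.inr v) :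
        sumZero (Fin m ⊕ Fin m))) :
      critGroup (completeBipartiteGraph (Fin m) (Fin m))) = m ^ 2 := by
  refine addOrderOf_eq_of_forall_nsmul_eq_zero_iff fun n => ?_
  rw [critGroup_nsmul_mk_eq_zero_iff, exists_lapMatrix_mulVec_eq_zsmul_chipDiff_iff hm]
  exact_mod_cast Iff.rfl
end

section
/- Let G be a connected graph on n vertices (vertex set V) with integer Laplacian L in which every vertex has degree k₁ or k₂, such that: any two distinct non-adjacent vertices have exactly μ common neighbors; any two adjacent vertices both of degree k₁ have exactly μ − 1 + k₁ − k₂ common neighbors; any two adjacent vertices of different degrees have exactly μ − 1 common neighbors; any two adjacent vertices both of degree k₂ have exactly μ − 1 + k₂ − k₁ common neighbors; and k₁·k₂ + μ = n·μ. Let u, v be adjacent vertices with deg u = k₁ and deg v = k₂, and define c : V → ℤ by c u = k₂, c v = −k₁, and for w ∉ {u,v}, c w = (1 if w is adjacent to u else 0) − (1 if w is adjacent to v else 0). Then ∑_w c w · (row w of L) = (n·μ) • (e_u − e_v), where e_w denotes the standard basis vector supported at w. -/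
/-! Write `A`, `L = D - A` for the adjacency and Laplacian matrices. Since `AL = AD - A²` and
`(A²) a x` counts common neighbours, the common-neighbour conditions say exactly that row `a` of
`AL + (k₁ + k₂ + 1 - deg a) • L` is `(k₁k₂ + μ) e_a - μ𝟙`, because `deg a (k₁ + k₂ - deg a) = k₁k₂`.
As `c = A u - A v + (k₂ + 1) e_u - (k₁ + 1) e_v`, the combination `∑ c w • L w` is the difference of
these rows for `u` and `v`, in which the constant parts cancel. -/

open Finset

namespace SimpleGraph

variable {V : Type*} [Fintype V] (G : SimpleGraph V) [DecidableRel G.Adj]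

theorem adjMatrix_mul_self_apply {R : Type*} [NonAssocSemiring R] (a x : V) :
    (G.adjMatrix R * G.adjMatrix R) a x = Fintype.card (G.commonNeighbors a x) := by
  rw [adjMatrix_mul_apply, sum_congr rfl fun w _ => adjMatrix_apply G w x, sum_boole,
    Fintype.card_subtype, neighborFinset_eq_filter, filter_filter]
  simp [mem_commonNeighbors, adj_comm]

theorem card_commonNeighbors_self (a : V) : Fintype.card (G.commonNeighbors a a) = G.degree a := by
  rw [← Nat.cast_id (Fintype.card _), ← adjMatrix_mul_self_apply, adjMatrix_mul_self_apply_self,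
    Nat.cast_id]

theorem card_commonNeighbors_of_two_degrees {k₁ k₂ μ : ℕ}
    (hdeg : ∀ w : V, G.degree w = k₁ ∨ G.degree w = k₂)
    (hnonadj : ∀ x y : V, x ≠ y → ¬G.Adj x y → Fintype.card (G.commonNeighbors x y) = μ)
    (hadj11 : ∀ x y : V, G.Adj x y → G.degree x = k₁ → G.degree y = k₁ →
      (Fintype.card (G.commonNeighbors x y) : ℤ) = (μ : ℤ) - 1 + k₁ - k₂)
    (hadj12 : ∀ x y : V, G.Adj x y → G.degree x ≠ G.degree y →
      (Fintype.card (G.commonNeighbors x y) : ℤ) = (μ : ℤ) - 1)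
    (hadj22 : ∀ x y : V, G.Adj x y → G.degree x = k₂ → G.degree y = k₂ →
      (Fintype.card (G.commonNeighbors x y) : ℤ) = (μ : ℤ) - 1 + k₂ - k₁)
    {a x : V} (hax : a ≠ x) :
    (Fintype.card (G.commonNeighbors a x) : ℤ) =
      μ - if G.Adj a x then 1 + k₁ + k₂ - (G.degree a : ℤ) - G.degree x else 0 := by
  split_ifs with hadj
  · by_cases hdeq : G.degree a = G.degree x
    · rcases hdeg a with ha | ha
      · rw [hadj11 a x hadj ha (hdeq ▸ ha), ← hdeq, ha]; ring
      · rw [hadj22 a x hadj ha (hdeq ▸ ha), ← hdeq, ha]; ring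
    · have hsum : (G.degree a : ℤ) + G.degree x = k₁ + k₂ := by
        have := hdeg a; have := hdeg x; omega
      rw [hadj12 a x hadj hdeq]; linear_combination -hsum
  · rw [hnonadj a x hax hadj]; ring

variable [DecidableEq V]

theorem lapMatrix_apply_eq {R : Type*} [AddGroupWithOne R] (a x : V) :
    G.lapMatrix R a x = (if a = x then (G.degree a : R) else 0) - if G.Adj a x then 1 else 0 := by
  simp [lapMatrix, degMatrix, Matrix.diagonal_apply, adjMatrix_apply]

theorem adjMatrix_mul_lapMatrix_apply {R : Type*} [Ring R] (a x : V) :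
    (G.adjMatrix R * G.lapMatrix R) a x =
      (if G.Adj a x then (G.degree x : R) else 0) - Fintype.card (G.commonNeighbors a x) := by
  rw [lapMatrix, Matrix.mul_sub, degMatrix, Matrix.sub_apply, Matrix.mul_diagonal,
    adjMatrix_mul_self_apply, adjMatrix_apply, ite_mul, one_mul, zero_mul]

theorem adjMatrix_mul_lapMatrix_add_smul_lapMatrix {k₁ k₂ μ : ℕ}
    (hCN : ∀ a x : V, a ≠ x → (Fintype.card (G.commonNeighbors a x) : ℤ) =
      μ - if G.Adj a x then 1 + k₁ + k₂ - (G.degree a : ℤ) - G.degree x else 0)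
    (a : V) (k : ℕ) (hk : G.degree a + k = k₁ + k₂) :
    (G.adjMatrix ℤ * G.lapMatrix ℤ) a + ((k : ℤ) + 1) • G.lapMatrix ℤ a =
      Pi.single a ((G.degree a * k + μ : ℕ) : ℤ) - fun _ => (μ : ℤ) := by
  funext x
  simp only [Pi.add_apply, Pi.smul_apply, Pi.sub_apply, smul_eq_mul,
    adjMatrix_mul_lapMatrix_apply, lapMatrix_apply_eq]
  rcases eq_or_ne a x with rfl | hax
  · simp only [G.irrefl, if_false, if_true, Pi.single_eq_same, card_commonNeighbors_self]
    push_cast; ring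
  · have hkZ : (G.degree a : ℤ) + k = k₁ + k₂ := by exact_mod_cast hk
    rw [hCN a x hax, Pi.single_eq_of_ne (Ne.symm hax), if_neg hax]
    split_ifs
    · linear_combination -hkZ
    · ring

end SimpleGraph

theorem stmt6_general {V : Type*} [Fintype V] [DecidableEq V] (G : SimpleGraph V)
    [DecidableRel G.Adj] (n k₁ k₂ μ : ℕ)
    (hdeg : ∀ w : V, G.degree w = k₁ ∨ G.degree w = k₂)
    (hnonadj : ∀ x y : V, x ≠ y → ¬G.Adj x y →
      Fintype.card (G.commonNeighbors x y) = μ)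
    (hadj11 : ∀ x y : V, G.Adj x y → G.degree x = k₁ → G.degree y = k₁ →
      (Fintype.card (G.commonNeighbors x y) : ℤ) = (μ : ℤ) - 1 + k₁ - k₂)
    (hadj12 : ∀ x y : V, G.Adj x y → G.degree x ≠ G.degree y →
      (Fintype.card (G.commonNeighbors x y) : ℤ) = (μ : ℤ) - 1)
    (hadj22 : ∀ x y : V, G.Adj x y → G.degree x = k₂ → G.degree y = k₂ →
      (Fintype.card (G.commonNeighbors x y) : ℤ) = (μ : ℤ) - 1 + k₂ - k₁)
    (hparam : k₁ * k₂ + μ = n * μ)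
    (u v : V) (huv : G.Adj u v) (hu : G.degree u = k₁) (hv : G.degree v = k₂)
    (c : V → ℤ) (hcu : c u = (k₂ : ℤ)) (hcv : c v = -(k₁ : ℤ))
    (hcw : ∀ w, w ≠ u → w ≠ v →
      c w = (if G.Adj w u then 1 else 0) - (if G.Adj w v then 1 else 0)) :
    ∑ w, c w • (G.lapMatrix ℤ w) =
      ((n * μ : ℕ) : ℤ) • (Pi.single u 1 - Pi.single v 1) := by
  have hCN := fun a x (hax : a ≠ x) =>
    G.card_commonNeighbors_of_two_degrees hdeg hnonadj hadj11 hadj12 hadj22 hax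
  have hc : c = G.adjMatrix ℤ u - G.adjMatrix ℤ v + ((k₂ : ℤ) + 1) • Pi.single u 1
      - ((k₁ : ℤ) + 1) • Pi.single v 1 := by
    funext w
    simp only [Pi.add_apply, Pi.sub_apply, Pi.smul_apply, smul_eq_mul, SimpleGraph.adjMatrix_apply]
    rcases eq_or_ne w u with rfl | hwu
    · simp [hcu, huv.symm, G.ne_of_adj huv]
    rcases eq_or_ne w v with rfl | hwv
    · simp [hcv, huv, hwu]
    · simp [hcw w hwu hwv, hwu, hwv, G.adj_comm]
  have hrow_u := G.adjMatrix_mul_lapMatrix_add_smul_lapMatrix hCN u k₂ (by rw [hu])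
  have hrow_v := G.adjMatrix_mul_lapMatrix_add_smul_lapMatrix hCN v k₁ (by rw [hv, add_comm])
  rw [hu, hparam] at hrow_u
  rw [hv, mul_comm, hparam] at hrow_v
  calc ∑ w, c w • G.lapMatrix ℤ w
      = ((G.adjMatrix ℤ * G.lapMatrix ℤ) u + ((k₂ : ℤ) + 1) • G.lapMatrix ℤ u)
        - ((G.adjMatrix ℤ * G.lapMatrix ℤ) v + ((k₁ : ℤ) + 1) • G.lapMatrix ℤ v) := by
        rw [← Matrix.vecMul_eq_sum, hc, Matrix.sub_vecMul, Matrix.add_vecMul, Matrix.sub_vecMul,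
          Matrix.smul_vecMul, Matrix.smul_vecMul, Matrix.single_one_vecMul,
          Matrix.single_one_vecMul, ← Matrix.mul_apply_eq_vecMul, ← Matrix.mul_apply_eq_vecMul]
        unfold Matrix.row
        abel
    _ = ((n * μ : ℕ) : ℤ) • (Pi.single u 1 - Pi.single v 1) := by
        rw [hrow_u, hrow_v, sub_sub_sub_cancel_right, smul_sub, ← Pi.single_smul',
          ← Pi.single_smul', smul_eq_mul, mul_one]

theorem stmt6 {V : Type*} [Fintype V] [DecidableEq V] (G : SimpleGraph V)
    [DecidableRel G.Adj] (hconn : G.Connected) (n k₁ k₂ μ : ℕ)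
    (hcard : Fintype.card V = n)
    (hdeg : ∀ w : V, G.degree w = k₁ ∨ G.degree w = k₂)
    (hnonadj : ∀ x y : V, x ≠ y → ¬G.Adj x y →
      Fintype.card (G.commonNeighbors x y) = μ)
    (hadj11 : ∀ x y : V, G.Adj x y → G.degree x = k₁ → G.degree y = k₁ →
      (Fintype.card (G.commonNeighbors x y) : ℤ) = (μ : ℤ) - 1 + k₁ - k₂)
    (hadj12 : ∀ x y : V, G.Adj x y → G.degree x ≠ G.degree y →
      (Fintype.card (G.commonNeighbors x y) : ℤ) = (μ : ℤ) - 1)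
    (hadj22 : ∀ x y : V, G.Adj x y → G.degree x = k₂ → G.degree y = k₂ →
      (Fintype.card (G.commonNeighbors x y) : ℤ) = (μ : ℤ) - 1 + k₂ - k₁)
    (hparam : k₁ * k₂ + μ = n * μ)
    (u v : V) (huv : G.Adj u v) (hu : G.degree u = k₁) (hv : G.degree v = k₂)
    (c : V → ℤ) (hcu : c u = (k₂ : ℤ)) (hcv : c v = -(k₁ : ℤ))
    (hcw : ∀ w, w ≠ u → w ≠ v →
      c w = (if G.Adj w u then 1 else 0) - (if G.Adj w v then 1 else 0)) :
    ∑ w, c w • (G.lapMatrix ℤ w) =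
      ((n * μ : ℕ) : ℤ) • (Pi.single u 1 - Pi.single v 1) :=
  stmt6_general G n k₁ k₂ μ hdeg hnonadj hadj11 hadj12 hadj22 hparam u v huv hu hv c hcu hcv hcw
end

section
/- Let A : Matrix V V ℤ be a symmetric matrix with zero diagonal and all entries in {−1,0,1} (a signed adjacency matrix), and suppose there exist integers k and λ with A·A = k•1 + λ•A (so the underlying graph is k-regular and the net number of common neighbors of two vertices joined by an edge of sign c is c·λ, and is 0 for non-adjacent pairs). Let u, v be vertices with A u v = 1, let L = k•1 − A be the signed Laplacian, and define c : V → ℤ by c u = k − λ − 1, c v = −(k − λ − 1), and c w = A u w − A v w for w ∉ {u,v}. Then ∑_w c w · (row w of L) = (k·(k − λ − 1)) • (e_u − e_v), where e_w denotes the standard basis vector supported at w. -/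
open Finset

theorem stmt7 {V : Type*} [Fintype V] [DecidableEq V] (A : Matrix V V ℤ)
    (hsymm : A.IsSymm) (hdiag : ∀ v, A v v = 0)
    (hentries : ∀ u v, A u v = -1 ∨ A u v = 0 ∨ A u v = 1)
    (k lam : ℤ)
    (hreg : A * A = k • (1 : Matrix V V ℤ) + lam • A)
    (u v : V) (huv : A u v = 1)
    (L : Matrix V V ℤ) (hLdef : L = k • (1 : Matrix V V ℤ) - A)
    (c : V → ℤ)
    (hcu : c u = k - lam - 1) (hcv : c v = -(k - lam - 1))
    (hcw : ∀ w, w ≠ u → w ≠ v → c w = A u w - A v w) :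
    ∑ w, c w • (L w) =
      (k * (k - lam - 1)) • (Pi.single u 1 - Pi.single v 1) := by
  have hvu : A v u = 1 := (hsymm.apply u v).trans huv
  have hne : u ≠ v := by
    intro h; rw [h, hdiag] at huv; exact one_ne_zero huv.symm
  have hc : ∀ w, c w = (A u w - A v w)
      + (k - lam) * (if w = u then 1 else 0)
      - (k - lam) * (if w = v then 1 else 0) := by
    intro w
    by_cases hu : w = u
    · subst hu
      rw [hcu, hdiag, hvu, if_pos rfl, if_neg hne]; ring
    · by_cases hv : w = v
      · subst hv
        rw [hcv, hdiag, huv, if_pos rfl, if_neg hne.symm]; ring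
      · rw [hcw w hu hv, if_neg hu, if_neg hv]; ring
  funext x
  have hAAu := congrFun (congrFun hreg u) x
  have hAAv := congrFun (congrFun hreg v) x
  simp only [Matrix.mul_apply, Matrix.add_apply, Matrix.smul_apply,
    Matrix.one_apply, smul_eq_mul, mul_ite, mul_one, mul_zero] at hAAu hAAv
  simp only [Finset.sum_apply, Pi.smul_apply, smul_eq_mul, hLdef,
    Matrix.sub_apply, Matrix.smul_apply, Matrix.one_apply, smul_eq_mul,
    mul_ite, mul_one, mul_zero, Pi.sub_apply]
  have hsum1 : ∑ w, (A u w - A v w) * ((if w = x then k else 0) - A w x)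
      = (A u x - A v x) * k
        - ((∑ w, A u w * A w x) - ∑ w, A v w * A w x) := by
    calc ∑ w, (A u w - A v w) * ((if w = x then k else 0) - A w x)
        = ∑ w, ((if w = x then (A u x - A v x) * k else 0)
            - (A u w * A w x - A v w * A w x)) := by
          refine Finset.sum_congr rfl fun w _ => ?_
          by_cases hw : w = x
          · simp only [hw, eq_self_iff_true, if_true]; ring
          · simp only [if_neg hw]; ring
      _ = _ := by
          rw [Finset.sum_sub_distrib, Finset.sum_ite_eq' Finset.univ x,
            Finset.sum_sub_distrib]
          simp
  have hsum2 : ∀ a : V, ∑ w, (if w = a then 1 else 0)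
      * ((if w = x then k else 0) - A w x)
      = (if a = x then k else 0) - A a x := by
    intro a
    simp only [ite_mul, zero_mul, one_mul, Finset.sum_ite_eq',
      Finset.mem_univ, if_true]
  calc ∑ w, c w * ((if w = x then k else 0) - A w x)
      = (∑ w, (A u w - A v w) * ((if w = x then k else 0) - A w x))
        + (k - lam) * (∑ w, (if w = u then 1 else 0) * ((if w = x then k else 0) - A w x))
        - (k - lam) * (∑ w, (if w = v then 1 else 0) * ((if w = x then k else 0) - A w x)) := by
        rw [Finset.mul_sum, Finset.mul_sum, ← Finset.sum_add_distrib,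
          ← Finset.sum_sub_distrib]
        refine Finset.sum_congr rfl fun w _ => ?_
        rw [hc w]; ring
    _ = k * (k - lam - 1) * ((Pi.single u 1 : V → ℤ) x - (Pi.single v 1 : V → ℤ) x) := by
        rw [hsum1, hsum2 u, hsum2 v, hAAu, hAAv,
          Pi.single_apply, Pi.single_apply]
        by_cases hxu : x = u <;> by_cases hxv : x = v
        · exact absurd (hxu.symm.trans hxv) hne
        · subst hxu
          simp only [eq_self_iff_true, if_true, if_neg (Ne.symm hxv), if_neg hxv,
            hdiag, hvu]
          ring
        · subst hxv
          simp only [eq_self_iff_true, if_true, if_neg (Ne.symm hxu), if_neg hxu,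
            hdiag, huv]
          ring
        · simp only [if_neg hxu, if_neg hxv, if_neg (Ne.symm hxu),
            if_neg (Ne.symm hxv)]
          ring
end

section
/- Let A : Matrix V V ℤ be a symmetric matrix with zero diagonal and all entries in {−1,0,1} (a signed adjacency matrix), let d : V → ℤ be the degree function d x = ∑_w (A x w)², and suppose there exist integers k₁, k₂ such that for all distinct x, y: (A·A) x y = A x y · (d x + d y − k₁ − k₂ − 1). Let u, v be vertices with A u v = 1, d u = k₁, d v = k₂, let L = D − A be the signed Laplacian (D the diagonal matrix of d), and define c : V → ℤ by c u = k₂, c v = −k₁, and c w = A u w − A v w for w ∉ {u,v}. Then ∑_w c w · (row w of L) = (k₁·k₂) • (e_u − e_v), where e_w denotes the standard basis vector supported at w. -/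
open Finset

theorem stmt8 {V : Type*} [Fintype V] [DecidableEq V] (A : Matrix V V ℤ)
    (hsymm : A.IsSymm) (hdiag : ∀ v, A v v = 0)
    (hentries : ∀ u v, A u v = -1 ∨ A u v = 0 ∨ A u v = 1)
    (d : V → ℤ) (hd : ∀ x, d x = ∑ w, (A x w) ^ 2)
    (k₁ k₂ : ℤ)
    (hreg : ∀ x y : V, x ≠ y → (A * A) x y = A x y * (d x + d y - k₁ - k₂ - 1))
    (u v : V) (huv : A u v = 1) (hdu : d u = k₁) (hdv : d v = k₂)
    (L : Matrix V V ℤ) (hLdef : L = Matrix.diagonal d - A)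
    (c : V → ℤ)
    (hcu : c u = k₂) (hcv : c v = -k₁)
    (hcw : ∀ w, w ≠ u → w ≠ v → c w = A u w - A v w) :
    ∑ w, c w • (L w) = (k₁ * k₂) • (Pi.single u 1 - Pi.single v 1) := by
  have hs : ∀ a b, A a b = A b a := fun a b => hsymm.apply b a
  have hne : u ≠ v := by
    intro h; rw [h, hdiag] at huv; exact one_ne_zero huv.symm
  have hAvu : A v u = 1 := by rw [hs v u]; exact huv
  have hAA : ∀ x, (A * A) x x = d x := by
    intro x
    rw [hd, Matrix.mul_apply]
    exact Finset.sum_congr rfl fun w _ => by rw [sq, hs w x]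
  have key : ∀ y, ∑ w, c w * A w y =
      (A * A) u y - (A * A) v y + (k₂ + 1) * A u y - (k₁ + 1) * A v y := by
    intro y
    have h1 : ∑ w, (c w - (A u w - A v w)) * A w y =
        (k₂ + 1) * A u y + (-k₁ - 1) * A v y := by
      rw [Fintype.sum_eq_add u v hne]
      · rw [hcu, hcv, hdiag u, hdiag v, hAvu, huv]; ring
      · intro x ⟨hxu, hxv⟩
        rw [hcw x hxu hxv]; ring
    have h2 : ∑ w, (A u w - A v w) * A w y = (A * A) u y - (A * A) v y := by
      rw [Matrix.mul_apply, Matrix.mul_apply, ← Finset.sum_sub_distrib]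
      exact Finset.sum_congr rfl fun w _ => by ring
    calc ∑ w, c w * A w y
        = ∑ w, ((A u w - A v w) * A w y + (c w - (A u w - A v w)) * A w y) :=
          Finset.sum_congr rfl fun w _ => by ring
      _ = (∑ w, (A u w - A v w) * A w y) + ∑ w, (c w - (A u w - A v w)) * A w y :=
          Finset.sum_add_distrib
      _ = (A * A) u y - (A * A) v y + (k₂ + 1) * A u y - (k₁ + 1) * A v y := by
          rw [h1, h2]; ring
  funext y
  have hmain : ∑ w, c w * L w y = c y * d y - ∑ w, c w * A w y := by
    simp only [hLdef, Matrix.sub_apply, Matrix.diagonal_apply, mul_sub,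
      Finset.sum_sub_distrib, mul_ite, mul_zero]
    rw [Finset.sum_ite_eq' Finset.univ y (fun w => c w * d w), if_pos (Finset.mem_univ y)]
  simp only [Finset.sum_apply, Pi.smul_apply, smul_eq_mul, Pi.sub_apply]
  rw [hmain, key]
  rcases eq_or_ne y u with hyu | hyu
  · subst hyu
    rw [hcu, hdu, hAA, hreg v y (Ne.symm hne), hdiag y, hAvu, hdu, hdv,
      Pi.single_eq_same, Pi.single_eq_of_ne hne]
    ring
  · rcases eq_or_ne y v with hyv | hyv
    · subst hyv
      rw [hcv, hdv, hAA, hreg u y hne, hdiag y, huv, hdu, hdv,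
        Pi.single_eq_of_ne (Ne.symm hne), Pi.single_eq_same]
      ring
    · rw [hcw y hyu hyv, hreg u y (Ne.symm hyu), hreg v y (Ne.symm hyv), hdu, hdv,
        Pi.single_eq_of_ne hyu, Pi.single_eq_of_ne hyv]
      ring
end

section
/- Let V be a finite type with at least 3 elements and let A : Matrix V V ℤ be symmetric with zero diagonal and A u v ∈ {−1, 1} for all u ≠ v (a signed complete graph). Suppose the signed graph is unbalanced: there is no s : V → ℤ with s v ∈ {1,−1} for all v and A u v = s u · s v for all u ≠ v. Then there exist pairwise distinct vertices u, v, w such that A u v · A v w · A w u = −1 (an unbalanced triangle). -/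
open Finset

theorem stmt9 {V : Type*} [Fintype V] [DecidableEq V] (hcard : 3 ≤ Fintype.card V)
    (A : Matrix V V ℤ)
    (hsymm : A.IsSymm) (hdiag : ∀ v, A v v = 0)
    (hentries : ∀ u v : V, u ≠ v → A u v = -1 ∨ A u v = 1)
    (hunbal : ¬∃ s : V → ℤ, (∀ v, s v = 1 ∨ s v = -1) ∧
      ∀ u v : V, u ≠ v → A u v = s u * s v) :
    ∃ u v w : V, u ≠ v ∧ v ≠ w ∧ u ≠ w ∧ A u v * A v w * A w u = -1 := by
  by_contra h
  push_neg at h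
  have : Nonempty V := Fintype.card_pos_iff.mp (by omega)
  obtain ⟨v0⟩ := this
  apply hunbal
  refine ⟨fun v => if v = v0 then 1 else A v0 v, ?_, ?_⟩
  · intro v
    by_cases hv : v = v0
    · simp [hv]
    · simpa [hv] using (hentries v0 v (fun e => hv e.symm)).symm
  · intro u v huv
    by_cases hu : u = v0 <;> by_cases hv : v = v0
    · exact absurd (hu.trans hv.symm) huv
    · subst hu; simp [hv]
    · subst hv; simp [hu, hsymm.apply]
    · simp only [if_neg hu, if_neg hv]
      have h3 := h v0 u v (fun e => hu e.symm) huv (fun e => hv e.symm)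
      have e1 := hentries v0 u (fun e => hu e.symm)
      have e2 := hentries v0 v (fun e => hv e.symm)
      have e3 := hentries u v huv
      have hs : A v v0 = A v0 v := hsymm.apply v0 v
      rcases e1 with e1 | e1 <;> rcases e2 with e2 | e2 <;> rcases e3 with e3 | e3 <;>
        rw [hs, e1, e2, e3] at h3 <;> rw [e1, e2, e3] <;> omega
end

section
/- Let G be a connected graph on n vertices in which every vertex has degree k₁ or k₂ with k₁ < k₂, such that: any two distinct non-adjacent vertices have exactly μ common neighbors; any two adjacent vertices of different degrees have exactly μ − 1 common neighbors; and k₁·k₂ + μ = n·μ. Suppose u, v are adjacent vertices with deg u = k₁, deg v = k₂, and every vertex w ∉ {u,v} is adjacent to at least one of u, v. Then k₁ = μ and k₂ = n − 1. -/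
/-!
The neighbourhoods of `u` and `v` cover the vertex set and meet in `μ - 1` vertices, so
`k₁ + k₂ = n + μ - 1`. Eliminating `n` from `k₁ k₂ + μ = n μ` gives `(k₁ - μ)(k₂ - μ) = 0`,
and `k₂ = μ` is impossible since it would force `k₁ = n - 1 ≥ k₂`.
-/

open Finset

namespace SimpleGraph

variable {V : Type*} [Fintype V] [DecidableEq V] {G : SimpleGraph V} [DecidableRel G.Adj]
  {u v : V}

theorem Adj.neighborFinset_union_eq_univ (huv : G.Adj u v)
    (hdom : ∀ w, w ≠ u → w ≠ v → G.Adj u w ∨ G.Adj v w) :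
    G.neighborFinset u ∪ G.neighborFinset v = univ := by
  refine eq_univ_of_forall fun w => ?_
  simp only [mem_union, mem_neighborFinset]
  by_cases hwu : w = u
  · exact Or.inr (hwu ▸ huv.symm)
  by_cases hwv : w = v
  · exact Or.inl (hwv ▸ huv)
  exact hdom w hwu hwv

theorem card_neighborFinset_inter (u v : V) :
    #(G.neighborFinset u ∩ G.neighborFinset v) = Fintype.card (G.commonNeighbors u v) := by
  rw [← Set.toFinset_card]
  congr 1
  ext w
  simp [mem_commonNeighbors]

theorem Adj.degree_add_degree_eq (huv : G.Adj u v)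
    (hdom : ∀ w, w ≠ u → w ≠ v → G.Adj u w ∨ G.Adj v w) :
    G.degree u + G.degree v = Fintype.card V + Fintype.card (G.commonNeighbors u v) := by
  rw [← card_neighborFinset_eq_degree, ← card_neighborFinset_eq_degree,
    ← card_union_add_card_inter, huv.neighborFinset_union_eq_univ hdom, card_univ,
    card_neighborFinset_inter]

end SimpleGraph

theorem Int.eq_and_eq_sub_one_of_add_eq_of_mul_add_eq {k₁ k₂ n μ : ℤ} (hks : k₁ < k₂)
    (hk₂ : k₂ < n) (hsum : k₁ + k₂ = n + μ - 1) (hprod : k₁ * k₂ + μ = n * μ) :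
    k₁ = μ ∧ k₂ = n - 1 := by
  have hfactor : (k₁ - μ) * (k₂ - μ) = 0 := by
    have hn : n = k₁ + k₂ - μ + 1 := by linarith
    subst hn
    linear_combination hprod
  rcases mul_eq_zero.1 hfactor with h | h
  · exact ⟨by linarith, by linarith⟩
  · exfalso
    linarith

theorem stmt11_general {V : Type*} [Fintype V] [DecidableEq V] (G : SimpleGraph V)
    [DecidableRel G.Adj] (n k₁ k₂ μ : ℕ)
    (hcard : Fintype.card V = n)
    (hks : k₁ < k₂)
    (hadj12 : ∀ x y : V, G.Adj x y → G.degree x ≠ G.degree y →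
      (Fintype.card (G.commonNeighbors x y) : ℤ) = (μ : ℤ) - 1)
    (hparam : k₁ * k₂ + μ = n * μ)
    (u v : V) (huv : G.Adj u v) (hu : G.degree u = k₁) (hv : G.degree v = k₂)
    (hdom : ∀ w : V, w ≠ u → w ≠ v → G.Adj u w ∨ G.Adj v w) :
    k₁ = μ ∧ k₂ = n - 1 := by
  have hcommon := hadj12 u v huv (by rw [hu, hv]; exact hks.ne)
  have hdegrees := huv.degree_add_degree_eq hdom
  rw [hu, hv, hcard] at hdegrees
  have hk₂ : k₂ < n := hv ▸ hcard ▸ G.degree_lt_card_verts v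
  have hsum : (k₁ + k₂ : ℤ) = n + μ - 1 := by
    rw [add_sub_assoc, ← hcommon]
    exact_mod_cast hdegrees
  obtain ⟨hk₁μ, hk₂n⟩ := Int.eq_and_eq_sub_one_of_add_eq_of_mul_add_eq
    (by exact_mod_cast hks) (by exact_mod_cast hk₂) hsum (by exact_mod_cast hparam)
  omega

theorem stmt11 {V : Type*} [Fintype V] [DecidableEq V] (G : SimpleGraph V)
    [DecidableRel G.Adj] (hconn : G.Connected) (n k₁ k₂ μ : ℕ)
    (hcard : Fintype.card V = n)
    (hdeg : ∀ w : V, G.degree w = k₁ ∨ G.degree w = k₂) (hks : k₁ < k₂)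
    (hnonadj : ∀ x y : V, x ≠ y → ¬G.Adj x y →
      Fintype.card (G.commonNeighbors x y) = μ)
    (hadj12 : ∀ x y : V, G.Adj x y → G.degree x ≠ G.degree y →
      (Fintype.card (G.commonNeighbors x y) : ℤ) = (μ : ℤ) - 1)
    (hparam : k₁ * k₂ + μ = n * μ)
    (u v : V) (huv : G.Adj u v) (hu : G.degree u = k₁) (hv : G.degree v = k₂)
    (hdom : ∀ w : V, w ≠ u → w ≠ v → G.Adj u w ∨ G.Adj v w) :
    k₁ = μ ∧ k₂ = n - 1 :=
  stmt11_general G n k₁ k₂ μ hcard hks hadj12 hparam u v huv hu hv hdom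
end

section
/- Let M be a nonzero symmetric n×n integer matrix, and let P be an integer such that (P : ℝ) equals the product of the distinct non-zero real eigenvalues of M (i.e., there is a finite set S ⊆ ℝ equal to the set of non-zero eigenvalues of the real matrix obtained from M, and P = ∏_{θ ∈ S} θ). Then for every x : Fin n → ℤ whose class in the cokernel (Fin n → ℤ)/(ℤ-row span of M) has finite additive order, the vector P • x lies in the ℤ-row span of M. -/
open Polynomial

theorem aeval_eq_zero_of_forall_mem_spectrum {R A : Type*} {p : A → Prop} [CommSemiring R]
    [StarRing R] [MetricSpace R] [IsTopologicalSemiring R] [ContinuousStar R] [TopologicalSpace A]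
    [Ring A] [StarRing A] [Algebra R A] [ContinuousFunctionalCalculus R A p] {a : A} (ha : p a)
    {q : R[X]} (hq : ∀ θ ∈ spectrum R a, q.eval θ = 0) : aeval a q = 0 := by
  rw [← cfc_polynomial q a ha, cfc_congr (g := 0) hq, cfc_zero]

theorem aeval_X_mul_prod_X_sub_C_eq_zero {R A : Type*} {p : A → Prop} [CommRing R]
    [StarRing R] [MetricSpace R] [IsTopologicalRing R] [ContinuousStar R] [TopologicalSpace A]
    [Ring A] [StarRing A] [Algebra R A] [ContinuousFunctionalCalculus R A p] {a : A} (ha : p a)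
    {S : Finset R} (hS : ∀ θ ∈ spectrum R a, θ ≠ 0 → θ ∈ S) :
    aeval a (X * ∏ θ ∈ S, (X - C θ)) = 0 := by
  refine aeval_eq_zero_of_forall_mem_spectrum ha fun θ hθ => ?_
  rw [eval_mul, eval_X, eval_prod]
  by_cases h0 : θ = 0
  · rw [h0, zero_mul]
  · exact mul_eq_zero_of_right _ (Finset.prod_eq_zero (hS θ hθ h0) (by simp))

theorem Polynomial.coeff_zero_prod_X_sub_C {R : Type*} [CommRing R] (S : Finset R) :
    (∏ θ ∈ S, (X - C θ)).coeff 0 = (-1) ^ S.card * ∏ θ ∈ S, θ := by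
  rw [coeff_zero_eq_eval_zero, eval_prod, ← Finset.prod_neg]
  simp

theorem Polynomial.prod_X_sub_C_erase_zero_mem_lifts {R K : Type*} [Semiring R] [CommRing K]
    [DecidableEq K] {f : R →+* K} {T : Finset K} (h : ∏ θ ∈ T, (X - C θ) ∈ lifts f) :
    ∏ θ ∈ T.erase 0, (X - C θ) ∈ lifts f := by
  by_cases h0 : (0 : K) ∈ T
  · rw [← Finset.mul_prod_erase T _ h0, C_0, sub_zero, lifts_iff_coeff_lifts] at h
    rw [lifts_iff_coeff_lifts]
    intro i
    simpa only [coeff_X_mul] using h (i + 1)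
  · rwa [Finset.erase_eq_of_notMem h0]

theorem exists_nsmul_mem_of_isOfFinAddOrder {G : Type*} [AddCommGroup G] {H : AddSubgroup G}
    {x : G} (hx : IsOfFinAddOrder (x : G ⧸ H)) : ∃ k : ℕ, 0 < k ∧ k • x ∈ H := by
  obtain ⟨k, hk, hkx⟩ := isOfFinAddOrder_iff_nsmul_eq_zero.1 hx
  exact ⟨k, hk, (QuotientAddGroup.eq_zero_iff _).1 (by rwa [QuotientAddGroup.mk_nsmul])⟩

namespace Matrix

theorem linearIndependent_map_algebraMap {ι m n K L : Type*} [Finite m] [Finite n] [Field K]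
    [Field L] [Algebra K L] {v : ι → Matrix m n K} (hv : LinearIndependent K v) :
    LinearIndependent L fun i => (v i).map (algebraMap K L) := by
  have hflat : LinearIndependent K fun i => Function.uncurry (v i) :=
    hv.map' (LinearEquiv.curry K K m n).symm.toLinearMap (LinearEquiv.ker _)
  have hflatL : LinearIndependent L fun i => algebraMap K L ∘ Function.uncurry (v i) :=
    linearIndependent_algebraMap_comp_iff.2 hflat
  exact hflatL.map' (LinearEquiv.curry L L m n).toLinearMap (LinearEquiv.ker _)

variable {n : Type*} [Fintype n] [DecidableEq n]

theorem map_aeval {R S : Type*} [CommRing R] [CommRing S] [Algebra R S]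
    (M : Matrix n n R) (p : R[X]) :
    (aeval M p).map (algebraMap R S) = aeval (M.map (algebraMap R S)) (p.map (algebraMap R S)) := by
  rw [Polynomial.aeval_map_algebraMap]
  exact (aeval_algHom_apply (Algebra.ofId R S).mapMatrix M p).symm

theorem minpoly_map_algebraMap {K L : Type*} [Field K] [Field L] [Algebra K L]
    (M : Matrix n n K) :
    minpoly L (M.map (algebraMap K L)) = (minpoly K M).map (algebraMap K L) := by
  have hint : IsIntegral K M := .of_finite K M
  refine minpoly.eq_of_linearIndependent L _ ((minpoly.monic hint).map _)
    (by rw [← map_aeval, minpoly.aeval, Matrix.map_zero _ (map_zero _)])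
    _ (by rw [degree_map, degree_eq_natDegree (minpoly.ne_zero hint)]) ?_
  simpa only [← Matrix.map_pow] using linearIndependent_map_algebraMap (linearIndependent_pow M)

theorem exists_map_intCast_eq_minpoly (K : Type*) [Field K] [CharZero K] (M : Matrix n n ℤ) :
    ∃ G : ℤ[X], G.map (Int.castRingHom K) = minpoly K (M.map (Int.castRingHom K)) := by
  set Mq : Matrix n n ℚ := M.map (Int.castRingHom ℚ)
  have hdvd : minpoly ℚ Mq ∣ M.charpoly.map (algebraMap ℤ ℚ) :=
    charpoly_map M (Int.castRingHom ℚ) ▸ minpoly_dvd_charpoly Mq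
  obtain ⟨G, hG⟩ := IsIntegrallyClosed.eq_map_mul_C_of_dvd ℚ M.charpoly_monic hdvd
  rw [(minpoly.monic (.of_finite ℚ Mq)).leadingCoeff, C_1, mul_one] at hG
  refine ⟨G, ?_⟩
  have hMK : M.map (Int.castRingHom K) = Mq.map (algebraMap ℚ K) := by
    ext i j
    simp [Mq]
  rw [hMK, minpoly_map_algebraMap, ← hG, Polynomial.map_map]
  congr 1
  exact RingHom.ext_int _ _

theorem mem_spectrum_iff_isRoot_minpoly {K : Type*} [Field K] (A : Matrix n n K) (μ : K) :
    μ ∈ spectrum K A ↔ (minpoly K A).IsRoot μ := by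
  rw [← spectrum_toLin', ← Module.End.hasEigenvalue_iff_mem_spectrum,
    Module.End.hasEigenvalue_iff_isRoot, minpoly_toLin']

theorem IsHermitian.minpoly_eq_prod_roots {A : Matrix n n ℝ} (hA : A.IsHermitian) :
    minpoly ℝ A = ∏ θ ∈ (minpoly ℝ A).roots.toFinset, (X - C θ) := by
  have hmonic : (minpoly ℝ A).Monic := minpoly.monic (.of_finite ℝ A)
  refine eq_of_monic_of_associated hmonic (monic_prod_of_monic _ _ fun θ _ => monic_X_sub_C θ)
    (associated_of_dvd_dvd (minpoly.dvd ℝ A ?_) ?_)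
  · refine aeval_eq_zero_of_forall_mem_spectrum (p := IsSelfAdjoint) hA fun θ hθ => ?_
    rw [eval_prod]
    refine Finset.prod_eq_zero (i := θ) ?_ (by simp)
    rw [Multiset.mem_toFinset, mem_roots hmonic.ne_zero]
    exact (mem_spectrum_iff_isRoot_minpoly A θ).1 hθ
  · rw [Finset.prod_eq_multiset_prod]
    exact (Multiset.prod_dvd_prod_of_le (Multiset.map_le_map (Multiset.dedup_le _))).trans
      (prod_multiset_X_sub_C_dvd _)

theorem aeval_eq_zero_of_map {R S : Type*} [CommRing R] [CommRing S] [Algebra R S]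
    (hRS : Function.Injective (algebraMap R S)) {M : Matrix n n R} {p : R[X]}
    (h : aeval (M.map (algebraMap R S)) (p.map (algebraMap R S)) = 0) : aeval M p = 0 :=
  map_injective hRS <| (map_aeval M p).trans (h.trans (Matrix.map_zero _ (map_zero _)).symm)

theorem exists_map_intCast_eq_prod_nonzero_spectrum (M : Matrix n n ℤ)
    (hA : (M.map (Int.castRingHom ℝ)).IsHermitian) {S : Finset ℝ}
    (hS : ∀ θ, θ ∈ S ↔ θ ≠ 0 ∧ θ ∈ spectrum ℝ (M.map (Int.castRingHom ℝ))) :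
    ∃ H : ℤ[X], H.map (Int.castRingHom ℝ) = ∏ θ ∈ S, (X - C θ) := by
  classical
  obtain ⟨G, hG⟩ := exists_map_intCast_eq_minpoly ℝ M
  have hT : ∏ θ ∈ (minpoly ℝ (M.map (Int.castRingHom ℝ))).roots.toFinset, (X - C θ) ∈
      lifts (Int.castRingHom ℝ) := by
    rw [← hA.minpoly_eq_prod_roots, ← hG]
    exact (mem_lifts _).2 ⟨G, rfl⟩
  have hST : S = (minpoly ℝ (M.map (Int.castRingHom ℝ))).roots.toFinset.erase 0 := by
    ext θ
    rw [hS, Finset.mem_erase, Multiset.mem_toFinset, mem_roots (minpoly.ne_zero (.of_finite ℝ _)),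
      mem_spectrum_iff_isRoot_minpoly]
  exact (mem_lifts _).1 (hST ▸ prod_X_sub_C_erase_zero_mem_lifts hT)

theorem coeff_zero_smul_mem_range_mulVecLin {R : Type*} [CommRing R] [IsDomain R]
    (M : Matrix n n R) {H : R[X]} (hXH : aeval M (X * H) = 0) {k : R} (hk : k ≠ 0) {x : n → R}
    (hkx : k • x ∈ LinearMap.range M.mulVecLin) :
    H.coeff 0 • x ∈ LinearMap.range M.mulVecLin := by
  obtain ⟨y, hy⟩ := hkx
  rw [mulVecLin_apply] at hy
  rw [map_mul, aeval_X] at hXH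
  have hcomm : aeval M H * M = M * aeval M H := by
    simpa only [aeval_X] using ((Commute.all H X).map (aeval M)).eq
  have hHx : aeval M H *ᵥ x = 0 := by
    refine (smul_eq_zero.1 ?_).resolve_left hk
    rw [← mulVec_smul, ← hy, mulVec_mulVec, hcomm, hXH, zero_mulVec]
  have hsplit : aeval M H = M * aeval M H.divX + H.coeff 0 • 1 := by
    conv_lhs => rw [← divX_mul_X_add H, mul_comm]
    rw [map_add, map_mul, aeval_X, aeval_C, Algebra.algebraMap_eq_smul_one]
  refine ⟨-(aeval M H.divX *ᵥ x), ?_⟩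
  rw [hsplit, add_mulVec, smul_mulVec, one_mulVec, ← mulVec_mulVec] at hHx
  rw [mulVecLin_apply, mulVec_neg, neg_eq_iff_add_eq_zero, hHx]

end Matrix

open Matrix

theorem mem_rowSpan_iff_of_isSymm {V : Type*} [Fintype V] {M : Matrix V V ℤ} (hM : M.IsSymm)
    (x : V → ℤ) : x ∈ rowSpan M ↔ x ∈ LinearMap.range M.mulVecLin := by
  have hcol : M.col = fun w => M w := funext₂ fun i j => hM.apply i j
  rw [range_mulVecLin, hcol]
  rfl

theorem stmt12_general (n : ℕ) (M : Matrix (Fin n) (Fin n) ℤ)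
    (hsymm : M.IsSymm)
    (S : Finset ℝ)
    (hS : ∀ θ : ℝ, θ ∈ S ↔ θ ≠ 0 ∧
      Module.End.HasEigenvalue
        (Matrix.toLin' (M.map (Int.cast : ℤ → ℝ))) θ)
    (P : ℤ) (hP : (P : ℝ) = ∏ θ ∈ S, θ)
    (x : Fin n → ℤ)
    (hx : IsOfFinAddOrder ((QuotientAddGroup.mk x) : (Fin n → ℤ) ⧸ rowSpan M)) :
    P • x ∈ rowSpan M := by
  simp_rw [Module.End.hasEigenvalue_iff_mem_spectrum, spectrum_toLin'] at hS
  have hA : (M.map (Int.castRingHom ℝ)).IsHermitian := by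
    ext i j
    exact congrArg Int.cast (hsymm.apply i j)
  obtain ⟨H, hH⟩ := exists_map_intCast_eq_prod_nonzero_spectrum M hA hS
  have hXH : aeval M (X * H) = 0 := by
    refine aeval_eq_zero_of_map (S := ℝ) (RingHom.injective_int _) ?_
    rw [Polynomial.map_mul, map_X, algebraMap_int_eq, hH]
    exact aeval_X_mul_prod_X_sub_C_eq_zero (p := IsSelfAdjoint) hA fun θ hθ h0 => (hS θ).2 ⟨h0, hθ⟩
  have hH0 : H.coeff 0 = (-1) ^ S.card * P := by
    have : ((H.coeff 0 : ℤ) : ℝ) = (-1) ^ S.card * P := by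
      rw [hP, ← coeff_zero_prod_X_sub_C, ← hH, coeff_map, eq_intCast]
    exact_mod_cast this
  obtain ⟨k, hk, hkx⟩ := exists_nsmul_mem_of_isOfFinAddOrder hx
  rw [mem_rowSpan_iff_of_isSymm hsymm, ← natCast_zsmul] at hkx
  have hcoeff := coeff_zero_smul_mem_range_mulVecLin M hXH (Int.natCast_ne_zero.2 hk.ne') hkx
  rw [hH0, mul_smul, Submodule.smul_mem_iff_of_isUnit _ (isUnit_neg_one.pow _)] at hcoeff
  rwa [mem_rowSpan_iff_of_isSymm hsymm]

theorem stmt12 (n : ℕ) (M : Matrix (Fin n) (Fin n) ℤ) (hM0 : M ≠ 0)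
    (hsymm : M.IsSymm)
    (S : Finset ℝ)
    (hS : ∀ θ : ℝ, θ ∈ S ↔ θ ≠ 0 ∧
      Module.End.HasEigenvalue
        (Matrix.toLin' (M.map (Int.cast : ℤ → ℝ))) θ)
    (P : ℤ) (hP : (P : ℝ) = ∏ θ ∈ S, θ)
    (x : Fin n → ℤ)
    (hx : IsOfFinAddOrder ((QuotientAddGroup.mk x) : (Fin n → ℤ) ⧸ rowSpan M)) :
    P • x ∈ rowSpan M :=
  stmt12_general n M hsymm S hS P hP x hx
end

section
/- Let G be a connected (n,k,λ,μ)-strongly regular graph that is not complete (there exist two distinct non-adjacent vertices), and let L be its Laplacian matrix regarded as a real symmetric matrix. Then there exist real numbers θ₁, θ₂ with θ₁ ≠ θ₂, θ₁ ≠ 0, θ₂ ≠ 0, θ₁·θ₂ = n·μ, and the set of eigenvalues of L is exactly {0, θ₁, θ₂}. -/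
/-!
Write `L = k • 1 - A` for the Laplacian. The strongly regular identity `A² = k + λA + μ(J - 1 - A)`
turns into `L² - (2k - λ + μ) L + q = μ J` with `q = k² - λk + μk - k + μ`. Evaluating it on the
all-ones vector, which `L` kills, gives `q = nμ`. An eigenvector of `L` for a nonzero eigenvalue is
orthogonal to the all-ones vector, hence killed by `J`, so every nonzero eigenvalue is a root of
`x² - (2k - λ + μ) x + nμ`. Connectivity makes `0` a simple eigenvalue, and if the remaining
`n - 1` eigenvalues were all equal, comparing `tr L = nk` with `tr L² = n(k² + k)` would force
`n = k + 1`, i.e. a complete graph. So both roots occur, and their product is `nμ`.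
-/

open Finset

open Matrix

theorem Finset.sum_pow_eq_card_filter_ne_zero_mul {ι R : Type*} [Fintype ι] [CommSemiring R]
    [NoZeroDivisors R] [DecidableEq R] {f : ι → R} {θ : R} (h : ∀ i, f i ≠ 0 → f i = θ) {m : ℕ}
    (hm : m ≠ 0) : ∑ i, f i ^ m = #{i | f i ≠ 0} * θ ^ m := by
  rw [← sum_filter_of_ne (p := fun i => f i ≠ 0) fun i _ hi => by simpa [hm] using hi,
    sum_congr rfl fun i hi => by rw [h i (mem_filter.mp hi).2], sum_const, nsmul_eq_mul]

theorem quadratic_roots_of_ne {R : Type*} [CommRing R] [IsDomain R] {b c x y : R} (hxy : x ≠ y)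
    (hx : x ^ 2 - b * x + c = 0) (hy : y ^ 2 - b * y + c = 0) :
    x * y = c ∧ ∀ z, z ^ 2 - b * z + c = 0 → z = x ∨ z = y := by
  have hsum : x + y = b := by
    have : (x - y) * (x + y - b) = 0 := by linear_combination hx - hy
    simpa [sub_eq_zero, hxy] using this
  refine ⟨by linear_combination x * hsum - hx, fun z hz => ?_⟩
  have : (z - x) * (z - y) = 0 := by linear_combination hz - z * hsum + x * hsum - hx
  simpa [sub_eq_zero] using this

theorem Matrix.IsSymm.dotProduct_eq_zero_of_mulVec_eq_smul {n R : Type*} [Fintype n]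
    [CommRing R] [NoZeroDivisors R] {A : Matrix n n R} (hA : A.IsSymm) {v w : n → R} {θ : R}
    (hw : A *ᵥ w = 0) (hv : A *ᵥ v = θ • v) (hθ : θ ≠ 0) : w ⬝ᵥ v = 0 := by
  have : θ * (w ⬝ᵥ v) = 0 := by
    rw [← smul_eq_mul, ← dotProduct_smul, ← hv, dotProduct_mulVec, ← mulVec_transpose, hA.eq, hw,
      zero_dotProduct]
  exact (mul_eq_zero.mp this).resolve_left hθ

namespace Matrix.IsHermitian

variable {n 𝕜 : Type*} [Fintype n] [DecidableEq n] [RCLike 𝕜] {A : Matrix n n 𝕜}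

theorem trace_sq (hA : A.IsHermitian) : (A ^ 2).trace = ∑ i, (hA.eigenvalues i : 𝕜) ^ 2 := by
  rw [← cfc_pow_id (R := ℝ) A 2 hA.isSelfAdjoint, hA.cfc_eq, IsHermitian.cfc,
    Unitary.conjStarAlgAut_apply, trace_mul_cycle, Unitary.coe_star_mul_self, one_mul,
    trace_diagonal]
  simp

theorem card_eigenvalues_eq_zero (hA : A.IsHermitian) :
    Fintype.card {i // hA.eigenvalues i = 0} = Module.finrank 𝕜 (LinearMap.ker (toLin' A)) := by
  have hrank : Module.finrank 𝕜 (LinearMap.range (toLin' A)) = _ := hA.rank_eq_card_non_zero_eigs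
  have hsplit : Fintype.card {i // hA.eigenvalues i ≠ 0} = _ :=
    Fintype.card_subtype_compl (fun i => hA.eigenvalues i = 0)
  have hsum := LinearMap.finrank_range_add_finrank_ker (toLin' A)
  rw [Module.finrank_fintype_fun_eq_card] at hsum
  have hle := Fintype.card_subtype_le (fun i => hA.eigenvalues i = 0)
  omega

end Matrix.IsHermitian

namespace SimpleGraph

variable {V : Type*} [Fintype V] [DecidableEq V] {G : SimpleGraph V} [DecidableRel G.Adj]

theorem degree_add_two_le_card {x y : V} (hxy : x ≠ y) (hnadj : ¬G.Adj x y) :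
    G.degree x + 2 ≤ Fintype.card V := by
  have := card_le_univ (insert x (insert y (G.neighborFinset x)))
  rwa [card_insert_of_notMem (by simp [hxy]), card_insert_of_notMem (by simpa using hnadj),
    card_neighborFinset_eq_degree] at this

theorem Connected.card_lapMatrix_eigenvalues_eq_zero (hconn : G.Connected)
    (hL : (G.lapMatrix ℝ).IsHermitian) : #{i | hL.eigenvalues i = 0} = 1 := by
  have := hconn.preconnected.subsingleton_connectedComponent
  have := hconn.nonempty
  rw [← Fintype.card_subtype, hL.card_eigenvalues_eq_zero,
    ← card_connectedComponent_eq_finrank_ker_toLin'_lapMatrix]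
  exact le_antisymm (Fintype.card_le_one_iff_subsingleton.mpr ‹_›) Fintype.card_pos

namespace IsRegularOfDegree

variable {k : ℕ}

theorem lapMatrix_eq_s13 {R : Type*} [CommRing R] (h : G.IsRegularOfDegree k) :
    G.lapMatrix R = (k : R) • 1 - G.adjMatrix R := by
  ext i j
  by_cases hij : i = j <;> simp [lapMatrix, degMatrix, hij, h.degree_eq, one_apply]

theorem trace_lapMatrix {R : Type*} [CommRing R] (h : G.IsRegularOfDegree k) :
    (G.lapMatrix R).trace = Fintype.card V * k := by
  simp [h.lapMatrix_eq_s13, mul_comm]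

theorem trace_lapMatrix_sq {R : Type*} [CommRing R] (h : G.IsRegularOfDegree k) :
    ((G.lapMatrix R) ^ 2).trace = Fintype.card V * (k ^ 2 + k) := by
  have hA : (G.adjMatrix R ^ 2).trace = Fintype.card V * k := by
    simp only [trace, sq, diag_apply, adjMatrix_mul_self_apply_self, h.degree_eq, sum_const,
      card_univ, nsmul_eq_mul]
  have hexpand : G.lapMatrix R ^ 2
      = (k : R) ^ 2 • 1 - (2 * k : R) • G.adjMatrix R + G.adjMatrix R ^ 2 := by
    rw [h.lapMatrix_eq_s13, sq (_ - _), sq (G.adjMatrix R), sub_mul, mul_sub, mul_sub]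
    simp only [smul_mul_assoc, mul_smul_comm, one_mul, mul_one]
    module
  rw [hexpand, trace_add, trace_sub, trace_smul, trace_smul, trace_one, trace_adjMatrix, hA]
  simp only [smul_eq_mul, mul_zero, sub_zero]
  ring

theorem exists_lapMatrix_eigenvalues_ne (h : G.IsRegularOfDegree k) (hconn : G.Connected)
    {x y : V} (hxy : x ≠ y) (hnadj : ¬G.Adj x y) (hL : (G.lapMatrix ℝ).IsHermitian) :
    ∃ i j, hL.eigenvalues i ≠ 0 ∧ hL.eigenvalues j ≠ 0 ∧ hL.eigenvalues i ≠ hL.eigenvalues j := by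
  set E := hL.eigenvalues
  set m := #{i | E i ≠ 0}
  have hcard : Fintype.card V = m + 1 := by
    rw [← hconn.card_lapMatrix_eigenvalues_eq_zero hL, add_comm]
    exact (card_filter_add_card_filter_not _).symm
  have : Nontrivial V := ⟨x, y, hxy⟩
  have hk : 0 < k := h.degree_eq x ▸ hconn.preconnected.degree_pos_of_nontrivial x
  have hkm : k + 2 ≤ m + 1 := hcard ▸ h.degree_eq x ▸ degree_add_two_le_card hxy hnadj
  obtain ⟨i₀, hi₀⟩ : ∃ i, E i ≠ 0 := by
    obtain ⟨i, hi⟩ := card_pos.mp (by omega : 0 < m)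
    exact ⟨i, (mem_filter.mp hi).2⟩
  by_contra! hall
  have hconst : ∀ i, E i ≠ 0 → E i = E i₀ := fun i hi => hall i i₀ hi hi₀
  have h1 : (m : ℝ) * E i₀ = (m + 1) * k := by
    have := sum_pow_eq_card_filter_ne_zero_mul hconst one_ne_zero
    rw [← Nat.cast_add_one, ← hcard, ← h.trace_lapMatrix, hL.trace_eq_sum_eigenvalues]
    simpa using this.symm
  have h2 : (m : ℝ) * E i₀ ^ 2 = (m + 1) * (k ^ 2 + k) := by
    have := sum_pow_eq_card_filter_ne_zero_mul hconst two_ne_zero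
    rw [← Nat.cast_add_one, ← hcard, ← h.trace_lapMatrix_sq, hL.trace_sq]
    simpa using this.symm
  -- `(m θ)² = m · (m θ²)`, the equality case of Cauchy–Schwarz for the `m` equal eigenvalues
  have : ((m : ℝ) + 1) * k * (m - k) = 0 := by
    linear_combination -(m : ℝ) * h2 + (m * E i₀ + (m + 1) * k) * h1
  have : (m : ℝ) = k := by
    rcases mul_eq_zero.mp this with h0 | h0
    · exact absurd h0 (by positivity)
    · linarith
  have : m = k := by exact_mod_cast this
  omega

end IsRegularOfDegree

namespace IsSRGWith

variable {n k l μ : ℕ}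

theorem lapMatrix_sq {R : Type*} [CommRing R] (h : G.IsSRGWith n k l μ) :
    G.lapMatrix R ^ 2 = (2 * k - l + μ : R) • G.lapMatrix R
      - (k ^ 2 - l * k + μ * k - k + μ : R) • 1 + (μ : R) • of 1 := by
  have hA : G.adjMatrix R * G.adjMatrix R
      = (k : R) • 1 + (l : R) • G.adjMatrix R + (μ : R) • Gᶜ.adjMatrix R := by
    simpa only [sq, Nat.cast_smul_eq_nsmul] using h.matrix_eq (α := R)
  have hC : Gᶜ.adjMatrix R = of 1 - 1 - G.adjMatrix R := by
    rw [← adjMatrix_completeGraph_eq_of_one_sub_one,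
      ← IsCompl.adjMatrix_add_adjMatrix_eq_adjMatrix_completeGraph R (isCompl_compl (x := G))]
    abel
  rw [h.regular.lapMatrix_eq_s13, sq, sub_mul, mul_sub, mul_sub]
  simp only [smul_mul_assoc, mul_smul_comm, one_mul, mul_one, hA, hC]
  module

theorem cast_param_eq {R : Type*} [CommRing R] (h : G.IsSRGWith n k l μ) [Nonempty V] :
    (n * μ : R) = k ^ 2 - l * k + μ * k - k + μ := by
  have hJ : (of 1 : Matrix V V R) *ᵥ (fun _ => 1) = fun _ => (n : R) := by
    ext; simp [mulVec, dotProduct, ← h.card]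
  have happly := congrArg (· *ᵥ fun _ => (1 : R)) h.lapMatrix_sq
  simp only [sq, ← mulVec_mulVec, lapMatrix_mulVec_const_eq_zero, mulVec_zero, add_mulVec,
    sub_mulVec, smul_mulVec, one_mulVec, hJ, smul_zero, zero_sub] at happly
  have hentry := congrFun happly (Classical.arbitrary V)
  simp only [Pi.zero_apply, Pi.add_apply, Pi.neg_apply, Pi.smul_apply, smul_eq_mul,
    mul_one] at hentry
  linear_combination -hentry

theorem lapMatrix_eigenvalue_quadratic (h : G.IsSRGWith n k l μ)
    (hL : (G.lapMatrix ℝ).IsHermitian) {i : V} (hi : hL.eigenvalues i ≠ 0) :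
    hL.eigenvalues i ^ 2 - (2 * k - l + μ) * hL.eigenvalues i + n * μ = 0 := by
  have : Nonempty V := ⟨i⟩
  set θ := hL.eigenvalues i
  set v : V → ℝ := ⇑(hL.eigenvectorBasis i)
  have hv : G.lapMatrix ℝ *ᵥ v = θ • v := hL.mulVec_eigenvectorBasis i
  have hv0 : v ≠ 0 := (WithLp.ofLp_eq_zero 2).ne.2 (hL.eigenvectorBasis.orthonormal.ne_zero i)
  have hJ : (of 1 : Matrix V V ℝ) *ᵥ v = 0 := by
    have := (G.isSymm_lapMatrix (R := ℝ)).dotProduct_eq_zero_of_mulVec_eq_smul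
      (G.lapMatrix_mulVec_const_eq_zero (R := ℝ)) hv hi
    ext; simpa [mulVec, dotProduct] using this
  have happly := congrArg (· *ᵥ v) h.lapMatrix_sq
  simp only [sq, ← mulVec_mulVec, hv, mulVec_smul, add_mulVec, sub_mulVec, smul_mulVec,
    one_mulVec, hJ, smul_zero, add_zero, smul_smul] at happly
  have hcoef : (θ ^ 2 - (2 * k - l + μ) * θ + (k ^ 2 - l * k + μ * k - k + μ)) • v = 0 := by
    linear_combination (norm := module) happly
  rw [h.cast_param_eq]
  exact (smul_eq_zero.mp hcoef).resolve_right hv0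

end IsSRGWith

end SimpleGraph

theorem stmt13 {V : Type*} [Fintype V] [DecidableEq V] (G : SimpleGraph V)
    [DecidableRel G.Adj] {n k l μ : ℕ}
    (hsrg : G.IsSRGWith n k l μ) (hconn : G.Connected)
    (hnotcomplete : ∃ x y : V, x ≠ y ∧ ¬G.Adj x y)
    (hherm : (G.lapMatrix ℝ).IsHermitian) :
    ∃ θ₁ θ₂ : ℝ, θ₁ ≠ θ₂ ∧ θ₁ ≠ 0 ∧ θ₂ ≠ 0 ∧ θ₁ * θ₂ = (n * μ : ℕ) ∧
      Set.range hherm.eigenvalues = {0, θ₁, θ₂} := by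
  obtain ⟨x, y, hxy, hnadj⟩ := hnotcomplete
  set E := hherm.eigenvalues
  have hquad : ∀ i, E i ≠ 0 → E i ^ 2 - (2 * k - l + μ) * E i + n * μ = 0 :=
    fun i hi => hsrg.lapMatrix_eigenvalue_quadratic hherm hi
  obtain ⟨i, j, hi, hj, hij⟩ :=
    hsrg.regular.exists_lapMatrix_eigenvalues_ne hconn hxy hnadj hherm
  obtain ⟨hprod, hroots⟩ := quadratic_roots_of_ne hij (hquad i hi) (hquad j hj)
  obtain ⟨i₀, hi₀⟩ : ∃ i, E i = 0 := by
    obtain ⟨i₀, hi₀⟩ := card_pos.mp (hconn.card_lapMatrix_eigenvalues_eq_zero hherm ▸ one_pos)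
    exact ⟨i₀, (mem_filter.mp hi₀).2⟩
  refine ⟨E i, E j, hij, hi, hj, by exact_mod_cast hprod, ?_⟩
  ext t
  simp only [Set.mem_range, Set.mem_insert_iff, Set.mem_singleton_iff]
  constructor
  · rintro ⟨m, rfl⟩
    by_cases hm : E m = 0
    · exact Or.inl hm
    · exact Or.inr (hroots _ (hquad m hm))
  · rintro (rfl | rfl | rfl)
    exacts [⟨i₀, hi₀⟩, ⟨i, rfl⟩, ⟨j, rfl⟩]
end

section
/- Let G be a connected (n,k,λ,μ)-strongly regular graph with k·(k − λ − 1) ≠ 0, and suppose there exist adjacent vertices u, v such that every vertex w is equal to u or v or adjacent to at least one of u, v. Then G is a complete multipartite graph with parts of equal size: non-adjacency together with equality is an equivalence relation on the vertices (i.e., for pairwise distinct x, y, z, if x is non-adjacent to y and y is non-adjacent to z then x is non-adjacent to z), and there exists m such that for every vertex v the set {w | w = v or w is non-adjacent to v} has exactly m elements. -/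
/-!
The dominating edge `uv` gives `n = |N(u) ∪ N(v)| = 2k - λ`, so `n - k - 1 = k - λ - 1`, and the
parameter identity `k (k - λ - 1) = (n - k - 1) μ` forces `μ = k`. Then two distinct non-adjacent
vertices share all `k` neighbours, i.e. have equal neighbourhoods, which makes non-adjacency
transitive; every class `{x} ∪ (V \ N(x))` has `n - k` elements by regularity.
-/

open Finset

namespace SimpleGraph

variable {V : Type*} [Fintype V] {G : SimpleGraph V} [DecidableRel G.Adj]

theorem neighborFinset_union_eq_univ_of_dominating [DecidableEq V] {u v : V} (huv : G.Adj u v)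
    (hdom : ∀ w, w = u ∨ w = v ∨ G.Adj u w ∨ G.Adj v w) :
    G.neighborFinset u ∪ G.neighborFinset v = univ := by
  ext w
  simp only [mem_union, mem_neighborFinset, mem_univ, iff_true]
  rcases hdom w with rfl | rfl | h | h
  · exact Or.inr huv.symm
  · exact Or.inl huv
  · exact Or.inl h
  · exact Or.inr h

theorem IsRegularOfDegree.card_filter_eq_or_not_adj [DecidableEq V] {k : ℕ}
    (h : G.IsRegularOfDegree k) (x : V) :
    #{w | w = x ∨ ¬G.Adj x w} = Fintype.card V - k := by
  have hcompl : ({w | w = x ∨ ¬G.Adj x w} : Finset V) = (G.neighborFinset x)ᶜ := by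
    ext w
    simp only [mem_filter, mem_univ, true_and, mem_compl, mem_neighborFinset]
    exact ⟨by rintro (rfl | h); exacts [G.irrefl, h], Or.inr⟩
  rw [hcompl, card_compl, card_neighborFinset_eq_degree, h x]

namespace IsSRGWith

variable {n k l μ : ℕ}

theorem lt_of_adj (h : G.IsSRGWith n k l μ) {u v : V} (huv : G.Adj u v) : l < k := by
  simpa only [h.of_adj u v huv, h.regular u] using huv.card_commonNeighbors_lt_degree

theorem card_add_eq_of_dominating_edge (h : G.IsSRGWith n k l μ) {u v : V} (huv : G.Adj u v)
    (hdom : ∀ w, w = u ∨ w = v ∨ G.Adj u w ∨ G.Adj v w) :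
    n + l = 2 * k := by
  classical
  have hunion := h.card_neighborFinset_union_of_adj huv
  rw [neighborFinset_union_eq_univ_of_dominating huv hdom, card_univ, h.card] at hunion
  have := h.lt_of_adj huv
  omega

theorem mu_eq_of_card_add_eq (h : G.IsSRGWith n k l μ) (hn : n + l = 2 * k) (hlk : l + 1 < k) :
    μ = k := by
  have hparam := h.param_eq G (by omega)
  rw [show n - k - 1 = k - l - 1 by omega, mul_comm] at hparam
  exact (Nat.eq_of_mul_eq_mul_left (by omega) hparam).symm

theorem neighborFinset_subset_of_not_adj [DecidableEq V] (h : G.IsSRGWith n k l k) {x y : V}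
    (hne : x ≠ y) (hna : ¬G.Adj x y) : G.neighborFinset x ⊆ G.neighborFinset y := by
  have hcommon : #(G.neighborFinset x ∩ G.neighborFinset y) = #(G.neighborFinset x) := by
    rw [card_neighborFinset_eq_degree, h.regular x, ← h.of_not_adj hne hna, ← Set.toFinset_card]
    congr 1
    ext z
    simp [mem_commonNeighbors]
  exact inter_eq_left.mp (eq_of_subset_of_card_le inter_subset_left hcommon.ge)

theorem isCompleteMultipartite (h : G.IsSRGWith n k l k) : G.IsCompleteMultipartite where
  trans x y z hxy hyz hxz := by
    classical
    by_cases hne : x = y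
    · subst hne; exact hyz hxz
    · exact hyz <| (mem_neighborFinset _ _ _).mp <|
        h.neighborFinset_subset_of_not_adj hne hxy ((mem_neighborFinset _ _ _).mpr hxz)

end IsSRGWith

end SimpleGraph

theorem stmt15_general {V : Type*} [Fintype V] [DecidableEq V] (G : SimpleGraph V)
    [DecidableRel G.Adj] {n k l μ : ℕ}
    (hsrg : G.IsSRGWith n k l μ)
    (hnonzero : (k : ℤ) * ((k : ℤ) - l - 1) ≠ 0)
    (u v : V) (huv : G.Adj u v)
    (hdom : ∀ w : V, w = u ∨ w = v ∨ G.Adj u w ∨ G.Adj v w) :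
    (∀ x y z : V, x ≠ y → y ≠ z → x ≠ z →
        ¬G.Adj x y → ¬G.Adj y z → ¬G.Adj x z) ∧
      ∃ m : ℕ, ∀ x : V,
        (Finset.univ.filter fun w => w = x ∨ ¬G.Adj x w).card = m := by
  have hlk : l + 1 < k := by
    have := hsrg.lt_of_adj huv
    have := right_ne_zero_of_mul hnonzero
    omega
  have hμ := hsrg.mu_eq_of_card_add_eq (hsrg.card_add_eq_of_dominating_edge huv hdom) hlk
  subst hμ
  exact ⟨fun x y z _ _ _ => hsrg.isCompleteMultipartite.trans x y z,
    _, hsrg.regular.card_filter_eq_or_not_adj⟩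

theorem stmt15 {V : Type*} [Fintype V] [DecidableEq V] (G : SimpleGraph V)
    [DecidableRel G.Adj] {n k l μ : ℕ}
    (hsrg : G.IsSRGWith n k l μ) (hconn : G.Connected)
    (hnonzero : (k : ℤ) * ((k : ℤ) - l - 1) ≠ 0)
    (u v : V) (huv : G.Adj u v)
    (hdom : ∀ w : V, w = u ∨ w = v ∨ G.Adj u w ∨ G.Adj v w) :
    (∀ x y z : V, x ≠ y → y ≠ z → x ≠ z →
        ¬G.Adj x y → ¬G.Adj y z → ¬G.Adj x z) ∧
      ∃ m : ℕ, ∀ x : V,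
        (Finset.univ.filter fun w => w = x ∨ ¬G.Adj x w).card = m :=
  stmt15_general G hsrg hnonzero u v huv hdom
end

section
/- Let G be a connected (n,k,λ,μ)-strongly regular graph on vertex set V that is not complete (there exist two distinct non-adjacent vertices), with integer Laplacian L, and let u, v be adjacent vertices. Suppose g : V → ℤ and m is a positive natural number with ∑_w g w · (row w of L) = (m : ℤ) • (e_u − e_v), where e_w is the standard basis vector at w. Then k·n·(g u − g v) = 2·(n − 1)·m, and m does not divide g u − g v (in ℤ). In particular the monodromy self-pairing ⟨[e_u − e_v],[e_u − e_v]⟩ = 2(n−1)/(kn) is non-zero in ℚ/ℤ. -/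
open Finset

theorem stmt16 {V : Type*} [Fintype V] [DecidableEq V] (G : SimpleGraph V)
    [DecidableRel G.Adj] {n k l μ : ℕ}
    (hsrg : G.IsSRGWith n k l μ) (hconn : G.Connected)
    (hnotcomplete : ∃ x y : V, x ≠ y ∧ ¬G.Adj x y)
    (u v : V) (huv : G.Adj u v)
    (g : V → ℤ) (m : ℕ) (hm : 0 < m)
    (hg : ∑ w, g w • (G.lapMatrix ℤ w) =
      ((m : ℤ)) • (Pi.single u 1 - Pi.single v 1)) :
    (k : ℤ) * n * (g u - g v) = 2 * ((n : ℤ) - 1) * m ∧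
      ¬((m : ℤ) ∣ (g u - g v)) := by
  set L : Matrix V V ℤ := G.lapMatrix ℤ with hLdef
  set c : ℤ := (k:ℤ) + k*l - k^2 - k*μ - μ with hcdef
  set s : ℤ := 2*(k:ℤ) + μ - l with hsdef
  have hLA : ∀ a b : V, L a b =
      (k:ℤ) * (if a = b then 1 else 0) - (if G.Adj a b then 1 else 0) := by
    intro a b
    simp only [hLdef, SimpleGraph.lapMatrix, SimpleGraph.degMatrix, Matrix.sub_apply,
      Matrix.diagonal_apply, SimpleGraph.adjMatrix_apply, hsrg.regular a]
    by_cases h : a = b <;> simp [h]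
  -- key identity: L² = c•I + s•L + μ•J entrywise
  have key : ∀ w x : V, ∑ y, L w y * L y x =
      c * (if w = x then 1 else 0) + s * L w x + μ := by
    have hA2 : ∀ w x : V, ∑ y, (if G.Adj w y then (1:ℤ) else 0) * (if G.Adj y x then (1:ℤ) else 0)
        = (k:ℤ) * (if w = x then 1 else 0) + l * (if G.Adj w x then (1:ℤ) else 0)
          + μ * (1 - (if w = x then 1 else 0) - (if G.Adj w x then (1:ℤ) else 0)) := by
      intro w x
      have h := congrFun (congrFun (hsrg.matrix_eq (α := ℤ)) w) x
      rw [pow_two, Matrix.mul_apply] at h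
      simp only [Matrix.add_apply, Matrix.smul_apply, SimpleGraph.adjMatrix_apply,
        SimpleGraph.compl_adj, Matrix.one_apply] at h
      simp only [nsmul_eq_mul] at h
      rw [h]
      by_cases hwx : w = x
      · subst hwx; simp [G.irrefl]
      · by_cases ha : G.Adj w x <;> simp [hwx, ha]
    intro w x
    simp_rw [hLA, sub_mul, mul_sub, Finset.sum_sub_distrib]
    rw [hA2 w x]
    have e1 : ∑ y, (k:ℤ) * (if w = y then 1 else 0) * ((k:ℤ) * (if y = x then 1 else 0)) =
        (k:ℤ)^2 * (if w = x then 1 else 0) := by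
      rw [Finset.sum_eq_single w]
      · by_cases h : w = x <;> simp [h] <;> ring
      · intro b _ hb; simp [Ne.symm hb]
      · simp
    have e2 : ∑ y, (k:ℤ) * (if w = y then 1 else 0) * (if G.Adj y x then (1:ℤ) else 0) =
        (k:ℤ) * (if G.Adj w x then (1:ℤ) else 0) := by
      rw [Finset.sum_eq_single w]
      · simp
      · intro b _ hb; simp [Ne.symm hb]
      · simp
    have e3 : ∑ y, (if G.Adj w y then (1:ℤ) else 0) * ((k:ℤ) * (if y = x then 1 else 0)) =
        (k:ℤ) * (if G.Adj w x then (1:ℤ) else 0) := by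
      rw [Finset.sum_eq_single x]
      · simp [mul_comm]
      · intro b _ hb; simp [hb]
      · simp
    rw [e1, e2, e3]
    ring
  -- row sums of L are zero
  have hzero : ∀ w : V, ∑ x, L w x = 0 := by
    intro w
    have h := congrFun (G.lapMatrix_mulVec_const_eq_zero (R := ℤ)) w
    simpa [Matrix.mulVec, dotProduct] using h
  -- the rows equation, componentwise
  have hrow : ∀ x : V, ∑ w, g w * L w x =
      (m:ℤ) * ((if x = u then 1 else 0) - (if x = v then 1 else 0)) := by
    intro x
    have h := congrFun hg x
    simpa [Finset.sum_apply, Pi.single_apply] using h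
  have hne : u ≠ v := huv.ne
  -- Eq A
  have hA : ∑ w, g w * (L w u - L w v) = 2 * m := by
    simp_rw [mul_sub, Finset.sum_sub_distrib, hrow u, hrow v]
    simp [hne, Ne.symm hne]
    ring
  -- entries
  have hdiag : ∀ a : V, L a a = k := by intro a; rw [hLA]; simp [G.irrefl]
  have hoffuv : L u v = -1 := by rw [hLA]; simp [hne, huv]
  have hoffvu : L v u = -1 := by rw [hLA]; simp [Ne.symm hne, huv.symm]
  have hdelta : ∑ w, g w * ((if w = u then (1:ℤ) else 0) - (if w = v then 1 else 0))
      = g u - g v := by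
    simp_rw [mul_sub, Finset.sum_sub_distrib, mul_ite, mul_one, mul_zero]
    rw [Finset.sum_ite_eq' univ u g, Finset.sum_ite_eq' univ v g]
    simp
  -- Eq B : compute S two ways
  have hB : c * (g u - g v) + s * (2 * m) = 2 * m * ((k:ℤ) + 1) := by
    have hS1 : ∑ x, (L x u - L x v) * (∑ w, g w * L w x) = 2 * m * ((k:ℤ) + 1) := by
      simp_rw [hrow]
      rw [Finset.sum_eq_add_of_mem u v (mem_univ u) (mem_univ v) hne]
      · simp [hne, Ne.symm hne, hdiag, hoffuv, hoffvu]; ring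
      · intro x _ hx
        simp [hx.1, hx.2]
    have hS2 : ∑ x, (L x u - L x v) * (∑ w, g w * L w x)
        = c * (g u - g v) + s * (2 * m) := by
      calc ∑ x, (L x u - L x v) * ∑ w, g w * L w x
          = ∑ x, ∑ w, (g w * (L w x * L x u) - g w * (L w x * L x v)) := by
            refine Finset.sum_congr rfl fun x _ => ?_
            rw [Finset.mul_sum]
            refine Finset.sum_congr rfl fun w _ => ?_
            ring
        _ = ∑ w, ∑ x, (g w * (L w x * L x u) - g w * (L w x * L x v)) := Finset.sum_comm
        _ = ∑ w, (g w * (∑ x, L w x * L x u) - g w * (∑ x, L w x * L x v)) := by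
            refine Finset.sum_congr rfl fun w _ => ?_
            rw [Finset.sum_sub_distrib, Finset.mul_sum, Finset.mul_sum]
        _ = ∑ w, (c * (g w * ((if w = u then 1 else 0) - (if w = v then 1 else 0)))
              + s * (g w * (L w u - L w v))) := by
            refine Finset.sum_congr rfl fun w _ => ?_
            rw [key w u, key w v]
            ring
        _ = c * (g u - g v) + s * (2 * m) := by
            rw [Finset.sum_add_distrib, ← Finset.mul_sum, ← Finset.mul_sum, hdelta, hA]
    rw [← hS2, hS1]
  -- c + μ n = 0
  have hcard : (Fintype.card V : ℤ) = n := by exact_mod_cast congrArg Nat.cast hsrg.card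
  have hcn : c + (μ:ℤ) * n = 0 := by
    have h1 : ∑ x, ∑ y, L u y * L y x = 0 := by
      rw [Finset.sum_comm]
      simp_rw [← Finset.mul_sum, hzero, mul_zero, Finset.sum_const_zero]
    have h2 : ∑ x, ∑ y, L u y * L y x = c + (μ:ℤ) * (Fintype.card V) := by
      simp_rw [key u]
      have e1 : ∑ x : V, (c * if u = x then 1 else 0) = c := by
        simp [mul_ite, mul_one, mul_zero, Finset.sum_ite_eq]
      have e2 : ∑ x : V, s * L u x = 0 := by rw [← Finset.mul_sum, hzero u, mul_zero]
      have e3 : ∑ x : V, (μ:ℤ) = (Fintype.card V : ℤ) * μ := by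
        simp [Finset.card_univ, mul_comm]
      rw [Finset.sum_add_distrib, Finset.sum_add_distrib, e1, e2, e3]
      ring
    rw [h1, hcard] at h2
    linarith
  -- μ ≠ 0
  have hmu0 : μ ≠ 0 := by
    intro h0
    have hwalk : ∀ {a b : V}, G.Walk a b → (a = b ∨ G.Adj a b) := by
      intro a b w
      induction w with
      | nil => exact Or.inl rfl
      | @cons a' z b' hadj' p ih =>
        rcases ih with rfl | hzb
        · exact Or.inr hadj'
        · by_cases hab : a' = b'
          · exact Or.inl hab
          · by_cases hadj : G.Adj a' b'
            · exact Or.inr hadj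
            · exfalso
              have hcard2 := hsrg.of_not_adj hab hadj
              rw [h0] at hcard2
              have hz : z ∈ G.commonNeighbors a' b' := ⟨hadj', hzb.symm⟩
              haveI : Nonempty (G.commonNeighbors a' b') := ⟨⟨z, hz⟩⟩
              exact Fintype.card_ne_zero hcard2
    obtain ⟨x, y, hxy, hnadj⟩ := hnotcomplete
    rcases (hconn.preconnected x y).elim (fun w => hwalk w) with rfl | hadj
    · exact hxy rfl
    · exact hnadj hadj
  have hmu : (μ:ℤ) ≠ 0 := Int.natCast_ne_zero.mpr hmu0
  -- main equation
  have hmain : (k:ℤ) * n * (g u - g v) = 2 * ((n:ℤ) - 1) * m := by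
    have h5 : (μ:ℤ) * ((k:ℤ) * n * (g u - g v)) = (μ:ℤ) * (2 * ((n:ℤ) - 1) * m) := by
      rw [hcdef] at hcn
      rw [hcdef, hsdef] at hB
      linear_combination (-(k:ℤ)) * hB + ((k:ℤ) * (g u - g v) - 2 * (m:ℤ)) * hcn
    exact mul_left_cancel₀ hmu h5
  -- n ≥ 3
  have h2n : 2 ≤ n := by
    have h1 : 1 < Fintype.card V := Fintype.one_lt_card_iff.mpr ⟨u, v, hne⟩
    rw [hsrg.card] at h1
    omega
  have hn2 : n ≠ 2 := by
    intro h2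
    obtain ⟨x, y, hxy, hnadj⟩ := hnotcomplete
    have huniv : ({u, v} : Finset V) = Finset.univ := by
      apply Finset.eq_univ_of_card
      rw [Finset.card_insert_of_notMem (by simp [hne]), Finset.card_singleton, hsrg.card, h2]
    have hx : x ∈ ({u, v} : Finset V) := huniv ▸ Finset.mem_univ x
    have hy : y ∈ ({u, v} : Finset V) := huniv ▸ Finset.mem_univ y
    simp only [Finset.mem_insert, Finset.mem_singleton] at hx hy
    rcases hx with rfl | rfl <;> rcases hy with rfl | rfl
    · exact hxy rfl
    · exact hnadj huv
    · exact hnadj huv.symm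
    · exact hxy rfl
  have hn3 : 3 ≤ n := by omega
  refine ⟨hmain, ?_⟩
  rintro ⟨q, hq⟩
  have hm' : (m:ℤ) ≠ 0 := Int.natCast_ne_zero.mpr hm.ne'
  have h6 : (k:ℤ) * n * q = 2 * ((n:ℤ) - 1) := by
    apply mul_left_cancel₀ hm'
    rw [hq] at hmain
    linear_combination hmain
  have h7 : (n:ℤ) ∣ 2 * ((n:ℤ) - 1) := ⟨(k:ℤ) * q, by linear_combination -h6⟩
  have h8 : (n:ℤ) ∣ 2 := by
    have h9 := dvd_sub (Dvd.intro_left 2 rfl : (n:ℤ) ∣ 2 * n) h7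
    rwa [show 2 * (n:ℤ) - 2 * ((n:ℤ) - 1) = 2 by ring] at h9
  have h10 : n ∣ 2 := by exact_mod_cast h8
  have := Nat.le_of_dvd (by norm_num) h10
  omega
end

section
/- Let G be a connected (n,k,λ,μ)-strongly regular graph on vertex set V that is not complete, with integer Laplacian L, and let u, v be adjacent vertices. Suppose g : V → ℤ and m is a positive natural number with ∑_w g w · (row w of L) = (m : ℤ) • (e_u − e_v). Let x, y be adjacent vertices with {x,y} ∩ {u,v} = ∅, and suppose at least one of the following holds: (i) x and y have the same adjacency pattern to u and to v (x adjacent to u iff y adjacent to u, and x adjacent to v iff y adjacent to v); (ii) x is adjacent to both u and v while y is adjacent to neither; (iii) y is adjacent to both u and v while x is adjacent to neither. Then g x = g y. In particular the monodromy pairing ⟨[e_u − e_v],[e_x − e_y]⟩ is zero in ℚ/ℤ. -/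
open Finset

lemma crossing' {V : Type*} {G : SimpleGraph V} (S : Set V) :
    ∀ {s t : V}, G.Walk s t → s ∈ S → t ∉ S → ∃ w c, w ∈ S ∧ c ∉ S ∧ G.Adj w c
  | _, _, SimpleGraph.Walk.nil, hs, ht => absurd hs ht
  | _, _, @SimpleGraph.Walk.cons _ _ s b t h p, hs, ht => by
    classical
    by_cases hb : b ∈ S
    · exact crossing' S p hb ht
    · exact ⟨_, _, hs, hb, h⟩

theorem stmt17 {V : Type*} [Fintype V] [DecidableEq V] (G : SimpleGraph V)
    [DecidableRel G.Adj] {n k l μ : ℕ}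
    (hsrg : G.IsSRGWith n k l μ) (hconn : G.Connected)
    (hnotcomplete : ∃ a b : V, a ≠ b ∧ ¬G.Adj a b)
    (u v : V) (huv : G.Adj u v)
    (g : V → ℤ) (m : ℕ) (hm : 0 < m)
    (hg : ∑ w, g w • (G.lapMatrix ℤ w) =
      ((m : ℤ)) • (Pi.single u 1 - Pi.single v 1))
    (x y : V) (hxy : G.Adj x y)
    (hxu : x ≠ u) (hxv : x ≠ v) (hyu : y ≠ u) (hyv : y ≠ v)
    (hcase :
      ((G.Adj x u ↔ G.Adj y u) ∧ (G.Adj x v ↔ G.Adj y v)) ∨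
      (G.Adj x u ∧ G.Adj x v ∧ ¬G.Adj y u ∧ ¬G.Adj y v) ∨
      (G.Adj y u ∧ G.Adj y v ∧ ¬G.Adj x u ∧ ¬G.Adj x v)) :
    g x = g y := by
  classical
  -- basic parameter inequalities
  have hlk : (l:ℤ) + 1 ≤ k := by
    have h1 : Fintype.card (G.commonNeighbors u v) = l := hsrg.of_adj u v huv
    have h2 := huv.card_commonNeighbors_lt_degree
    rw [h1, hsrg.regular u] at h2
    exact_mod_cast h2
  have hμ1 : 1 ≤ (μ:ℤ) := by
    obtain ⟨a, b, hab, hnadj⟩ := hnotcomplete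
    obtain ⟨p⟩ := hconn.preconnected a b
    have hbS : b ∉ {c | c = a ∨ G.Adj a c} := by
      rintro (rfl | h); exact hab rfl; exact hnadj h
    obtain ⟨w, c, hwS, hcS, hwc⟩ := crossing' _ p (Or.inl rfl) hbS
    rcases hwS with rfl | haw
    · exact absurd (Or.inr hwc) hcS
    · simp only [Set.mem_setOf_eq, not_or] at hcS
      have hmc : Fintype.card (G.commonNeighbors a c) = μ :=
        hsrg.of_not_adj (fun h => hcS.1 h.symm) hcS.2
      have : 0 < Fintype.card (G.commonNeighbors a c) :=
        Fintype.card_pos_iff.mpr ⟨⟨w, (G.mem_commonNeighbors).mpr ⟨haw, hwc.symm⟩⟩⟩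
      omega
  -- entry formulas
  have hLentry : ∀ w z : V, G.lapMatrix ℤ w z
      = (if w = z then (k:ℤ) else 0) - G.adjMatrix ℤ w z := by
    intro w z
    simp only [SimpleGraph.lapMatrix, Matrix.sub_apply, SimpleGraph.degMatrix,
      Matrix.diagonal_apply, hsrg.regular w]
  have eq1 : ∀ z, ∑ w, g w * G.lapMatrix ℤ w z
      = (m:ℤ) * ((if z = u then 1 else 0) - (if z = v then 1 else 0)) := by
    intro z
    have := congrFun hg z
    simpa [Finset.sum_apply, Pi.single_apply] using this
  have hAsum : ∀ z, ∑ w, g w * G.adjMatrix ℤ w z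
      = k * g z - (m:ℤ) * ((if z = u then 1 else 0) - (if z = v then 1 else 0)) := by
    intro z
    have h := eq1 z
    simp only [hLentry, mul_sub, Finset.sum_sub_distrib] at h
    have h2 : ∑ w, g w * (if w = z then (k:ℤ) else 0) = k * g z := by
      simp [mul_ite, Finset.sum_ite_eq, mul_comm]
    rw [h2] at h
    linarith
  have hC : ∀ w z : V, Gᶜ.adjMatrix ℤ w z
      = 1 - (if w = z then 1 else 0) - G.adjMatrix ℤ w z := by
    intro w z
    by_cases h1 : w = z
    · subst h1; simp
    · by_cases h2 : G.Adj w z <;> simp [h1, h2]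
  have hA2 : ∀ w z : V, ∑ t, G.adjMatrix ℤ w t * G.adjMatrix ℤ t z
      = k * (if w = z then 1 else 0) + l * G.adjMatrix ℤ w z + μ * Gᶜ.adjMatrix ℤ w z := by
    intro w z
    have := congrFun (congrFun (hsrg.matrix_eq (α := ℤ)) w) z
    rw [pow_two] at this
    simp only [Matrix.add_apply, Matrix.smul_apply, Matrix.one_apply, Matrix.mul_apply] at this
    simp only [nsmul_eq_mul] at this
    exact this
  -- L² entries
  have hLL : ∀ w z : V, ∑ t, G.lapMatrix ℤ w t * G.lapMatrix ℤ t z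
      = ((k:ℤ)^2 + k) * (if w = z then 1 else 0) + ((l:ℤ) - 2*k) * G.adjMatrix ℤ w z
        + μ * (1 - (if w = z then 1 else 0) - G.adjMatrix ℤ w z) := by
    intro w z
    have s1 : ∑ t, (if w = t then (k:ℤ) else 0) * (if t = z then (k:ℤ) else 0)
        = (if w = z then (k:ℤ)*k else 0) := by
      simp only [ite_mul, zero_mul, Finset.sum_ite_eq, Finset.mem_univ, if_true]
      rw [mul_ite, mul_zero]
    have s2 : ∑ t, (if w = t then (k:ℤ) else 0) * G.adjMatrix ℤ t z
        = k * G.adjMatrix ℤ w z := by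
      simp only [ite_mul, zero_mul, Finset.sum_ite_eq, Finset.mem_univ, if_true]
    have s3 : ∑ t, G.adjMatrix ℤ w t * (if t = z then (k:ℤ) else 0)
        = G.adjMatrix ℤ w z * k := by
      simp only [mul_ite, mul_zero, Finset.sum_ite_eq', Finset.mem_univ, if_true]
    calc ∑ t, G.lapMatrix ℤ w t * G.lapMatrix ℤ t z
        = ∑ t, ((if w = t then (k:ℤ) else 0) - G.adjMatrix ℤ w t)
            * ((if t = z then (k:ℤ) else 0) - G.adjMatrix ℤ t z) := by
          simp only [hLentry]
      _ = _ := by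
          simp only [sub_mul, mul_sub, Finset.sum_sub_distrib, s1, s2, s3, hA2, hC]
          by_cases hwz : w = z
          · simp [hwz] <;> ring
          · by_cases ha : G.Adj w z <;> simp [hwz, ha] <;> ring
  -- the key identity for z ∉ {u,v}
  have hkey : ∀ z : V, z ≠ u → z ≠ v →
      (m:ℤ) * (G.lapMatrix ℤ u z - G.lapMatrix ℤ v z)
      = ((k:ℤ)^2 + k + ((l:ℤ) - 2*k)*k - μ*(1+k)) * g z + μ * (∑ w, g w) := by
    intro z hzu hzv
    have swap : ∑ t, (∑ w, g w * G.lapMatrix ℤ w t) * G.lapMatrix ℤ t z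
        = ∑ w, g w * (∑ t, G.lapMatrix ℤ w t * G.lapMatrix ℤ t z) := by
      simp only [Finset.sum_mul, Finset.mul_sum, mul_assoc]
      exact Finset.sum_comm
    have lhs : ∑ t, (∑ w, g w * G.lapMatrix ℤ w t) * G.lapMatrix ℤ t z
        = (m:ℤ) * (G.lapMatrix ℤ u z - G.lapMatrix ℤ v z) := by
      simp only [eq1, mul_assoc, ← Finset.mul_sum]
      congr 1
      simp [sub_mul, ite_mul, Finset.sum_sub_distrib, Finset.sum_ite_eq']
    have hTz : ∑ w, g w * G.adjMatrix ℤ w z = k * g z := by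
      rw [hAsum z]
      simp [if_neg hzu, if_neg hzv]
    have e0 : ∑ w, g w * (if w = z then (1:ℤ) else 0) = g z := by
      simp [mul_ite, Finset.sum_ite_eq']
    rw [← lhs, swap]
    simp only [hLL]
    have expand : ∀ w, g w * (((k:ℤ)^2 + k) * (if w = z then 1 else 0)
          + ((l:ℤ) - 2*k) * G.adjMatrix ℤ w z
          + μ * (1 - (if w = z then 1 else 0) - G.adjMatrix ℤ w z))
        = ((k:ℤ)^2 + k) * (g w * (if w = z then 1 else 0))
          + ((l:ℤ) - 2*k) * (g w * G.adjMatrix ℤ w z)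
          + μ * (g w - g w * (if w = z then 1 else 0) - g w * G.adjMatrix ℤ w z) := by
      intro w; ring
    rw [Finset.sum_congr rfl (fun w _ => expand w)]
    simp only [Finset.sum_add_distrib, Finset.sum_sub_distrib, ← Finset.mul_sum]
    rw [e0, hTz]
    ring
  -- specialize at x and y and subtract
  have hx := hkey x hxu hxv
  have hy := hkey y hyu hyv
  have hsub : (m:ℤ) * (G.lapMatrix ℤ u x - G.lapMatrix ℤ v x
        - G.lapMatrix ℤ u y + G.lapMatrix ℤ v y)
      = ((k:ℤ)^2 + k + ((l:ℤ) - 2*k)*k - μ*(1+k)) * (g x - g y) := by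
    linarith
  have hLux : G.lapMatrix ℤ u x = - G.adjMatrix ℤ u x := by
    rw [hLentry]; simp [Ne.symm hxu]
  have hLvx : G.lapMatrix ℤ v x = - G.adjMatrix ℤ v x := by
    rw [hLentry]; simp [Ne.symm hxv]
  have hLuy : G.lapMatrix ℤ u y = - G.adjMatrix ℤ u y := by
    rw [hLentry]; simp [Ne.symm hyu]
  have hLvy : G.lapMatrix ℤ v y = - G.adjMatrix ℤ v y := by
    rw [hLentry]; simp [Ne.symm hyv]
  have hzero : G.lapMatrix ℤ u x - G.lapMatrix ℤ v x
      - G.lapMatrix ℤ u y + G.lapMatrix ℤ v y = 0 := by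
    rw [hLux, hLvx, hLuy, hLvy]
    rcases hcase with ⟨h1, h2⟩ | ⟨h1, h2, h3, h4⟩ | ⟨h1, h2, h3, h4⟩
    · have e1 : G.Adj u x ↔ G.Adj u y := by
        rw [G.adj_comm u x, G.adj_comm u y]; exact h1
      have e2 : G.Adj v x ↔ G.Adj v y := by
        rw [G.adj_comm v x, G.adj_comm v y]; exact h2
      simp only [SimpleGraph.adjMatrix_apply]
      rw [if_congr e1 rfl rfl, if_congr e2 rfl rfl]
      ring
    · have h1' : G.Adj u x := h1.symm
      have h2' : G.Adj v x := h2.symm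
      have h3' : ¬G.Adj u y := fun h => h3 h.symm
      have h4' : ¬G.Adj v y := fun h => h4 h.symm
      simp [h1', h2', h3', h4']
    · have h1' : G.Adj u y := h1.symm
      have h2' : G.Adj v y := h2.symm
      have h3' : ¬G.Adj u x := fun h => h3 h.symm
      have h4' : ¬G.Adj v x := fun h => h4 h.symm
      simp [h1', h2', h3', h4']
  rw [hzero, mul_zero] at hsub
  have hαne : ((k:ℤ)^2 + k + ((l:ℤ) - 2*k)*k - μ*(1+k)) ≠ 0 := by
    have hk0 : (0:ℤ) ≤ k := Int.natCast_nonneg k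
    nlinarith
  have := (mul_eq_zero.mp hsub.symm).resolve_left hαne
  linarith
end
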